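/- arXiv:2401.01516 — 11 statements merged into one kernel-verified Lean document; each statement's English description precedes it below -/
import Mathlib

section
/- For two agents with additive utilities over indivisible goods, suppose agent 2 strongly envies agent 1 in the allocation (T1, T2), where T1 = {g : u1(g) ≥ u2(g)}. If T1 can be partitioned into T_A' and T_B' such that agent 2 does not strongly envy agent 1 in the allocation A = (T_A', T_B' ∪ T2), then there exists an EF1 allocation A' with social welfare at least that of A. -/
open Finset

/-- Agent with utility `u` and bundle `Ai` strongly envies the bundle `Aj`:
the envy persists even after removing any single good from `Aj`. -/
def StrongEnvy {G : Type*} [DecidableEq G] (u : G → ℝ) (Ai Aj : Finset G) : Prop :=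
  Aj.Nonempty ∧ ∀ g ∈ Aj, ∑ x ∈ Ai, u x < ∑ x ∈ Aj.erase g, u x

/-- EF1 for two agents: no agent strongly envies the other. -/
def EF1 {G : Type*} [DecidableEq G] (u1 u2 : G → ℝ) (A1 A2 : Finset G) : Prop :=
  ¬ StrongEnvy u1 A1 A2 ∧ ¬ StrongEnvy u2 A2 A1

/-! Among the bundles `Y ⊆ T1` that agent 2 does not strongly envy in `(Y, M \ Y)` (the set `T_A'`
is one), take `X` maximizing the gain `∑_{Y} (u1 - u2)`, ties broken by cardinality. The welfare of
`(Y, M \ Y)` is `u2(M)` plus the gain of `Y`, so `(X, M \ X)` is at least as good as `A`. Agent 1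
cannot strongly envy `M \ X`: `X ≠ T1` because agent 2 strongly envies `T1`, and for `g ∈ T1 \ X`
maximality forces agent 2 to strongly envy `X ∪ {g}`. Combining the two strong-envy inequalities at
`g` shows that `T1 \ X` is a bundle agent 2 does not strongly envy, with strictly larger gain. -/

section

variable {G : Type*} [DecidableEq G]

def gain (u1 u2 : G → ℝ) (A : Finset G) : ℝ := ∑ x ∈ A, (u1 x - u2 x)

lemma Finset.exists_max_image_lex {α β γ : Type*} [LinearOrder β] [LinearOrder γ]
    (s : Finset α) (f : α → β) (g : α → γ) (hs : s.Nonempty) :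
    ∃ x ∈ s, ∀ y ∈ s, f y ≤ f x ∧ (f y = f x → g y ≤ g x) := by
  obtain ⟨x, hx, hmax⟩ := s.exists_max_image (fun y => toLex (f y, g y)) hs
  exact ⟨x, hx, fun y hy => Prod.Lex.toLex_le_toLex'.mp (hmax y hy)⟩

lemma StrongEnvy.sum_lt_sum_sub {u : G → ℝ} {A B : Finset G} (h : StrongEnvy u A B) {g : G}
    (hg : g ∈ B) : ∑ x ∈ A, u x < ∑ x ∈ B, u x - u g := by
  simpa only [sum_erase_eq_sub hg] using h.2 g hg

lemma sum_add_sum_sdiff_eq_add_gain {M A : Finset G} (u1 u2 : G → ℝ) (hA : A ⊆ M) :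
    ∑ x ∈ A, u1 x + ∑ x ∈ M \ A, u2 x = ∑ x ∈ M, u2 x + gain u1 u2 A := by
  rw [gain, sum_sub_distrib, sum_sdiff_eq_sub hA]
  ring

lemma union_sdiff_eq_sdiff_of_disjoint {A B T M : Finset G} (hAB : Disjoint A B)
    (hT : A ∪ B = T) (hTM : T ⊆ M) : B ∪ M \ T = M \ A := by
  subst hT
  ext x
  have hA : x ∈ A → x ∉ B := fun h => disjoint_left.mp hAB h
  have hM : x ∈ A ∪ B → x ∈ M := fun h => hTM h
  simp only [mem_union, mem_sdiff] at *
  tauto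

lemma sum_sdiff_filter_le_le_sum (M : Finset G) (u1 u2 : G → ℝ) :
    ∑ x ∈ M \ M.filter (fun g => u2 g ≤ u1 g), u1 x ≤
      ∑ x ∈ M \ M.filter (fun g => u2 g ≤ u1 g), u2 x := by
  rw [← filter_not]
  exact sum_le_sum fun g hg => le_of_not_ge (mem_filter.mp hg).2

variable {M T X : Finset G} {u1 u2 : G → ℝ} {g : G}

lemma exchange_of_strongEnvy (hTM : T ⊆ M) (hXT : X ⊆ T) (hg : g ∈ T \ X)
    (hgu : u2 g ≤ u1 g) (hrest : ∑ x ∈ M \ T, u1 x ≤ ∑ x ∈ M \ T, u2 x)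
    (hrest₀ : 0 ≤ ∑ x ∈ M \ T, u2 x)
    (henvy1 : StrongEnvy u1 X (M \ X)) (henvy2 : StrongEnvy u2 (M \ insert g X) (insert g X)) :
    ¬ StrongEnvy u2 (M \ (T \ X)) (T \ X) ∧ gain u1 u2 X < gain u1 u2 (T \ X) := by
  have hgX : g ∉ X := (mem_sdiff.mp hg).2
  have hXM : X ⊆ M := hXT.trans hTM
  have h1 := henvy1.sum_lt_sum_sub (mem_sdiff.mpr ⟨hTM (mem_sdiff.mp hg).1, hgX⟩)
  have h2 := henvy2.sum_lt_sum_sub (mem_insert_self g X)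
  rw [sum_sdiff_eq_sub (insert_subset (hTM (mem_sdiff.mp hg).1) hXM), sum_insert hgX] at h2
  rw [sum_sdiff_eq_sub hXM] at h1
  simp only [sum_sdiff_eq_sub hTM] at hrest hrest₀
  refine ⟨fun h => ?_, ?_⟩
  · have h3 := h.sum_lt_sum_sub hg
    rw [sum_sdiff_eq_sub (sdiff_subset.trans hTM), sum_sdiff_eq_sub hXT] at h3
    linarith
  · rw [gain, gain, sum_sub_distrib, sum_sub_distrib, sum_sdiff_eq_sub hXT, sum_sdiff_eq_sub hXT]
    linarith

lemma not_strongEnvy_of_gain_maximal (hTM : T ⊆ M) (hTu : ∀ g ∈ T, u2 g ≤ u1 g)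
    (hrest : ∑ x ∈ M \ T, u1 x ≤ ∑ x ∈ M \ T, u2 x) (hrest₀ : 0 ≤ ∑ x ∈ M \ T, u2 x)
    (hT : StrongEnvy u2 (M \ T) T) (hXT : X ⊆ T) (hX : ¬ StrongEnvy u2 (M \ X) X)
    (hmax : ∀ Y ⊆ T, ¬ StrongEnvy u2 (M \ Y) Y →
      gain u1 u2 Y ≤ gain u1 u2 X ∧ (gain u1 u2 Y = gain u1 u2 X → #Y ≤ #X)) :
    ¬ StrongEnvy u1 X (M \ X) := by
  intro henvy1
  obtain ⟨g, hg⟩ : (T \ X).Nonempty := by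
    rw [sdiff_nonempty]
    intro hTX
    exact hX (subset_antisymm hXT hTX ▸ hT)
  have hgX : g ∉ X := (mem_sdiff.mp hg).2
  have henvy2 : StrongEnvy u2 (M \ insert g X) (insert g X) := by
    by_contra hins
    have hgain : gain u1 u2 (insert g X) = u1 g - u2 g + gain u1 u2 X := sum_insert hgX
    obtain ⟨hle, hcard⟩ := hmax _ (insert_subset (mem_sdiff.mp hg).1 hXT) hins
    have := hcard (le_antisymm hle (by linarith [hTu g (mem_sdiff.mp hg).1]))
    rw [card_insert_of_notMem hgX] at this
    omega
  obtain ⟨hR, hlt⟩ := exchange_of_strongEnvy hTM hXT hg (hTu g (mem_sdiff.mp hg).1) hrest hrest₀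
    henvy1 henvy2
  exact (hmax _ sdiff_subset hR).1.not_gt hlt

end

theorem stmt_2_general {G : Type*} [DecidableEq G] (M : Finset G) (u1 u2 : G → ℝ)
    (h2nn : ∀ g ∈ M, 0 ≤ u2 g)
    (T1 T2 : Finset G) (hT1 : T1 = M.filter (fun g => u2 g ≤ u1 g)) (hT2 : T2 = M \ T1)
    (hSE : StrongEnvy u2 T2 T1)
    (TA' TB' : Finset G) (hdisj : Disjoint TA' TB') (hunion : TA' ∪ TB' = T1)
    (hNo : ¬ StrongEnvy u2 (TB' ∪ T2) TA') :
    ∃ A1 A2 : Finset G, Disjoint A1 A2 ∧ A1 ∪ A2 = M ∧ EF1 u1 u2 A1 A2 ∧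
      ∑ g ∈ TA', u1 g + ∑ g ∈ TB' ∪ T2, u2 g ≤ ∑ g ∈ A1, u1 g + ∑ g ∈ A2, u2 g := by
  classical
  subst hT2
  have hT1M : T1 ⊆ M := hT1 ▸ filter_subset _ M
  have hTu : ∀ g ∈ T1, u2 g ≤ u1 g := hT1 ▸ fun g hg => (mem_filter.mp hg).2
  have hrest : ∑ x ∈ M \ T1, u1 x ≤ ∑ x ∈ M \ T1, u2 x :=
    hT1 ▸ sum_sdiff_filter_le_le_sum M u1 u2
  have hrest₀ : 0 ≤ ∑ x ∈ M \ T1, u2 x := sum_nonneg fun g hg => h2nn g (mem_sdiff.mp hg).1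
  rw [union_sdiff_eq_sdiff_of_disjoint hdisj hunion hT1M] at hNo ⊢
  have hTAT1 : TA' ⊆ T1 := hunion ▸ subset_union_left
  set F := T1.powerset.filter fun Y => ¬ StrongEnvy u2 (M \ Y) Y
  have hmemF {Y : Finset G} : Y ∈ F ↔ Y ⊆ T1 ∧ ¬ StrongEnvy u2 (M \ Y) Y := by
    rw [mem_filter, mem_powerset]
  obtain ⟨X, hXF, hmax⟩ := F.exists_max_image_lex (gain u1 u2) card ⟨TA', hmemF.mpr ⟨hTAT1, hNo⟩⟩
  obtain ⟨hXT1, hX⟩ := hmemF.mp hXF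
  have hXM : X ⊆ M := hXT1.trans hT1M
  refine ⟨X, M \ X, disjoint_sdiff, union_sdiff_of_subset hXM, ⟨?_, hX⟩, ?_⟩
  · exact not_strongEnvy_of_gain_maximal hT1M hTu hrest hrest₀ hSE hXT1 hX
      fun Y hY hYok => hmax Y (hmemF.mpr ⟨hY, hYok⟩)
  · rw [sum_add_sum_sdiff_eq_add_gain u1 u2 (hTAT1.trans hT1M),
      sum_add_sum_sdiff_eq_add_gain u1 u2 hXM]
    linarith [(hmax TA' (hmemF.mpr ⟨hTAT1, hNo⟩)).1]

/-- If agent 2 strongly envies agent 1 in `(T1, T2)` but `T1` can be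
partitioned into `T_A'` and `T_B'` so that agent 2 does not strongly envy agent 1 in
`(T_A', T_B' ∪ T2)`, then there is an EF1 allocation with at least that social welfare. -/
theorem stmt_2 {G : Type*} [DecidableEq G] (M : Finset G) (u1 u2 : G → ℝ)
    (h1nn : ∀ g ∈ M, 0 ≤ u1 g) (h2nn : ∀ g ∈ M, 0 ≤ u2 g)
    (T1 T2 : Finset G) (hT1 : T1 = M.filter (fun g => u2 g ≤ u1 g)) (hT2 : T2 = M \ T1)
    (hSE : StrongEnvy u2 T2 T1)
    (TA' TB' : Finset G) (hdisj : Disjoint TA' TB') (hunion : TA' ∪ TB' = T1)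
    (hNo : ¬ StrongEnvy u2 (TB' ∪ T2) TA') :
    ∃ A1 A2 : Finset G, Disjoint A1 A2 ∧ A1 ∪ A2 = M ∧ EF1 u1 u2 A1 A2 ∧
      ∑ g ∈ TA', u1 g + ∑ g ∈ TB' ∪ T2, u2 g ≤ ∑ g ∈ A1, u1 g + ∑ g ∈ A2, u2 g :=
  stmt_2_general M u1 u2 h2nn T1 T2 hT1 hT2 hSE TA' TB' hdisj hunion hNo
end

section
/- For two agents with additive utilities over a set of mixed goods (indivisible goods M and homogeneous divisible goods D), there exists an EFXM allocation A = (A1, A2) with social welfare at least (u1(M ∪ D) + u2(M ∪ D))/2. -/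
open Finset

/-- Additive utility of a mixed bundle `B = (B.1, B.2)`: the set `B.1` of indivisible
goods plus fractions `B.2 h` of each divisible good `h ∈ D`. -/
def mval {G H : Type*} (uI : G → ℝ) (uD : H → ℝ) (D : Finset H)
    (B : Finset G × (H → ℝ)) : ℝ :=
  (∑ g ∈ B.1, uI g) + ∑ h ∈ D, B.2 h * uD h

/-- The bundle `B` contains only indivisible goods. -/
def OnlyIndiv {G H : Type*} (D : Finset H) (B : Finset G × (H → ℝ)) : Prop :=
  ∀ h ∈ D, B.2 h = 0

/-- EFXM comparison: agent with utilities `(uI, uD)` holding `Bi` does not EFXM-envy `Bj`. -/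
def EFXMpair {G H : Type*} [DecidableEq G] (uI : G → ℝ) (uD : H → ℝ) (D : Finset H)
    (Bi Bj : Finset G × (H → ℝ)) : Prop :=
  (OnlyIndiv D Bj →
    (mval uI uD D Bj ≤ mval uI uD D Bi ∨
      ∀ g ∈ Bj.1, mval uI uD D (Bj.1.erase g, Bj.2) ≤ mval uI uD D Bi)) ∧
  (¬ OnlyIndiv D Bj → mval uI uD D Bj ≤ mval uI uD D Bi)

/-- Feasible (possibly partial) allocation of mixed goods to two agents. -/
def Feasible2 {G H : Type*} (M : Finset G) (D : Finset H)
    (A1 A2 : Finset G × (H → ℝ)) : Prop :=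
  A1.1 ⊆ M ∧ A2.1 ⊆ M ∧ Disjoint A1.1 A2.1 ∧
  (∀ h ∈ D, 0 ≤ A1.2 h) ∧ (∀ h ∈ D, 0 ≤ A2.2 h) ∧ (∀ h ∈ D, A1.2 h + A2.2 h ≤ 1)

/-- Envy-freeness implies the EFXM pair condition. -/
lemma ef_pair {G H : Type*} [DecidableEq G] {uI : G → ℝ} {uD : H → ℝ} {D : Finset H}
    {Bi Bj : Finset G × (H → ℝ)} (h : mval uI uD D Bj ≤ mval uI uD D Bi) :
    EFXMpair uI uD D Bi Bj :=
  ⟨fun _ => Or.inl h, fun _ => h⟩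

/-- Minimal possible imbalance `|u(M) - 2 u(S)|` over subsets `S ⊆ M`. -/
noncomputable def gapMin {G : Type*} (M : Finset G) (uI : G → ℝ) : ℝ :=
  ((M.powerset).image (fun S => |(∑ g ∈ M, uI g) - 2 * ∑ g ∈ S, uI g|)).min'
    ((Finset.powerset_nonempty M).image _)

lemma gapMin_nonneg {G : Type*} (M : Finset G) (uI : G → ℝ) : 0 ≤ gapMin M uI := by
  apply Finset.le_min'
  intro y hy
  obtain ⟨S, -, rfl⟩ := Finset.mem_image.1 hy
  exact abs_nonneg _

lemma gapMin_le {G : Type*} {M : Finset G} (uI : G → ℝ) {S : Finset G} (hS : S ⊆ M) :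
    gapMin M uI ≤ |(∑ g ∈ M, uI g) - 2 * ∑ g ∈ S, uI g| :=
  Finset.min'_le _ _ (Finset.mem_image_of_mem _ (Finset.mem_powerset.2 hS))

lemma gapMin_exists {G : Type*} [DecidableEq G] (M : Finset G) (uI : G → ℝ) :
    ∃ S ⊆ M, (∑ g ∈ M, uI g) - 2 * ∑ g ∈ S, uI g = gapMin M uI := by
  have h0 : ((M.powerset).image (fun S => |(∑ g ∈ M, uI g) - 2 * ∑ g ∈ S, uI g|)).Nonempty :=
    (Finset.powerset_nonempty M).image _
  have hmem := Finset.min'_mem _ h0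
  obtain ⟨S0, hS0, hval0⟩ := Finset.mem_image.1 hmem
  rw [Finset.mem_powerset] at hS0
  set c := (∑ g ∈ M, uI g) - 2 * ∑ g ∈ S0, uI g with hc
  have hval : |c| = gapMin M uI := hval0
  rcases le_or_gt 0 c with hpos | hneg
  · exact ⟨S0, hS0, by rw [← hval, abs_of_nonneg hpos]⟩
  · refine ⟨M \ S0, Finset.sdiff_subset, ?_⟩
    have hsd : (∑ g ∈ M \ S0, uI g) + ∑ g ∈ S0, uI g = ∑ g ∈ M, uI g :=
      Finset.sum_sdiff hS0
    rw [← hval, abs_of_neg hneg]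
    linarith [hsd]

/-- Minimal imbalance including the divisible goods. -/
noncomputable def deltaDef {G H : Type*} (M : Finset G) (D : Finset H)
    (uI : G → ℝ) (uD : H → ℝ) : ℝ :=
  max 0 (gapMin M uI - ∑ h ∈ D, uD h)

lemma deltaDef_nonneg {G H : Type*} (M : Finset G) (D : Finset H)
    (uI : G → ℝ) (uD : H → ℝ) : 0 ≤ deltaDef M D uI uD := le_max_left _ _

/-- `deltaDef` lower-bounds the imbalance of every complete partition. -/
lemma deltaDef_le {G H : Type*} [DecidableEq G] (M : Finset G) (D : Finset H) (uI : G → ℝ) (uD : H → ℝ)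
    (h3 : ∀ h ∈ D, 0 ≤ uD h)
    (S T : Finset G) (x y : H → ℝ) (hU : S ∪ T = M) (hd : Disjoint S T)
    (hx : ∀ h, 0 ≤ x h) (hy : ∀ h, 0 ≤ y h) (hxy : ∀ h, x h + y h = 1) :
    deltaDef M D uI uD ≤ |mval uI uD D (T, y) - mval uI uD D (S, x)| := by
  classical
  have hST : (∑ g ∈ S, uI g) + ∑ g ∈ T, uI g = ∑ g ∈ M, uI g := by
    rw [← hU, Finset.sum_union hd]
  have hSM : S ⊆ M := hU ▸ Finset.subset_union_left
  set a : ℝ := (∑ g ∈ T, uI g) - ∑ g ∈ S, uI g with ha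
  set b : ℝ := (∑ h ∈ D, y h * uD h) - ∑ h ∈ D, x h * uD h with hb
  have hdiff : mval uI uD D (T, y) - mval uI uD D (S, x) = a + b := by
    simp only [mval, ha, hb]; ring
  have hga : gapMin M uI ≤ |a| := by
    have := gapMin_le uI hSM
    have : |(∑ g ∈ M, uI g) - 2 * ∑ g ∈ S, uI g| = |a| := by
      congr 1; linarith [hST]
    have h2 := gapMin_le uI hSM
    rw [this] at h2; exact h2
  have hbd : |b| ≤ ∑ h ∈ D, uD h := by
    have : b = ∑ h ∈ D, (y h - x h) * uD h := by
      rw [hb, ← Finset.sum_sub_distrib]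
      exact Finset.sum_congr rfl fun h _ => by ring
    rw [this]
    calc |∑ h ∈ D, (y h - x h) * uD h| ≤ ∑ h ∈ D, |(y h - x h) * uD h| :=
          Finset.abs_sum_le_sum_abs _ _
      _ ≤ ∑ h ∈ D, uD h := by
          apply Finset.sum_le_sum
          intro h hh
          rw [abs_mul, abs_of_nonneg (h3 h hh)]
          have h1 : |y h - x h| ≤ 1 := by
            rw [abs_le]
            constructor <;> nlinarith [hx h, hy h, hxy h]
          nlinarith [h3 h hh, abs_nonneg (y h - x h)]
  have habs : |a| ≤ |a + b| + |b| := by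
    have := abs_add_le (a + b) (-b)
    simpa [abs_neg] using this
  rw [hdiff]
  apply max_le
  · exact abs_nonneg _
  · linarith

/-- The cutter's balanced EFX partition. -/
lemma partition_lemma {G H : Type*} [DecidableEq G] (M : Finset G) (D : Finset H)
    (uI : G → ℝ) (uD : H → ℝ) (h1 : ∀ g ∈ M, 0 ≤ uI g) (h3 : ∀ h ∈ D, 0 ≤ uD h) :
    ∃ (S T : Finset G) (x y : H → ℝ),
      S ∪ T = M ∧ Disjoint S T ∧
      (∀ h, 0 ≤ x h) ∧ (∀ h, 0 ≤ y h) ∧ (∀ h, x h + y h = 1) ∧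
      mval uI uD D (T, y) - mval uI uD D (S, x) = deltaDef M D uI uD ∧
      (0 < deltaDef M D uI uD → y = fun _ => 0) ∧
      (∀ g ∈ T, deltaDef M D uI uD ≤ uI g) := by
  classical
  obtain ⟨S0, hS0M, hS0⟩ := gapMin_exists M uI
  set gp := gapMin M uI with hgp
  have hgp0 : 0 ≤ gp := gapMin_nonneg M uI
  set d := ∑ h ∈ D, uD h with hd
  have hd0 : 0 ≤ d := Finset.sum_nonneg h3
  set T := (M \ S0).filter (fun g => 0 < uI g) with hT
  set S := M \ T with hS
  have hTM : T ⊆ M := (Finset.filter_subset _ _).trans Finset.sdiff_subset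
  have hUn : S ∪ T = M := Finset.sdiff_union_of_subset hTM
  have hDisj : Disjoint S T := Finset.sdiff_disjoint
  -- sums
  have hvT : (∑ g ∈ T, uI g) = ∑ g ∈ M \ S0, uI g := by
    rw [hT]
    apply Finset.sum_filter_of_ne
    intro g hg hne
    exact lt_of_le_of_ne (h1 g (Finset.sdiff_subset hg)) (Ne.symm hne)
  have hsd : (∑ g ∈ M \ S0, uI g) + ∑ g ∈ S0, uI g = ∑ g ∈ M, uI g :=
    Finset.sum_sdiff hS0M
  have hvS : (∑ g ∈ S, uI g) = ∑ g ∈ S0, uI g := by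
    have h2 : (∑ g ∈ S, uI g) + ∑ g ∈ T, uI g = ∑ g ∈ M, uI g := by
      rw [← hUn, Finset.sum_union hDisj]
    linarith [hvT, hsd, h2]
  have hgap : (∑ g ∈ T, uI g) - ∑ g ∈ S, uI g = gp := by
    rw [hvT, hvS]; linarith [hsd, hS0]
  -- key EFX property of goods in T
  have hTbig : ∀ g ∈ T, gp ≤ uI g := by
    intro g hg
    rw [hT, Finset.mem_filter] at hg
    obtain ⟨hgMS, hgpos⟩ := hg
    have hgS0 : g ∉ S0 := (Finset.mem_sdiff.1 hgMS).2
    have hsub : insert g S0 ⊆ M := by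
      intro z hz
      rcases Finset.mem_insert.1 hz with rfl | hz
      · exact (Finset.mem_sdiff.1 hgMS).1
      · exact hS0M hz
    have hmin := gapMin_le uI hsub
    rw [Finset.sum_insert hgS0] at hmin
    have : gp ≤ |gp - 2 * uI g| := by
      have heq : (∑ g ∈ M, uI g) - 2 * (uI g + ∑ g ∈ S0, uI g) = gp - 2 * uI g := by
        linarith [hS0]
      rwa [heq] at hmin
    rcases abs_cases (gp - 2 * uI g) with ⟨he, _⟩ | ⟨he, _⟩ <;> [linarith; linarith]
  have hTdel : ∀ g ∈ T, deltaDef M D uI uD ≤ uI g := by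
    intro g hg
    have hbig := hTbig g hg
    rw [hT, Finset.mem_filter] at hg
    rw [deltaDef]
    apply max_le (le_of_lt hg.2)
    have : (∑ h ∈ D, uD h) = d := hd.symm
    linarith
  by_cases hgd : gp ≤ d
  · -- balance exactly with divisible goods; delta = 0
    have hdel0 : deltaDef M D uI uD = 0 := by
      rw [deltaDef, max_eq_left]; rw [← hgp, ← hd]; linarith
    rcases eq_or_lt_of_le hd0 with hdz | hdpos
    · -- d = 0, hence gp = 0
      have hgpz : gp = 0 := le_antisymm (by linarith) hgp0
      refine ⟨S, T, (fun _ => 1), (fun _ => 0), hUn, hDisj,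
        fun _ => by norm_num, fun _ => le_refl 0, fun _ => by norm_num, ?_, ?_, ?_⟩
      · have hx1 : (∑ h ∈ D, (1 : ℝ) * uD h) = d := by rw [hd]; simp
        simp only [mval]
        rw [hx1]
        simp only [zero_mul, Finset.sum_const_zero]
        rw [hdel0]
        linarith [hgap, hgpz, hdz.symm]
      · intro _; rfl
      · exact hTdel
    · -- d > 0 : split fraction r on the T side
      set r : ℝ := (d - gp) / (2 * d) with hr
      have hrnn : 0 ≤ r := by
        apply div_nonneg <;> linarith
      have hrle : r ≤ 1 := by
        rw [hr, div_le_one (by linarith)]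
        linarith
      refine ⟨S, T, (fun _ => 1 - r), (fun _ => r), hUn, hDisj,
        fun _ => by dsimp only; linarith, fun _ => hrnn, fun _ => by dsimp only; ring, ?_, ?_, hTdel⟩
      · simp only [mval]
        have hxs : (∑ h ∈ D, (1 - r) * uD h) = (1 - r) * d := by
          rw [hd, Finset.mul_sum]
        have hys : (∑ h ∈ D, r * uD h) = r * d := by
          rw [hd, Finset.mul_sum]
        rw [hxs, hys, hdel0]
        have hrd : 2 * (r * d) = d - gp := by
          rw [hr]; field_simp
        linarith [hgap]
      · intro hcon; rw [hdel0] at hcon; exact absurd hcon (lt_irrefl 0)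
  · -- divisible goods cannot absorb the gap: give them all to S
    push_neg at hgd
    have hdel : deltaDef M D uI uD = gp - d := by
      rw [deltaDef, max_eq_right] <;> rw [← hgp, ← hd]; linarith
    refine ⟨S, T, (fun _ => 1), (fun _ => 0), hUn, hDisj,
      fun _ => by norm_num, fun _ => le_refl 0, fun _ => by norm_num, ?_, fun _ => rfl, hTdel⟩
    simp only [mval]
    have hx1 : (∑ h ∈ D, (1 : ℝ) * uD h) = d := by rw [hd]; simp
    rw [hx1, hdel]
    simp only [zero_mul, Finset.sum_const_zero]
    linarith [hgap]

/-- Main construction assuming agent 1 is the cutter (smaller `deltaDef`). -/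
lemma main_helper {G H : Type*} [DecidableEq G] (M : Finset G) (D : Finset H)
    (uI1 uI2 : G → ℝ) (uD1 uD2 : H → ℝ)
    (h1 : ∀ g ∈ M, 0 ≤ uI1 g) (h2 : ∀ g ∈ M, 0 ≤ uI2 g)
    (h3 : ∀ h ∈ D, 0 ≤ uD1 h) (h4 : ∀ h ∈ D, 0 ≤ uD2 h)
    (hdle : deltaDef M D uI1 uD1 ≤ deltaDef M D uI2 uD2) :
    ∃ A1 A2 : Finset G × (H → ℝ), Feasible2 M D A1 A2 ∧
      EFXMpair uI1 uD1 D A1 A2 ∧ EFXMpair uI2 uD2 D A2 A1 ∧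
      ((∑ g ∈ M, uI1 g + ∑ h ∈ D, uD1 h) + (∑ g ∈ M, uI2 g + ∑ h ∈ D, uD2 h)) / 2 ≤
        mval uI1 uD1 D A1 + mval uI2 uD2 D A2 := by
  classical
  obtain ⟨S, T, x, y, hUn, hDisj, hx, hy, hxy, hdiff, hy0, hTdel⟩ :=
    partition_lemma M D uI1 uD1 h1 h3
  set δ := deltaDef M D uI1 uD1 with hδ
  have hδ0 : 0 ≤ δ := deltaDef_nonneg M D uI1 uD1
  have hSM : S ⊆ M := hUn ▸ Finset.subset_union_left
  have hTM : T ⊆ M := hUn ▸ Finset.subset_union_right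
  -- totals
  have htot1 : (∑ g ∈ M, uI1 g + ∑ h ∈ D, uD1 h) =
      mval uI1 uD1 D (S, x) + mval uI1 uD1 D (T, y) := by
    simp only [mval]
    have hM : (∑ g ∈ M, uI1 g) = (∑ g ∈ S, uI1 g) + ∑ g ∈ T, uI1 g := by
      rw [← hUn, Finset.sum_union hDisj]
    have hD : (∑ h ∈ D, uD1 h) = (∑ h ∈ D, x h * uD1 h) + ∑ h ∈ D, y h * uD1 h := by
      rw [← Finset.sum_add_distrib]
      apply Finset.sum_congr rfl
      intro h _
      linear_combination (-(uD1 h)) * hxy h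
    rw [hM, hD]; ring
  have htot2 : (∑ g ∈ M, uI2 g + ∑ h ∈ D, uD2 h) =
      mval uI2 uD2 D (S, x) + mval uI2 uD2 D (T, y) := by
    simp only [mval]
    have hM : (∑ g ∈ M, uI2 g) = (∑ g ∈ S, uI2 g) + ∑ g ∈ T, uI2 g := by
      rw [← hUn, Finset.sum_union hDisj]
    have hD : (∑ h ∈ D, uD2 h) = (∑ h ∈ D, x h * uD2 h) + ∑ h ∈ D, y h * uD2 h := by
      rw [← Finset.sum_add_distrib]
      apply Finset.sum_congr rfl
      intro h _
      linear_combination (-(uD2 h)) * hxy h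
    rw [hM, hD]; ring
  -- EFXM of agent 1 holding (S,x) against (T,y)
  have hefx1 : EFXMpair uI1 uD1 D (S, x) (T, y) := by
    rcases eq_or_lt_of_le hδ0 with hz | hpos
    · exact ef_pair (by linarith [hdiff])
    · have hy0' : y = fun _ => 0 := hy0 hpos
      constructor
      · intro _
        right
        intro g hg
        have herase : (∑ g' ∈ T.erase g, uI1 g') = (∑ g' ∈ T, uI1 g') - uI1 g := by
          have := Finset.sum_erase_add T uI1 hg
          linarith
        simp only [mval] at hdiff ⊢
        rw [herase]
        have := hTdel g hg
        linarith
      · intro hno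
        exact absurd (fun h _ => by rw [hy0']) hno
  set ε := mval uI2 uD2 D (T, y) - mval uI2 uD2 D (S, x) with hε
  rcases le_or_gt ε 0 with hneg | hpos
  · -- agent 2 takes (S,x), agent 1 takes (T,y); both envy-free
    refine ⟨(T, y), (S, x), ?_, ?_, ?_, ?_⟩
    · exact ⟨hTM, hSM, hDisj.symm, fun h _ => hy h, fun h _ => hx h,
        fun h _ => le_of_eq (by linarith [hxy h])⟩
    · exact ef_pair (by linarith [hdiff])
    · exact ef_pair (by linarith)
    · rw [htot1, htot2]; linarith [hdiff]
  · -- agent 2 takes (T,y), agent 1 takes (S,x)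
    have hδ2 : deltaDef M D uI2 uD2 ≤ ε := by
      have := deltaDef_le M D uI2 uD2 h4 S T x y hUn hDisj hx hy hxy
      rwa [← hε, abs_of_pos hpos] at this
    refine ⟨(S, x), (T, y), ?_, hefx1, ?_, ?_⟩
    · exact ⟨hSM, hTM, hDisj, fun h _ => hx h, fun h _ => hy h,
        fun h _ => le_of_eq (hxy h)⟩
    · exact ef_pair (by linarith)
    · rw [htot1, htot2]
      have : δ ≤ ε := le_trans hdle hδ2
      linarith [hdiff]

/-- For two agents with additive utilities over mixed goods, there exists an
EFXM allocation with social welfare at least `(u1(M ∪ D) + u2(M ∪ D)) / 2`. -/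
theorem stmt_5 {G H : Type*} [DecidableEq G] (M : Finset G) (D : Finset H)
    (uI1 uI2 : G → ℝ) (uD1 uD2 : H → ℝ)
    (h1 : ∀ g ∈ M, 0 ≤ uI1 g) (h2 : ∀ g ∈ M, 0 ≤ uI2 g)
    (h3 : ∀ h ∈ D, 0 ≤ uD1 h) (h4 : ∀ h ∈ D, 0 ≤ uD2 h) :
    ∃ A1 A2 : Finset G × (H → ℝ), Feasible2 M D A1 A2 ∧
      EFXMpair uI1 uD1 D A1 A2 ∧ EFXMpair uI2 uD2 D A2 A1 ∧
      ((∑ g ∈ M, uI1 g + ∑ h ∈ D, uD1 h) + (∑ g ∈ M, uI2 g + ∑ h ∈ D, uD2 h)) / 2 ≤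
        mval uI1 uD1 D A1 + mval uI2 uD2 D A2 := by
  rcases le_total (deltaDef M D uI1 uD1) (deltaDef M D uI2 uD2) with hle | hle
  · exact main_helper M D uI1 uI2 uD1 uD2 h1 h2 h3 h4 hle
  · obtain ⟨B1, B2, hf, he2, he1, hw⟩ :=
      main_helper M D uI2 uI1 uD2 uD1 h2 h1 h4 h3 hle
    refine ⟨B2, B1, ?_, he1, he2, by linarith⟩
    exact ⟨hf.2.1, hf.1, hf.2.2.1.symm, hf.2.2.2.2.1, hf.2.2.2.1,
      fun h hh => by linarith [hf.2.2.2.2.2 h hh]⟩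
end

section
/- For two agents with additive utilities over indivisible goods, there exists an EFX allocation A with social welfare at least (u1(M) + u2(M))/2; consequently, the price of EFX for two agents with unscaled utilities is at most 2. -/
/-!
Call `2 u(S) - u(M)` the imbalance of the cut `(S, M \ S)` for the utility `u`. For each agent
take a cut of least absolute imbalance, oriented so that the imbalance `D` is nonnegative and
with the worthless goods moved to the light side. Minimality makes every good of the heavy side
worth at least `D`, so the owner of the light side is EFX towards the heavy side. Let agent 1's
imbalance `D` be the smaller of the two. If agent 2 prefers the light side, giving agent 1 the
heavy side is envy-free and each agent gets half of its total. Otherwise agent 2 takes the heavy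
side, whose imbalance for agent 2 is at least agent 2's least imbalance, hence at least `D`; the
welfare is then at least `(u1(M) - D)/2 + (u2(M) + D)/2`.
-/

open Finset

/-- EFX comparison for indivisible goods: the agent with utility `u` holding `Ai` does
not envy `Aj` after the removal of any single good from `Aj`. -/
def EFXpair {G : Type*} [DecidableEq G] (u : G → ℝ) (Ai Aj : Finset G) : Prop :=
  ∀ g ∈ Aj, ∑ x ∈ Aj.erase g, u x ≤ ∑ x ∈ Ai, u x

section Cuts

variable {G : Type*} [DecidableEq G] (u : G → ℝ) (M : Finset G)

def imbalance (S : Finset G) : ℝ := 2 * ∑ x ∈ S, u x - ∑ x ∈ M, u x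

variable {u M}

lemma imbalance_sdiff {S : Finset G} (hS : S ⊆ M) :
    imbalance u M (M \ S) = -imbalance u M S := by
  simp only [imbalance, sum_sdiff_eq_sub hS]
  ring

lemma EFXpair.of_sum_le {Ai Aj : Finset G} (hnn : ∀ g ∈ Aj, 0 ≤ u g)
    (h : ∑ x ∈ Aj, u x ≤ ∑ x ∈ Ai, u x) : EFXpair u Ai Aj := fun _ _ =>
  (sum_le_sum_of_subset_of_nonneg (erase_subset _ _) fun i hi _ => hnn i hi).trans h

lemma EFXpair.of_imbalance_le_abs {S : Finset G} (hS : S ⊆ M) (hpos : ∀ g ∈ S, 0 < u g)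
    (hmin : ∀ S' ⊆ M, imbalance u M S ≤ |imbalance u M S'|) : EFXpair u (M \ S) S := by
  intro g hg
  have hg_ge : imbalance u M S ≤ u g := by
    have h := hmin (S.erase g) ((erase_subset g S).trans hS)
    simp only [imbalance, sum_erase_eq_sub hg] at h ⊢
    rcases le_abs.1 h with h | h <;> linarith [hpos g hg]
  simp only [imbalance] at hg_ge
  rw [sum_erase_eq_sub hg, sum_sdiff_eq_sub hS]
  linarith

variable (u M)

lemma exists_nonneg_imbalance_le_abs :
    ∃ S ⊆ M, 0 ≤ imbalance u M S ∧ ∀ S' ⊆ M, imbalance u M S ≤ |imbalance u M S'| := by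
  obtain ⟨S, hS, hmin⟩ :=
    exists_min_image M.powerset (fun S => |imbalance u M S|) ⟨∅, empty_mem_powerset M⟩
  rw [mem_powerset] at hS
  have hmin' : ∀ S' ⊆ M, |imbalance u M S| ≤ |imbalance u M S'| :=
    fun S' hS' => hmin S' (mem_powerset.2 hS')
  rcases le_total 0 (imbalance u M S) with h | h
  · exact ⟨S, hS, h, fun S' hS' => (le_abs_self _).trans (hmin' S' hS')⟩
  · refine ⟨M \ S, sdiff_subset, by rw [imbalance_sdiff hS]; linarith, fun S' hS' => ?_⟩
    rw [imbalance_sdiff hS]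
    exact (neg_le_abs _).trans (hmin' S' hS')

variable {u}

lemma exists_efx_cut (hnn : ∀ g ∈ M, 0 ≤ u g) :
    ∃ S ⊆ M, 0 ≤ imbalance u M S ∧ (∀ S' ⊆ M, imbalance u M S ≤ |imbalance u M S'|) ∧
      EFXpair u (M \ S) S := by
  obtain ⟨S, hS, h0, hmin⟩ := exists_nonneg_imbalance_le_abs u M
  have hsum : ∑ x ∈ S with 0 < u x, u x = ∑ x ∈ S, u x :=
    sum_filter_of_ne fun x hx hx0 => (hnn x (hS hx)).lt_of_ne' hx0
  have himb : imbalance u M (S.filter (0 < u ·)) = imbalance u M S := by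
    simp only [imbalance, hsum]
  have hS' : S.filter (0 < u ·) ⊆ M := (filter_subset _ _).trans hS
  refine ⟨_, hS', himb ▸ h0, himb ▸ hmin, ?_⟩
  exact EFXpair.of_imbalance_le_abs hS' (fun g hg => (mem_filter.1 hg).2) (himb ▸ hmin)

end Cuts

section TwoAgents

variable {G : Type*} [DecidableEq G] {M : Finset G} {u1 u2 : G → ℝ}

lemma exists_efx_half_welfare_of_efx_cut (h1nn : ∀ g ∈ M, 0 ≤ u1 g) (h2nn : ∀ g ∈ M, 0 ≤ u2 g)
    {X : Finset G} (hXM : X ⊆ M) (hX0 : 0 ≤ imbalance u1 M X) (hXefx : EFXpair u1 (M \ X) X)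
    (hXmin : ∀ S' ⊆ M, imbalance u1 M X ≤ |imbalance u2 M S'|) :
    ∃ A1 A2 : Finset G, A1 ⊆ M ∧ A2 ⊆ M ∧ Disjoint A1 A2 ∧
      EFXpair u1 A1 A2 ∧ EFXpair u2 A2 A1 ∧
      ∑ g ∈ M, u1 g + ∑ g ∈ M, u2 g ≤ 2 * (∑ g ∈ A1, u1 g + ∑ g ∈ A2, u2 g) := by
  have hc1 := sum_sdiff_eq_sub (f := u1) hXM
  have hc2 := sum_sdiff_eq_sub (f := u2) hXM
  simp only [imbalance] at hX0 hXmin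
  by_cases h2 : ∑ g ∈ M \ X, u2 g ≤ ∑ g ∈ X, u2 g
  · refine ⟨M \ X, X, sdiff_subset, hXM, sdiff_disjoint, hXefx,
      .of_sum_le (fun g hg => h2nn g (mem_sdiff.1 hg).1) h2, ?_⟩
    have hX2 := hXmin X hXM
    rw [abs_of_nonneg (by linarith)] at hX2
    linarith
  · push Not at h2
    refine ⟨X, M \ X, hXM, sdiff_subset, disjoint_sdiff,
      .of_sum_le (fun g hg => h1nn g (mem_sdiff.1 hg).1) (by linarith),
      .of_sum_le (fun g hg => h2nn g (hXM hg)) h2.le, by linarith⟩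

theorem exists_efx_half_welfare (h1nn : ∀ g ∈ M, 0 ≤ u1 g) (h2nn : ∀ g ∈ M, 0 ≤ u2 g) :
    ∃ A1 A2 : Finset G, A1 ⊆ M ∧ A2 ⊆ M ∧ Disjoint A1 A2 ∧
      EFXpair u1 A1 A2 ∧ EFXpair u2 A2 A1 ∧
      ∑ g ∈ M, u1 g + ∑ g ∈ M, u2 g ≤ 2 * (∑ g ∈ A1, u1 g + ∑ g ∈ A2, u2 g) := by
  obtain ⟨X, hXM, hX0, hXmin, hXefx⟩ := exists_efx_cut M h1nn
  obtain ⟨W, hWM, hW0, hWmin, hWefx⟩ := exists_efx_cut M h2nn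
  rcases le_total (imbalance u1 M X) (imbalance u2 M W) with h | h
  · exact exists_efx_half_welfare_of_efx_cut h1nn h2nn hXM hX0 hXefx
      fun S' hS' => h.trans (hWmin S' hS')
  · obtain ⟨A2, A1, hA2, hA1, hdisj, hefx2, hefx1, hwel⟩ :=
      exists_efx_half_welfare_of_efx_cut h2nn h1nn hWM hW0 hWefx
        fun S' hS' => h.trans (hXmin S' hS')
    exact ⟨A1, A2, hA1, hA2, hdisj.symm, hefx1, hefx2, by linarith⟩

end TwoAgents

/-- For two agents with additive utilities over indivisible goods, there is
an EFX (possibly partial) allocation with social welfare at least `(u1(M) + u2(M))/2`;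
consequently the price of EFX for two agents with unscaled utilities is at most `2`. -/
theorem stmt_6 {G : Type*} [DecidableEq G] (M : Finset G) (u1 u2 : G → ℝ)
    (h1nn : ∀ g ∈ M, 0 ≤ u1 g) (h2nn : ∀ g ∈ M, 0 ≤ u2 g) :
    ∃ A1 A2 : Finset G, A1 ⊆ M ∧ A2 ⊆ M ∧ Disjoint A1 A2 ∧
      EFXpair u1 A1 A2 ∧ EFXpair u2 A2 A1 ∧
      (∑ g ∈ M, u1 g + ∑ g ∈ M, u2 g) / 2 ≤ ∑ g ∈ A1, u1 g + ∑ g ∈ A2, u2 g ∧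
      ∀ B1 B2 : Finset G, B1 ⊆ M → B2 ⊆ M → Disjoint B1 B2 →
        ∑ g ∈ B1, u1 g + ∑ g ∈ B2, u2 g ≤
          2 * (∑ g ∈ A1, u1 g + ∑ g ∈ A2, u2 g) := by
  obtain ⟨A1, A2, hA1, hA2, hdisj, hefx1, hefx2, hwel⟩ := exists_efx_half_welfare h1nn h2nn
  refine ⟨A1, A2, hA1, hA2, hdisj, hefx1, hefx2, by linarith, fun B1 B2 hB1 hB2 _ => ?_⟩
  have h1 := sum_le_sum_of_subset_of_nonneg hB1 fun g hg _ => h1nn g hg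
  have h2 := sum_le_sum_of_subset_of_nonneg hB2 fun g hg _ => h2nn g hg
  linarith
end

section
/- In the cut-and-choose procedure for two agents, where agent 1's bipartition (X1, X2) of the goods is at least as equal (in her own utility) as agent 2's most equal bipartition (Y1, Y2) is in agent 2's utility, the resulting allocation A (agent 2 chooses her preferred bundle among X1, X2) satisfies SW(A) ≥ u1(X2) + u2(Y1) ≥ u1(X1) + u2(Y2), and hence SW(A) ≥ (u1(M) + u2(M))/2. -/
/-!
Agent 2 takes the bundle `A2` she weakly prefers, so `(A2, A1)` is a bipartition whose
`u2`-gap is nonnegative; minimality of the gap of `(Y1, Y2)` then forces `u2(Y1) ≤ u2(A2)`,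
while agent 1 keeps at least her less valued bundle `X2`. The middle inequality is the
gap comparison between the two bipartitions, and averaging the two lower bounds
`u1(X2) + u2(Y1)` and `u1(X1) + u2(Y2)` gives half the total.
-/

open Finset

theorem sum_le_sum_of_sub_le_sub {G R : Type*} [DecidableEq G] [Field R] [LinearOrder R]
    [IsStrictOrderedRing R] {M Y1 Y2 B1 B2 : Finset G} {u : G → R}
    (hYdisj : Disjoint Y1 Y2) (hYunion : Y1 ∪ Y2 = M)
    (hBdisj : Disjoint B1 B2) (hBunion : B1 ∪ B2 = M)
    (hgap : ∑ g ∈ Y1, u g - ∑ g ∈ Y2, u g ≤ ∑ g ∈ B1, u g - ∑ g ∈ B2, u g) :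
    ∑ g ∈ Y1, u g ≤ ∑ g ∈ B1, u g := by
  have hY := sum_union (f := u) hYdisj
  have hB := sum_union (f := u) hBdisj
  rw [hYunion] at hY
  rw [hBunion] at hB
  linarith

theorem stmt_8_general {G : Type*} [DecidableEq G] (M : Finset G) (u1 u2 : G → ℝ)
    (X1 X2 Y1 Y2 : Finset G)
    (hXdisj : Disjoint X1 X2) (hXunion : X1 ∪ X2 = M)
    (hYdisj : Disjoint Y1 Y2) (hYunion : Y1 ∪ Y2 = M)
    (hXord : ∑ g ∈ X2, u1 g ≤ ∑ g ∈ X1, u1 g)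
    (hYmin : ∀ B1 B2 : Finset G, Disjoint B1 B2 → B1 ∪ B2 = M →
      ∑ g ∈ Y1, u2 g - ∑ g ∈ Y2, u2 g ≤ |∑ g ∈ B1, u2 g - ∑ g ∈ B2, u2 g|)
    (hdiff : ∑ g ∈ X1, u1 g - ∑ g ∈ X2, u1 g ≤ ∑ g ∈ Y1, u2 g - ∑ g ∈ Y2, u2 g)
    (A1 A2 : Finset G)
    (hchoice : (A1 = X1 ∧ A2 = X2) ∨ (A1 = X2 ∧ A2 = X1))
    (hpref : ∑ g ∈ A1, u2 g ≤ ∑ g ∈ A2, u2 g) :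
    (∑ g ∈ X2, u1 g + ∑ g ∈ Y1, u2 g ≤ ∑ g ∈ A1, u1 g + ∑ g ∈ A2, u2 g) ∧
    (∑ g ∈ X1, u1 g + ∑ g ∈ Y2, u2 g ≤ ∑ g ∈ X2, u1 g + ∑ g ∈ Y1, u2 g) ∧
    ((∑ g ∈ M, u1 g + ∑ g ∈ M, u2 g) / 2 ≤ ∑ g ∈ A1, u1 g + ∑ g ∈ A2, u2 g) := by
  obtain ⟨hAdisj, hAunion⟩ : Disjoint A2 A1 ∧ A2 ∪ A1 = M := by
    rcases hchoice with ⟨rfl, rfl⟩ | ⟨rfl, rfl⟩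
    · exact ⟨hXdisj.symm, by rwa [union_comm]⟩
    · exact ⟨hXdisj, hXunion⟩
  have hchooser : ∑ g ∈ Y1, u2 g ≤ ∑ g ∈ A2, u2 g := by
    refine sum_le_sum_of_sub_le_sub hYdisj hYunion hAdisj hAunion ?_
    simpa only [abs_of_nonneg (sub_nonneg.2 hpref)] using hYmin A2 A1 hAdisj hAunion
  have hcutter : ∑ g ∈ X2, u1 g ≤ ∑ g ∈ A1, u1 g := by
    rcases hchoice with ⟨rfl, -⟩ | ⟨rfl, -⟩
    · exact hXord
    · exact le_rfl
  have hX : ∑ g ∈ M, u1 g = ∑ g ∈ X1, u1 g + ∑ g ∈ X2, u1 g := hXunion ▸ sum_union hXdisj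
  have hY : ∑ g ∈ M, u2 g = ∑ g ∈ Y1, u2 g + ∑ g ∈ Y2, u2 g := hYunion ▸ sum_union hYdisj
  refine ⟨by linarith, by linarith, by linarith⟩

/-- In cut-and-choose, with agent 1's bipartition `(X1, X2)` at least as
equal (in `u1`) as agent 2's most equal bipartition `(Y1, Y2)` is (in `u2`), the
allocation in which agent 2 gets her weakly preferred bundle among `X1, X2` satisfies
`SW(A) ≥ u1(X2) + u2(Y1) ≥ u1(X1) + u2(Y2)` and hence `SW(A) ≥ (u1(M) + u2(M)) / 2`. -/
theorem stmt_8 {G : Type*} [DecidableEq G] (M : Finset G) (u1 u2 : G → ℝ)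
    (h1nn : ∀ g ∈ M, 0 ≤ u1 g) (h2nn : ∀ g ∈ M, 0 ≤ u2 g)
    (X1 X2 Y1 Y2 : Finset G)
    (hXdisj : Disjoint X1 X2) (hXunion : X1 ∪ X2 = M)
    (hYdisj : Disjoint Y1 Y2) (hYunion : Y1 ∪ Y2 = M)
    (hXord : ∑ g ∈ X2, u1 g ≤ ∑ g ∈ X1, u1 g)
    (hYord : ∑ g ∈ Y2, u2 g ≤ ∑ g ∈ Y1, u2 g)
    (hYmin : ∀ B1 B2 : Finset G, Disjoint B1 B2 → B1 ∪ B2 = M →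
      ∑ g ∈ Y1, u2 g - ∑ g ∈ Y2, u2 g ≤ |∑ g ∈ B1, u2 g - ∑ g ∈ B2, u2 g|)
    (hdiff : ∑ g ∈ X1, u1 g - ∑ g ∈ X2, u1 g ≤ ∑ g ∈ Y1, u2 g - ∑ g ∈ Y2, u2 g)
    (A1 A2 : Finset G)
    (hchoice : (A1 = X1 ∧ A2 = X2) ∨ (A1 = X2 ∧ A2 = X1))
    (hpref : ∑ g ∈ A1, u2 g ≤ ∑ g ∈ A2, u2 g) :
    (∑ g ∈ X2, u1 g + ∑ g ∈ Y1, u2 g ≤ ∑ g ∈ A1, u1 g + ∑ g ∈ A2, u2 g) ∧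
    (∑ g ∈ X1, u1 g + ∑ g ∈ Y2, u2 g ≤ ∑ g ∈ X2, u1 g + ∑ g ∈ Y1, u2 g) ∧
    ((∑ g ∈ M, u1 g + ∑ g ∈ M, u2 g) / 2 ≤ ∑ g ∈ A1, u1 g + ∑ g ∈ A2, u2 g) :=
  stmt_8_general M u1 u2 X1 X2 Y1 Y2 hXdisj hXunion hYdisj hYunion hXord hYmin hdiff A1 A2 hchoice
    hpref
end

section
/- For two agents with additive scaled utilities over mixed goods, the price of EFM (and of EFXM) is at most 3/2: there always exists an EFXM allocation with social welfare at least 2/3 of the optimal social welfare. -/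
open Finset

/-!
Giving every good to the agent who values it more maximises welfare. If both agents get at
least `1/2` in that allocation it is envy-free, hence EFXM; otherwise the optimum is at most
`3/2`, and an EFXM allocation of welfare at least `1` suffices.

Such an allocation always exists. If some agent can top up a set of indivisible goods with a
fraction of the divisible goods to a bundle worth exactly `1/2` to her, cut-and-choose gives
an envy-free one. Otherwise take, for each agent `i`, a set `Xᵢ` of indivisible goods of least
value among those she values above `1/2`, with no worthless goods. Dropping any good of `Xᵢ`
leaves a set worth at most the rest of the goods to her, so `Xᵢ` may go to the other agent
without violating EFXM. If one agent values the other's `Xᵢ` at most `1/2`, giving `Xᵢ` to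
agent `i` is envy-free; if not, the agent `i` with the smaller `uᵢ(Xᵢ)` hands `Xᵢ` over.
-/

section

variable {G H : Type*} {M : Finset G} {D : Finset H}
  {uI uI1 uI2 : G → ℝ} {uD uD1 uD2 : H → ℝ} {A1 A2 B B1 B2 : Finset G × (H → ℝ)}

theorem exists_minimal_sum_gt (M : Finset G) (u : G → ℝ) {c : ℝ}
    (hM : c < ∑ g ∈ M, u g) :
    ∃ X ⊆ M, c < ∑ g ∈ X, u g ∧
      (∀ S ⊆ M, c < ∑ g ∈ S, u g → ∑ g ∈ X, u g ≤ ∑ g ∈ S, u g) ∧ ∀ g ∈ X, u g ≠ 0 := by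
  classical
  obtain ⟨Y, hY, hYmin⟩ := (M.powerset.filter fun S => c < ∑ g ∈ S, u g).exists_min_image
    (fun S => ∑ g ∈ S, u g) ⟨M, mem_filter.mpr ⟨mem_powerset_self M, hM⟩⟩
  rw [mem_filter, mem_powerset] at hY
  refine ⟨Y.filter (u · ≠ 0), (filter_subset _ _).trans hY.1, ?_, fun S hS hcS => ?_,
    fun g hg => (mem_filter.mp hg).2⟩
  · rw [sum_filter_ne_zero]; exact hY.2
  · rw [sum_filter_ne_zero]; exact hYmin S (mem_filter.mpr ⟨mem_powerset.mpr hS, hcS⟩)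

def IsBundle (M : Finset G) (D : Finset H) (B : Finset G × (H → ℝ)) : Prop :=
  B.1 ⊆ M ∧ ∀ h ∈ D, 0 ≤ B.2 h ∧ B.2 h ≤ 1

def HasHalfCut (M : Finset G) (D : Finset H) (u : G → ℝ) (uD : H → ℝ) : Prop :=
  ∃ S ⊆ M, ∑ g ∈ S, u g ≤ 1 / 2 ∧ 1 / 2 ≤ ∑ g ∈ S, u g + ∑ h ∈ D, uD h

theorem Feasible2.symm (hB : Feasible2 M D B1 B2) : Feasible2 M D B2 B1 := by
  obtain ⟨h1, h2, hdisj, h01, h02, hsum⟩ := hB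
  exact ⟨h2, h1, hdisj.symm, h02, h01, fun h hh => by linarith [hsum h hh]⟩

theorem mval_nonneg (hu : ∀ g ∈ M, 0 ≤ uI g) (huD : ∀ h ∈ D, 0 ≤ uD h) (hB : IsBundle M D B) :
    0 ≤ mval uI uD D B :=
  add_nonneg (sum_nonneg fun g hg => hu g (hB.1 hg))
    (sum_nonneg fun h hh => mul_nonneg (hB.2 h hh).1 (huD h hh))

theorem mval_indiv (uI : G → ℝ) (uD : H → ℝ) (X : Finset G) :
    mval uI uD D (X, 0) = ∑ g ∈ X, uI g := by
  simp [mval]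

theorem isBundle_indiv {X : Finset G} (hX : X ⊆ M) : IsBundle M D (X, 0) :=
  ⟨hX, fun _ _ => ⟨le_rfl, zero_le_one⟩⟩

theorem exists_isBundle_mval_eq_half (huD : ∀ h ∈ D, 0 ≤ uD h) {S : Finset G} (hS : S ⊆ M)
    (hle : ∑ g ∈ S, uI g ≤ 1 / 2) (hge : 1 / 2 ≤ ∑ g ∈ S, uI g + ∑ h ∈ D, uD h) :
    ∃ B, IsBundle M D B ∧ mval uI uD D B = 1 / 2 := by
  have hD : 0 ≤ ∑ h ∈ D, uD h := sum_nonneg huD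
  set c := (1 / 2 - ∑ g ∈ S, uI g) / ∑ h ∈ D, uD h
  -- when the divisible goods are worthless, `c = 0` by the `x / 0 = 0` convention and `u(S) = 1/2`
  have hc : c * ∑ h ∈ D, uD h = 1 / 2 - ∑ g ∈ S, uI g := by
    rcases hD.eq_or_lt with h0 | hpos
    · simp only [c, ← h0, mul_zero]; linarith
    · exact div_mul_cancel₀ _ hpos.ne'
  refine ⟨(S, fun _ => c), ⟨hS, fun _ _ => ⟨div_nonneg (by linarith) hD,
    div_le_one_of_le₀ (by linarith) hD⟩⟩, ?_⟩
  simp only [mval, ← mul_sum, hc]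
  ring

theorem mval_add_mval_le_sum_max (h1 : ∀ g ∈ M, 0 ≤ uI1 g) (h3 : ∀ h ∈ D, 0 ≤ uD1 h)
    (hB : Feasible2 M D B1 B2) :
    mval uI1 uD1 D B1 + mval uI2 uD2 D B2 ≤
      ∑ g ∈ M, max (uI1 g) (uI2 g) + ∑ h ∈ D, max (uD1 h) (uD2 h) := by
  classical
  obtain ⟨hB1, hB2, hdisj, hx1, hx2, hx12⟩ := hB
  have hindiv : ∑ g ∈ B1.1, uI1 g + ∑ g ∈ B2.1, uI2 g ≤ ∑ g ∈ M, max (uI1 g) (uI2 g) :=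
    calc ∑ g ∈ B1.1, uI1 g + ∑ g ∈ B2.1, uI2 g
        ≤ ∑ g ∈ B1.1, max (uI1 g) (uI2 g) + ∑ g ∈ B2.1, max (uI1 g) (uI2 g) :=
          add_le_add (sum_le_sum fun _ _ => le_max_left _ _)
            (sum_le_sum fun _ _ => le_max_right _ _)
      _ = ∑ g ∈ B1.1 ∪ B2.1, max (uI1 g) (uI2 g) := (sum_union hdisj).symm
      _ ≤ ∑ g ∈ M, max (uI1 g) (uI2 g) :=
          sum_le_sum_of_subset_of_nonneg (union_subset hB1 hB2)
            fun g hg _ => (h1 g hg).trans (le_max_left _ _)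
  have hdiv : ∑ h ∈ D, B1.2 h * uD1 h + ∑ h ∈ D, B2.2 h * uD2 h ≤
      ∑ h ∈ D, max (uD1 h) (uD2 h) := by
    rw [← sum_add_distrib]
    refine sum_le_sum fun h hh => ?_
    have hmax : 0 ≤ max (uD1 h) (uD2 h) := (h3 h hh).trans (le_max_left _ _)
    linarith [mul_le_mul_of_nonneg_left (le_max_left (uD1 h) (uD2 h)) (hx1 h hh),
      mul_le_mul_of_nonneg_left (le_max_right (uD1 h) (uD2 h)) (hx2 h hh),
      mul_le_mul_of_nonneg_right (hx12 h hh) hmax]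
  simp only [mval]
  linarith

variable [DecidableEq G]

def complBundle (M : Finset G) (B : Finset G × (H → ℝ)) : Finset G × (H → ℝ) :=
  (M \ B.1, fun h => 1 - B.2 h)

def IsEFXMAllocation (M : Finset G) (D : Finset H) (uI1 : G → ℝ) (uD1 : H → ℝ)
    (uI2 : G → ℝ) (uD2 : H → ℝ) (A1 A2 : Finset G × (H → ℝ)) : Prop :=
  Feasible2 M D A1 A2 ∧ EFXMpair uI1 uD1 D A1 A2 ∧ EFXMpair uI2 uD2 D A2 A1

theorem IsEFXMAllocation.swap (hA : IsEFXMAllocation M D uI1 uD1 uI2 uD2 A1 A2) :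
    IsEFXMAllocation M D uI2 uD2 uI1 uD1 A2 A1 :=
  ⟨hA.1.symm, hA.2.2, hA.2.1⟩

theorem efxmPair_of_le (h : mval uI uD D A2 ≤ mval uI uD D A1) : EFXMpair uI uD D A1 A2 :=
  ⟨fun _ => Or.inl h, fun _ => h⟩

theorem efxmPair_of_forall_erase_le (hA2 : OnlyIndiv D A2)
    (h : ∀ g ∈ A2.1, mval uI uD D (A2.1.erase g, A2.2) ≤ mval uI uD D A1) :
    EFXMpair uI uD D A1 A2 :=
  ⟨fun _ => Or.inr h, fun h' => absurd hA2 h'⟩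

theorem IsBundle.compl (hB : IsBundle M D B) : IsBundle M D (complBundle M B) :=
  ⟨sdiff_subset, fun h hh => ⟨sub_nonneg.mpr (hB.2 h hh).2, sub_le_self 1 (hB.2 h hh).1⟩⟩

theorem IsBundle.feasible2 (hB : IsBundle M D B) : Feasible2 M D B (complBundle M B) :=
  ⟨hB.1, sdiff_subset, disjoint_sdiff, fun h hh => (hB.2 h hh).1,
    fun h hh => (hB.compl.2 h hh).1, fun _ _ => (add_sub_cancel _ _).le⟩

theorem mval_add_mval_complBundle (uI : G → ℝ) (uD : H → ℝ) (D : Finset H) (hB : B.1 ⊆ M) :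
    mval uI uD D B + mval uI uD D (complBundle M B) = ∑ g ∈ M, uI g + ∑ h ∈ D, uD h := by
  simp only [mval, complBundle, sum_sdiff_eq_sub hB, sub_mul, one_mul, sum_sub_distrib]
  ring

theorem exists_isBundle_welfare_eq_sum_max (M : Finset G) (D : Finset H)
    (uI1 uI2 : G → ℝ) (uD1 uD2 : H → ℝ) :
    ∃ B, IsBundle M D B ∧ mval uI1 uD1 D B + mval uI2 uD2 D (complBundle M B) =
      ∑ g ∈ M, max (uI1 g) (uI2 g) + ∑ h ∈ D, max (uD1 h) (uD2 h) := by
  refine ⟨(M.filter fun g => uI2 g ≤ uI1 g, fun h => if uD2 h ≤ uD1 h then 1 else 0),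
    ⟨filter_subset _ _, fun h _ => by dsimp only; split_ifs <;> norm_num⟩, ?_⟩
  have hindiv : ∑ g ∈ M, max (uI1 g) (uI2 g) =
      ∑ g ∈ M.filter (fun g => uI2 g ≤ uI1 g), uI1 g +
        ∑ g ∈ M \ M.filter (fun g => uI2 g ≤ uI1 g), uI2 g := by
    simp only [max_def', sum_ite, filter_not]
  have hdiv : ∑ h ∈ D, max (uD1 h) (uD2 h) =
      ∑ h ∈ D, ((if uD2 h ≤ uD1 h then 1 else 0) * uD1 h +
        (1 - if uD2 h ≤ uD1 h then 1 else 0) * uD2 h) :=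
    sum_congr rfl fun h _ => by rw [max_def']; split_ifs <;> ring
  simp only [mval, complBundle, hindiv, hdiv, sum_add_distrib]
  ring

theorem exists_minimal_of_not_hasHalfCut (hu : ∀ g ∈ M, 0 ≤ uI g) (huD : ∀ h ∈ D, 0 ≤ uD h)
    (hs : ∑ g ∈ M, uI g + ∑ h ∈ D, uD h = 1) (hcut : ¬HasHalfCut M D uI uD) :
    ∃ X ⊆ M, 1 / 2 < ∑ g ∈ X, uI g ∧
      (∀ S ⊆ M, 1 / 2 < ∑ g ∈ S, uI g → ∑ g ∈ X, uI g ≤ ∑ g ∈ S, uI g) ∧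
      ∀ g ∈ X, ∑ g' ∈ X.erase g, uI g' ≤ 1 - ∑ g' ∈ X, uI g' := by
  have hD : 0 ≤ ∑ h ∈ D, uD h := sum_nonneg huD
  have hM : 1 / 2 < ∑ g ∈ M, uI g := by
    by_contra! h
    exact hcut ⟨M, subset_rfl, h, by linarith⟩
  obtain ⟨X, hXM, hX, hmin, hne⟩ := exists_minimal_sum_gt M uI hM
  refine ⟨X, hXM, hX, hmin, fun g hg => ?_⟩
  have hpos : 0 < uI g := (hu g (hXM hg)).lt_of_ne' (hne g hg)
  have herase := sum_erase_add X uI hg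
  have hsub : X.erase g ⊆ M := (erase_subset g X).trans hXM
  have hle : ∑ g' ∈ X.erase g, uI g' ≤ 1 / 2 := by
    by_contra! h
    linarith [hmin _ hsub h]
  have hlt : ∑ g' ∈ X.erase g, uI g' + ∑ h ∈ D, uD h < 1 / 2 := by
    by_contra! h
    exact hcut ⟨_, hsub, hle, h⟩
  have hcompl := hmin (M \ X.erase g) sdiff_subset (by rw [sum_sdiff_eq_sub hsub]; linarith)
  rw [sum_sdiff_eq_sub hsub] at hcompl
  linarith

section Normalized

variable (hs1 : ∑ g ∈ M, uI1 g + ∑ h ∈ D, uD1 h = 1)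
  (hs2 : ∑ g ∈ M, uI2 g + ∑ h ∈ D, uD2 h = 1)
include hs1 hs2

theorem isEFXMAllocation_of_half_le (hB : IsBundle M D B) (h1 : 1 / 2 ≤ mval uI1 uD1 D B)
    (h2 : 1 / 2 ≤ mval uI2 uD2 D (complBundle M B)) :
    IsEFXMAllocation M D uI1 uD1 uI2 uD2 B (complBundle M B) :=
  ⟨hB.feasible2, efxmPair_of_le (by linarith [mval_add_mval_complBundle uI1 uD1 D hB.1]),
    efxmPair_of_le (by linarith [mval_add_mval_complBundle uI2 uD2 D hB.1])⟩

theorem exists_isEFXMAllocation_of_hasHalfCut (h3 : ∀ h ∈ D, 0 ≤ uD1 h)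
    (hcut : HasHalfCut M D uI1 uD1) :
    ∃ A1 A2, IsEFXMAllocation M D uI1 uD1 uI2 uD2 A1 A2 ∧
      1 ≤ mval uI1 uD1 D A1 + mval uI2 uD2 D A2 := by
  obtain ⟨S, hSM, hle, hge⟩ := hcut
  obtain ⟨B, hB, hhalf⟩ := exists_isBundle_mval_eq_half h3 hSM hle hge
  have e1 := mval_add_mval_complBundle uI1 uD1 D hB.1
  have e2 := mval_add_mval_complBundle uI2 uD2 D hB.1
  by_cases hchoose : 1 / 2 ≤ mval uI2 uD2 D (complBundle M B)
  · exact ⟨B, _, isEFXMAllocation_of_half_le hs1 hs2 hB hhalf.ge hchoose, by linarith⟩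
  · exact ⟨_, B, (isEFXMAllocation_of_half_le hs2 hs1 hB (by linarith) (by linarith)).swap,
      by linarith⟩

theorem exists_isEFXMAllocation_of_sum_erase_le {X : Finset G} (hX : X ⊆ M)
    (hefx : ∀ g ∈ X, ∑ g' ∈ X.erase g, uI1 g' ≤ 1 - ∑ g' ∈ X, uI1 g')
    (hhalf : 1 / 2 ≤ ∑ g ∈ X, uI2 g) (hle : ∑ g ∈ X, uI1 g ≤ ∑ g ∈ X, uI2 g) :
    ∃ A1 A2, IsEFXMAllocation M D uI1 uD1 uI2 uD2 A1 A2 ∧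
      1 ≤ mval uI1 uD1 D A1 + mval uI2 uD2 D A2 := by
  have e1 := mval_add_mval_complBundle uI1 uD1 D (B := (X, 0)) hX
  have e2 := mval_add_mval_complBundle uI2 uD2 D (B := (X, 0)) hX
  rw [mval_indiv] at e1 e2
  refine ⟨complBundle M (X, 0), (X, 0), ⟨(isBundle_indiv hX).feasible2.symm, ?_,
    efxmPair_of_le (by rw [mval_indiv]; linarith)⟩, by rw [mval_indiv]; linarith⟩
  refine efxmPair_of_forall_erase_le (fun _ _ => rfl) fun g hg => ?_
  rw [mval_indiv]
  linarith [hefx g hg]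

theorem exists_isEFXMAllocation_of_not_hasHalfCut (h1 : ∀ g ∈ M, 0 ≤ uI1 g)
    (h2 : ∀ g ∈ M, 0 ≤ uI2 g) (h3 : ∀ h ∈ D, 0 ≤ uD1 h) (h4 : ∀ h ∈ D, 0 ≤ uD2 h)
    (hcut1 : ¬HasHalfCut M D uI1 uD1) (hcut2 : ¬HasHalfCut M D uI2 uD2) :
    ∃ A1 A2, IsEFXMAllocation M D uI1 uD1 uI2 uD2 A1 A2 ∧
      1 ≤ mval uI1 uD1 D A1 + mval uI2 uD2 D A2 := by
  obtain ⟨X1, hX1M, hX1, hmin1, hefx1⟩ := exists_minimal_of_not_hasHalfCut h1 h3 hs1 hcut1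
  obtain ⟨X2, hX2M, hX2, hmin2, hefx2⟩ := exists_minimal_of_not_hasHalfCut h2 h4 hs2 hcut2
  by_cases h21 : ∑ g ∈ X1, uI2 g ≤ 1 / 2
  · have e := mval_add_mval_complBundle uI2 uD2 D (B := (X1, 0)) hX1M
    rw [mval_indiv] at e
    exact ⟨_, _, isEFXMAllocation_of_half_le hs1 hs2 (isBundle_indiv hX1M)
      (by rw [mval_indiv]; linarith) (by linarith), by rw [mval_indiv]; linarith⟩
  by_cases h12 : ∑ g ∈ X2, uI1 g ≤ 1 / 2
  · have e := mval_add_mval_complBundle uI1 uD1 D (B := (X2, 0)) hX2M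
    rw [mval_indiv] at e
    exact ⟨_, _, (isEFXMAllocation_of_half_le hs2 hs1 (isBundle_indiv hX2M)
      (by rw [mval_indiv]; linarith) (by linarith)).swap, by rw [mval_indiv]; linarith⟩
  push Not at h21 h12
  rcases le_total (∑ g ∈ X1, uI1 g) (∑ g ∈ X2, uI2 g) with hle | hle
  · exact exists_isEFXMAllocation_of_sum_erase_le hs1 hs2 hX1M hefx1 h21.le
      (hle.trans (hmin2 X1 hX1M h21))
  · obtain ⟨A2, A1, hA, hw⟩ := exists_isEFXMAllocation_of_sum_erase_le hs2 hs1 hX2M hefx2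
      h12.le (hle.trans (hmin1 X2 hX2M h12))
    exact ⟨A1, A2, hA.swap, by linarith⟩

theorem exists_isEFXMAllocation_one_le_welfare (h1 : ∀ g ∈ M, 0 ≤ uI1 g)
    (h2 : ∀ g ∈ M, 0 ≤ uI2 g) (h3 : ∀ h ∈ D, 0 ≤ uD1 h) (h4 : ∀ h ∈ D, 0 ≤ uD2 h) :
    ∃ A1 A2, IsEFXMAllocation M D uI1 uD1 uI2 uD2 A1 A2 ∧
      1 ≤ mval uI1 uD1 D A1 + mval uI2 uD2 D A2 := by
  by_cases hcut1 : HasHalfCut M D uI1 uD1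
  · exact exists_isEFXMAllocation_of_hasHalfCut hs1 hs2 h3 hcut1
  by_cases hcut2 : HasHalfCut M D uI2 uD2
  · obtain ⟨A2, A1, hA, hw⟩ := exists_isEFXMAllocation_of_hasHalfCut hs2 hs1 h4 hcut2
    exact ⟨A1, A2, hA.swap, by linarith⟩
  exact exists_isEFXMAllocation_of_not_hasHalfCut hs1 hs2 h1 h2 h3 h4 hcut1 hcut2

end Normalized

end

/-- For two agents with additive scaled utilities over mixed goods, there
always exists an EFXM (hence EFM) allocation with social welfare at least `2/3` of the
optimal social welfare, so the price of EFM (and of EFXM) is at most `3/2`. -/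
theorem stmt_9 {G H : Type*} [DecidableEq G] (M : Finset G) (D : Finset H)
    (uI1 uI2 : G → ℝ) (uD1 uD2 : H → ℝ)
    (h1 : ∀ g ∈ M, 0 ≤ uI1 g) (h2 : ∀ g ∈ M, 0 ≤ uI2 g)
    (h3 : ∀ h ∈ D, 0 ≤ uD1 h) (h4 : ∀ h ∈ D, 0 ≤ uD2 h)
    (hs1 : ∑ g ∈ M, uI1 g + ∑ h ∈ D, uD1 h = 1)
    (hs2 : ∑ g ∈ M, uI2 g + ∑ h ∈ D, uD2 h = 1) :
    ∃ A1 A2 : Finset G × (H → ℝ), Feasible2 M D A1 A2 ∧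
      EFXMpair uI1 uD1 D A1 A2 ∧ EFXMpair uI2 uD2 D A2 A1 ∧
      ∀ B1 B2 : Finset G × (H → ℝ), Feasible2 M D B1 B2 →
        mval uI1 uD1 D B1 + mval uI2 uD2 D B2 ≤
          (3 / 2 : ℝ) * (mval uI1 uD1 D A1 + mval uI2 uD2 D A2) := by
  obtain ⟨O, hO, hOW⟩ := exists_isBundle_welfare_eq_sum_max M D uI1 uI2 uD1 uD2
  have hopt : ∀ B1 B2, Feasible2 M D B1 B2 → mval uI1 uD1 D B1 + mval uI2 uD2 D B2 ≤
      mval uI1 uD1 D O + mval uI2 uD2 D (complBundle M O) :=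
    fun B1 B2 hB => hOW ▸ mval_add_mval_le_sum_max h1 h3 hB
  by_cases hhalf : 1 / 2 ≤ mval uI1 uD1 D O ∧ 1 / 2 ≤ mval uI2 uD2 D (complBundle M O)
  · obtain ⟨hF, hE1, hE2⟩ := isEFXMAllocation_of_half_le hs1 hs2 hO hhalf.1 hhalf.2
    refine ⟨O, _, hF, hE1, hE2, fun B1 B2 hB => ?_⟩
    linarith [hopt B1 B2 hB]
  · have hW : mval uI1 uD1 D O + mval uI2 uD2 D (complBundle M O) ≤ 3 / 2 := by
      have e1 := mval_add_mval_complBundle uI1 uD1 D hO.1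
      have e2 := mval_add_mval_complBundle uI2 uD2 D hO.1
      have n1 := mval_nonneg h1 h3 hO.compl
      have n2 := mval_nonneg h2 h4 hO
      rw [not_and_or, not_le, not_le] at hhalf
      rcases hhalf with h | h <;> linarith
    obtain ⟨A1, A2, ⟨hF, hE1, hE2⟩, hA⟩ :=
      exists_isEFXMAllocation_one_le_welfare hs1 hs2 h1 h2 h3 h4
    exact ⟨A1, A2, hF, hE1, hE2, fun B1 B2 hB => by linarith [hopt B1 B2 hB]⟩
end

section
/- Let agent 2 partition T1 into two subsets T_A, T_B maximizing min(u2(T_A), u2(T_B)) over all bipartitions of T1, with SP(T_A) ≥ SP(T_B) where SP(S) = Σ_{g∈S}(u1(g) − u2(g)). Then in the allocation giving T_A to agent 1 and T_B ∪ T2 to agent 2: (a) agent 2 does not strongly envy agent 1, and (b) the social welfare is at least 1 + y/2, where y = SP(T1), for scaled utilities. -/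
open Finset

/-- With scaled utilities, if `(T_A, T_B)` is a bipartition of `T1`
maximizing `min(u2(T_A), u2(T_B))` and `SP(T_A) ≥ SP(T_B)`, then in the allocation
`(T_A, T_B ∪ T2)`: (a) agent 2 does not strongly envy agent 1, and (b) the social
welfare is at least `1 + y/2` where `y = SP(T1)`. -/
theorem stmt_12 {G : Type*} [DecidableEq G] (M : Finset G) (u1 u2 : G → ℝ)
    (h1nn : ∀ g ∈ M, 0 ≤ u1 g) (h2nn : ∀ g ∈ M, 0 ≤ u2 g)
    (hs1 : ∑ g ∈ M, u1 g = 1) (hs2 : ∑ g ∈ M, u2 g = 1)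
    (T1 T2 : Finset G) (hT1 : T1 = M.filter (fun g => u2 g ≤ u1 g)) (hT2 : T2 = M \ T1)
    (TA TB : Finset G) (hdisj : Disjoint TA TB) (hunion : TA ∪ TB = T1)
    (hmax : ∀ SA SB : Finset G, Disjoint SA SB → SA ∪ SB = T1 →
      min (∑ g ∈ SA, u2 g) (∑ g ∈ SB, u2 g) ≤ min (∑ g ∈ TA, u2 g) (∑ g ∈ TB, u2 g))
    (hSP : ∑ g ∈ TB, (u1 g - u2 g) ≤ ∑ g ∈ TA, (u1 g - u2 g)) :
    ¬ StrongEnvy u2 (TB ∪ T2) TA ∧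
    1 + (∑ g ∈ T1, (u1 g - u2 g)) / 2 ≤ ∑ g ∈ TA, u1 g + ∑ g ∈ TB ∪ T2, u2 g := by

  have hT1M : T1 ⊆ M := by rw [hT1]; exact Finset.filter_subset _ _
  have hTAT1 : TA ⊆ T1 := by rw [← hunion]; exact Finset.subset_union_left
  have hTBT1 : TB ⊆ T1 := by rw [← hunion]; exact Finset.subset_union_right
  have hTAM : TA ⊆ M := hTAT1.trans hT1M
  have hTBM : TB ⊆ M := hTBT1.trans hT1M
  have hT2M : T2 ⊆ M := by rw [hT2]; exact Finset.sdiff_subset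
  have hTBT2 : Disjoint TB T2 := by
    rw [hT2]; exact Finset.disjoint_sdiff.mono_left hTBT1
  have hsumBT2 : ∑ g ∈ TB ∪ T2, u2 g = ∑ g ∈ TB, u2 g + ∑ g ∈ T2, u2 g :=
    Finset.sum_union hTBT2
  have hT2sum : ∑ g ∈ T2, u2 g + ∑ g ∈ T1, u2 g = 1 := by
    rw [hT2, Finset.sum_sdiff hT1M, hs2]
  have hT1AB : ∑ g ∈ T1, u2 g = ∑ g ∈ TA, u2 g + ∑ g ∈ TB, u2 g := by
    rw [← hunion, Finset.sum_union hdisj]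
  have hT2nn : 0 ≤ ∑ g ∈ T2, u2 g := Finset.sum_nonneg fun g hg => h2nn g (hT2M hg)
  constructor
  · rintro ⟨⟨g0, hg0⟩, henvy⟩
    by_cases hpos : ∃ g ∈ TA, 0 < u2 g
    · obtain ⟨g, hg, hgpos⟩ := hpos
      have hgTB : g ∉ TB := Finset.disjoint_left.mp hdisj hg
      have hdisj' : Disjoint (TA.erase g) (insert g TB) := by
        rw [Finset.disjoint_insert_right]
        exact ⟨Finset.notMem_erase g TA, hdisj.mono_left (Finset.erase_subset g TA)⟩
      have hun' : TA.erase g ∪ insert g TB = T1 := by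
        rw [Finset.union_insert, ← Finset.insert_union, Finset.insert_erase hg, hunion]
      have hkey := hmax _ _ hdisj' hun'
      have hA : ∑ x ∈ TA, u2 x = u2 g + ∑ x ∈ TA.erase g, u2 x :=
        (Finset.add_sum_erase TA u2 hg).symm
      have hB : ∑ x ∈ insert g TB, u2 x = u2 g + ∑ x ∈ TB, u2 x :=
        Finset.sum_insert hgTB
      have he := henvy g hg
      rw [hsumBT2] at he
      set a := ∑ x ∈ TA.erase g, u2 x
      set b := ∑ x ∈ TB, u2 x
      rw [hB, hA] at hkey
      have h1 : min (u2 g + a) b = b := min_eq_right (by linarith)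
      have h2 : b < min a (u2 g + b) := lt_min (by linarith) (by linarith)
      rw [h1] at hkey
      linarith
    · push_neg at hpos
      have hAzero : ∑ x ∈ TA, u2 x = 0 := by
        apply le_antisymm (Finset.sum_nonpos hpos)
        exact Finset.sum_nonneg fun g hg => h2nn g (hTAM hg)
      have he := henvy g0 hg0
      have herle : ∑ x ∈ TA.erase g0, u2 x ≤ ∑ x ∈ TA, u2 x :=
        Finset.sum_le_sum_of_subset_of_nonneg (Finset.erase_subset _ _)
          (fun g hg _ => h2nn g (hTAM hg))
      have hBnn : 0 ≤ ∑ x ∈ TB ∪ T2, u2 x :=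
        Finset.sum_nonneg fun g hg => h2nn g ((Finset.union_subset hTBM hT2M) hg)
      linarith
  · rw [hsumBT2, ← hunion, Finset.sum_union hdisj]
    have h1 : ∑ g ∈ TA, (u1 g - u2 g) = ∑ g ∈ TA, u1 g - ∑ g ∈ TA, u2 g :=
      Finset.sum_sub_distrib _ _
    have h2 : ∑ g ∈ TB, (u1 g - u2 g) = ∑ g ∈ TB, u1 g - ∑ g ∈ TB, u2 g :=
      Finset.sum_sub_distrib _ _
    linarith
end

section
/- For n agents with additive utilities over mixed goods (indivisible goods M and divisible goods D), there exists a partial EFXM allocation A = (A1, …, An) with social welfare SW(A) ≥ (1/(2n+1)) · Σ_{i∈N} u_i(M ∪ D). -/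
open Finset

/-- Feasible (possibly partial) allocation of mixed goods among `n` agents. -/
def FeasibleN {G H : Type*} {n : ℕ} (M : Finset G) (D : Finset H)
    (A : Fin n → Finset G × (H → ℝ)) : Prop :=
  (∀ i, (A i).1 ⊆ M) ∧ (∀ i j, i ≠ j → Disjoint (A i).1 (A j).1) ∧
  (∀ i, ∀ h ∈ D, 0 ≤ (A i).2 h) ∧ (∀ h ∈ D, ∑ i, (A i).2 h ≤ 1)

/-- An allocation among `n` agents is EFXM. -/
def EFXM {G H : Type*} [DecidableEq G] {n : ℕ} (uI : Fin n → G → ℝ)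
    (uD : Fin n → H → ℝ) (D : Finset H) (A : Fin n → Finset G × (H → ℝ)) : Prop :=
  ∀ i j,
    (OnlyIndiv D (A j) →
      (mval (uI i) (uD i) D (A j) ≤ mval (uI i) (uD i) D (A i) ∨
        ∀ g ∈ (A j).1,
          mval (uI i) (uD i) D ((A j).1.erase g, (A j).2) ≤ mval (uI i) (uD i) D (A i))) ∧
    (¬ OnlyIndiv D (A j) → mval (uI i) (uD i) D (A j) ≤ mval (uI i) (uD i) D (A i))

namespace Stmt14
open scoped Classical
set_option linter.unusedSectionVars false

section Defs
variable {G H : Type*} [DecidableEq G] {n : ℕ}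
variable (M : Finset G) (D : Finset H) (uI : Fin n → G → ℝ) (uD : Fin n → H → ℝ)

noncomputable def uIv (i : Fin n) (T : Finset G) : ℝ := ∑ g ∈ T, uI i g
noncomputable def dv (i : Fin n) : ℝ := ∑ h ∈ D, uD i h

noncomputable def ratios (S : Fin n → Finset G) (E : Finset (Fin n)) : Finset ℝ :=
  insert ((E.card : ℝ)⁻¹)
    ((univ.filter (fun i => i ∉ E ∧ 0 < dv D uD i)).image (fun i => uIv uI i (S i) / dv D uD i))

lemma ratios_nonempty (S : Fin n → Finset G) (E : Finset (Fin n)) :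
    (ratios D uI uD S E).Nonempty := ⟨_, mem_insert_self _ _⟩

noncomputable def sig (S : Fin n → Finset G) (E : Finset (Fin n)) : ℝ :=
  if E.Nonempty then (ratios D uI uD S E).min' (ratios_nonempty D uI uD S E) else 0

noncomputable def aval (S : Fin n → Finset G) (E : Finset (Fin n)) (i : Fin n) : ℝ :=
  uIv uI i (S i) + (if i ∈ E then sig D uI uD S E * dv D uD i else 0)

noncomputable def SWv (S : Fin n → Finset G) (E : Finset (Fin n)) : ℝ :=
  ∑ i, aval D uI uD S E i

def Valid (S : Fin n → Finset G) (E : Finset (Fin n)) : Prop :=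
  (∀ i, S i ⊆ M) ∧ (∀ i j, i ≠ j → Disjoint (S i) (S j)) ∧
  (∀ i ∈ E, S i = ∅) ∧ (∀ i ∈ E, 0 < dv D uD i) ∧
  (∀ i j (g : G), g ∈ S j → uIv uI i ((S j).erase g) ≤ aval D uI uD S E i)

end Defs

section Lemmas
variable {G H : Type*} [DecidableEq G] {n : ℕ}
variable {M : Finset G} {D : Finset H} {uI : Fin n → G → ℝ} {uD : Fin n → H → ℝ}
variable (hInn : ∀ i, ∀ g ∈ M, 0 ≤ uI i g) (hDnn : ∀ i, ∀ h ∈ D, 0 ≤ uD i h)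
include hInn hDnn

lemma uIv_nonneg {i : Fin n} {T : Finset G} (hT : T ⊆ M) : 0 ≤ uIv uI i T :=
  Finset.sum_nonneg fun g hg => hInn i g (hT hg)

lemma uIv_mono {i : Fin n} {T T' : Finset G} (hT : T ⊆ T') (hT' : T' ⊆ M) :
    uIv uI i T ≤ uIv uI i T' :=
  Finset.sum_le_sum_of_subset_of_nonneg hT fun g hg _ => hInn i g (hT' hg)

lemma dv_nonneg (i : Fin n) : 0 ≤ dv D uD i :=
  Finset.sum_nonneg fun h hh => hDnn i h hh

lemma sig_nonneg {S : Fin n → Finset G} {E : Finset (Fin n)} (hSM : ∀ i, S i ⊆ M) :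
    0 ≤ sig D uI uD S E := by
  unfold sig
  split
  · apply Finset.le_min'
    intro y hy
    rcases Finset.mem_insert.mp hy with h | h
    · rw [h]; positivity
    · obtain ⟨i, hi, rfl⟩ := Finset.mem_image.mp h
      have := (Finset.mem_filter.mp hi).2
      exact div_nonneg (uIv_nonneg hInn hDnn (hSM i)) (le_of_lt this.2)
  · exact le_refl 0

omit hInn hDnn in
lemma sig_le_inv_card {S : Fin n → Finset G} {E : Finset (Fin n)} (hE : E.Nonempty) :
    sig D uI uD S E ≤ ((E.card : ℝ))⁻¹ := by
  unfold sig
  rw [if_pos hE]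
  exact Finset.min'_le _ _ (mem_insert_self _ _)

omit hInn hDnn in
lemma sig_le_ratio {S : Fin n → Finset G} {E : Finset (Fin n)} (hE : E.Nonempty)
    {i : Fin n} (hiE : i ∉ E) (hd : 0 < dv D uD i) :
    sig D uI uD S E ≤ uIv uI i (S i) / dv D uD i := by
  unfold sig
  rw [if_pos hE]
  exact Finset.min'_le _ _ (mem_insert_of_mem (Finset.mem_image.mpr
    ⟨i, Finset.mem_filter.mpr ⟨mem_univ i, hiE, hd⟩, rfl⟩))

lemma sig_mul_d_le {S : Fin n → Finset G} {E : Finset (Fin n)} (hSM : ∀ i, S i ⊆ M)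
    {i : Fin n} (hiE : i ∉ E) :
    sig D uI uD S E * dv D uD i ≤ uIv uI i (S i) := by
  rcases eq_or_lt_of_le (dv_nonneg hInn hDnn i) with h | h
  · rw [← h, mul_zero]
    exact uIv_nonneg hInn hDnn (hSM i)
  · rcases E.eq_empty_or_nonempty with rfl | hE
    · rw [sig, if_neg (by simp), zero_mul]
      exact uIv_nonneg hInn hDnn (hSM i)
    · have h2 := sig_le_ratio (S := S) (uI := uI) (D := D) (uD := uD) hE hiE h
      calc sig D uI uD S E * dv D uD i ≤ (uIv uI i (S i) / dv D uD i) * dv D uD i :=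
            mul_le_mul_of_nonneg_right h2 (le_of_lt h)
        _ = uIv uI i (S i) := div_mul_cancel₀ _ (ne_of_gt h)

omit hInn hDnn in
lemma sig_card_mul_le_one {S : Fin n → Finset G} {E : Finset (Fin n)} :
    sig D uI uD S E * E.card ≤ 1 := by
  rcases E.eq_empty_or_nonempty with rfl | hE
  · simp [sig]
  · have h1 := sig_le_inv_card (S := S) (uI := uI) (D := D) (uD := uD) hE
    have hc : (0:ℝ) < E.card := by exact_mod_cast card_pos.mpr hE
    calc sig D uI uD S E * E.card ≤ ((E.card:ℝ))⁻¹ * E.card :=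
          mul_le_mul_of_nonneg_right h1 (le_of_lt hc)
      _ = 1 := inv_mul_cancel₀ (ne_of_gt hc)

lemma aval_nonneg {S : Fin n → Finset G} {E : Finset (Fin n)} (hSM : ∀ i, S i ⊆ M)
    (i : Fin n) : 0 ≤ aval D uI uD S E i := by
  unfold aval
  have h1 := uIv_nonneg (i := i) hInn hDnn (hSM i)
  have h2 : (0:ℝ) ≤ (if i ∈ E then sig D uI uD S E * dv D uD i else 0) := by
    split
    · exact mul_nonneg (sig_nonneg hInn hDnn hSM) (dv_nonneg hInn hDnn i)
    · exact le_refl 0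
  linarith

lemma sigd_le_aval {S : Fin n → Finset G} {E : Finset (Fin n)} (hSM : ∀ i, S i ⊆ M)
    (i : Fin n) :
    sig D uI uD S E * dv D uD i ≤ aval D uI uD S E i := by
  unfold aval
  by_cases hi : i ∈ E
  · rw [if_pos hi]
    have := uIv_nonneg (i := i) hInn hDnn (hSM i)
    linarith
  · rw [if_neg hi, add_zero]
    exact sig_mul_d_le hInn hDnn hSM hi

omit hInn hDnn in
lemma aval_of_mem {S : Fin n → Finset G} {E : Finset (Fin n)}
    (hSE : ∀ i ∈ E, S i = ∅) {i : Fin n} (hi : i ∈ E) :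
    aval D uI uD S E i = sig D uI uD S E * dv D uD i := by
  unfold aval
  rw [if_pos hi, hSE i hi]
  simp [uIv]

omit hInn hDnn in
lemma SW_eq {S : Fin n → Finset G} {E : Finset (Fin n)} :
    SWv D uI uD S E = (∑ i, uIv uI i (S i)) + sig D uI uD S E * ∑ i ∈ E, dv D uD i := by
  unfold SWv aval
  rw [Finset.sum_add_distrib, Finset.mul_sum]
  congr 1
  rw [← Finset.sum_filter]
  apply Finset.sum_congr
  · ext i; simp
  · intros; rfl

lemma SW_nonneg {S : Fin n → Finset G} {E : Finset (Fin n)} (hSM : ∀ i, S i ⊆ M) :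
    0 ≤ SWv D uI uD S E :=
  Finset.sum_nonneg fun i _ => aval_nonneg hInn hDnn hSM i

end Lemmas

section Alloc
variable {G H : Type*} [DecidableEq G] {n : ℕ}
variable {M : Finset G} {D : Finset H} {uI : Fin n → G → ℝ} {uD : Fin n → H → ℝ}

noncomputable def allocOf (D : Finset H) (uI : Fin n → G → ℝ) (uD : Fin n → H → ℝ)
    (S : Fin n → Finset G) (E : Finset (Fin n)) : Fin n → Finset G × (H → ℝ) :=
  fun i => (S i, fun _ => if i ∈ E then sig D uI uD S E else 0)

lemma mval_alloc (S : Fin n → Finset G) (E : Finset (Fin n)) (i j : Fin n) :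
    mval (uI i) (uD i) D (allocOf D uI uD S E j) =
      uIv uI i (S j) + (if j ∈ E then sig D uI uD S E * dv D uD i else 0) := by
  by_cases hj : j ∈ E <;>
    simp [mval, allocOf, uIv, dv, hj, Finset.mul_sum]

lemma mval_alloc_own (S : Fin n → Finset G) (E : Finset (Fin n)) (i : Fin n) :
    mval (uI i) (uD i) D (allocOf D uI uD S E i) = aval D uI uD S E i :=
  mval_alloc S E i i

lemma feasible_alloc (hInn : ∀ i, ∀ g ∈ M, 0 ≤ uI i g) (hDnn : ∀ i, ∀ h ∈ D, 0 ≤ uD i h)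
    {S : Fin n → Finset G} {E : Finset (Fin n)} (hv : Valid M D uI uD S E) :
    FeasibleN M D (allocOf D uI uD S E) := by
  obtain ⟨h1, h2, h3, h4, h5⟩ := hv
  refine ⟨h1, fun i j hij => h2 i j hij, ?_, ?_⟩
  · intro i h _
    dsimp [allocOf]
    split
    · exact sig_nonneg hInn hDnn h1
    · exact le_refl 0
  · intro h _
    dsimp [allocOf]
    rw [Finset.sum_ite_mem, Finset.univ_inter, Finset.sum_const, nsmul_eq_mul, mul_comm]
    exact sig_card_mul_le_one

lemma efxm_alloc (hInn : ∀ i, ∀ g ∈ M, 0 ≤ uI i g) (hDnn : ∀ i, ∀ h ∈ D, 0 ≤ uD i h)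
    {S : Fin n → Finset G} {E : Finset (Fin n)} (hv : Valid M D uI uD S E) :
    EFXM uI uD D (allocOf D uI uD S E) := by
  obtain ⟨h1, h2, h3, h4, h5⟩ := hv
  intro i j
  constructor
  · intro hOI
    by_cases hj : j ∈ E
    · left
      rw [mval_alloc, mval_alloc_own, h3 j hj]
      have : uIv uI i (∅ : Finset G) = 0 := by simp [uIv]
      rw [this]
      have hb : (if j ∈ E then sig D uI uD S E * dv D uD i else 0) = 0 := by
        rw [if_pos hj]
        by_cases hDe : sig D uI uD S E = 0
        · rw [hDe, zero_mul]
        · -- OnlyIndiv forces each h ∈ D to have coefficient 0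
          have : ∀ h ∈ D, (if j ∈ E then sig D uI uD S E else 0) = (0:ℝ) := fun h hh => hOI h hh
          have hdz : dv D uD i = 0 := by
            by_cases hD : D.Nonempty
            · obtain ⟨h0, hh0⟩ := hD
              have := this h0 hh0
              rw [if_pos hj] at this
              exact absurd this hDe
            · rw [Finset.not_nonempty_iff_eq_empty] at hD
              simp [dv, hD]
          rw [hdz, mul_zero]
      rw [hb, zero_add]
      exact aval_nonneg hInn hDnn h1 i
    · right
      intro g hg
      have hg' : g ∈ S j := hg
      rw [mval_alloc_own]
      have heq : mval (uI i) (uD i) D ((allocOf D uI uD S E j).1.erase g, (allocOf D uI uD S E j).2)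
          = uIv uI i ((S j).erase g) := by
        simp [mval, allocOf, uIv, hj]
      rw [heq]
      exact h5 i j g hg'
  · intro hOI
    rw [mval_alloc, mval_alloc_own]
    by_cases hj : j ∈ E
    · rw [if_pos hj, h3 j hj]
      have : uIv uI i (∅ : Finset G) = 0 := by simp [uIv]
      rw [this, zero_add]
      exact sigd_le_aval hInn hDnn h1 i
    · exfalso
      apply hOI
      intro h hh
      dsimp [allocOf]
      rw [if_neg hj]

end Alloc

section Max
variable {G H : Type*} [DecidableEq G] {n : ℕ}
variable {M : Finset G} {D : Finset H} {uI : Fin n → G → ℝ} {uD : Fin n → H → ℝ}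

lemma valid_empty : Valid M D uI uD (fun _ => (∅ : Finset G)) (∅ : Finset (Fin n)) := by
  refine ⟨fun i => empty_subset M, fun i j _ => disjoint_empty_left _, ?_, ?_, ?_⟩
  · intro i hi; exact absurd hi (notMem_empty i)
  · intro i hi; exact absurd hi (notMem_empty i)
  · intro i j g hg; exact absurd hg (notMem_empty g)

lemma mem_cand_iff {S : Fin n → Finset G} {E : Finset (Fin n)} (hv : Valid M D uI uD S E) :
    (S, E) ∈ ((Fintype.piFinset fun _ : Fin n => M.powerset) ×ˢ
        (univ : Finset (Fin n)).powerset).filter (fun p => Valid M D uI uD p.1 p.2) := by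
  rw [Finset.mem_filter, Finset.mem_product]
  refine ⟨⟨?_, ?_⟩, hv⟩
  · rw [Fintype.mem_piFinset]
    intro i
    rw [Finset.mem_powerset]
    exact hv.1 i
  · exact Finset.mem_powerset.mpr (subset_univ E)

lemma exists_lexmax :
    ∃ (S : Fin n → Finset G) (E : Finset (Fin n)), Valid M D uI uD S E ∧
      (∀ S' E', Valid M D uI uD S' E' → SWv D uI uD S' E' ≤ SWv D uI uD S E) ∧
      (∀ S' E', Valid M D uI uD S' E' → SWv D uI uD S E ≤ SWv D uI uD S' E' →
        E'.card ≤ E.card) := by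
  classical
  set cand := ((Fintype.piFinset fun _ : Fin n => M.powerset) ×ˢ
      (univ : Finset (Fin n)).powerset).filter (fun p => Valid M D uI uD p.1 p.2) with hcand
  have hne : cand.Nonempty := ⟨_, mem_cand_iff valid_empty⟩
  obtain ⟨p1, hp1, hmax1⟩ := cand.exists_max_image (fun p => SWv D uI uD p.1 p.2) hne
  set cand2 := cand.filter (fun p => SWv D uI uD p1.1 p1.2 ≤ SWv D uI uD p.1 p.2) with hcand2
  have hne2 : cand2.Nonempty := ⟨p1, by rw [hcand2, Finset.mem_filter]; exact ⟨hp1, le_refl _⟩⟩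
  obtain ⟨p2, hp2, hmax2⟩ := cand2.exists_max_image (fun p => p.2.card) hne2
  rw [hcand2, Finset.mem_filter] at hp2
  refine ⟨p2.1, p2.2, (Finset.mem_filter.mp hp2.1).2, ?_, ?_⟩
  · intro S' E' hv'
    calc SWv D uI uD S' E' ≤ SWv D uI uD p1.1 p1.2 := hmax1 _ (mem_cand_iff hv')
      _ ≤ SWv D uI uD p2.1 p2.2 := hp2.2
  · intro S' E' hv' hge
    have h1 : SWv D uI uD p1.1 p1.2 ≤ SWv D uI uD S' E' :=
      le_trans hp2.2 hge
    have : (S', E') ∈ cand2 := by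
      rw [hcand2, Finset.mem_filter]
      exact ⟨mem_cand_iff hv', h1⟩
    exact hmax2 _ this

end Max

section Moves
variable {G H : Type*} [DecidableEq G] {n : ℕ}
variable {M : Finset G} {D : Finset H} {uI : Fin n → G → ℝ} {uD : Fin n → H → ℝ}
variable (hInn : ∀ i, ∀ g ∈ M, 0 ≤ uI i g) (hDnn : ∀ i, ∀ h ∈ D, 0 ≤ uD i h)

omit hInn hDnn in
lemma sig_ge {S'' : Fin n → Finset G} {E'' : Finset (Fin n)} (hE : E''.Nonempty) {c : ℝ}
    (hcap : c ≤ ((E''.card:ℝ))⁻¹)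
    (hrat : ∀ i, i ∉ E'' → 0 < dv D uD i → c ≤ uIv uI i (S'' i) / dv D uD i) :
    c ≤ sig D uI uD S'' E'' := by
  rw [sig, if_pos hE]
  apply Finset.le_min'
  intro y hy
  rcases Finset.mem_insert.mp hy with h | h
  · rw [h]; exact hcap
  · obtain ⟨i, hi, rfl⟩ := Finset.mem_image.mp h
    have hi' := Finset.mem_filter.mp hi
    exact hrat i hi'.2.1 hi'.2.2

include hInn hDnn

lemma pool_bound {S : Fin n → Finset G} {E : Finset (Fin n)}
    (hv : Valid M D uI uD S E)
    (hmax : ∀ S' E', Valid M D uI uD S' E' → SWv D uI uD S' E' ≤ SWv D uI uD S E)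
    (t : Fin n) : uIv uI t (M \ univ.biUnion S) ≤ aval D uI uD S E t := by
  classical
  obtain ⟨h1, h2, h3, h4, h5⟩ := hv
  by_contra hcon
  push_neg at hcon
  set Q := M \ univ.biUnion S with hQ
  set pairs := ((univ : Finset (Fin n)) ×ˢ Q.powerset).filter
    (fun p => aval D uI uD S E p.1 < uIv uI p.1 p.2) with hpairs
  have hpne : pairs.Nonempty := by
    refine ⟨(t, Q), ?_⟩
    rw [hpairs, Finset.mem_filter, Finset.mem_product]
    exact ⟨⟨mem_univ t, Finset.mem_powerset_self Q⟩, hcon⟩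
  obtain ⟨p, hp, hmin⟩ := pairs.exists_min_image (fun p => p.2.card) hpne
  obtain ⟨t', Z⟩ := p
  rw [hpairs, Finset.mem_filter, Finset.mem_product] at hp
  have hZQ : Z ⊆ Q := Finset.mem_powerset.mp hp.1.2
  have htZ : aval D uI uD S E t' < uIv uI t' Z := hp.2
  -- minimality
  have hminimal : ∀ i g, g ∈ Z → uIv uI i (Z.erase g) ≤ aval D uI uD S E i := by
    intro i g hg
    by_contra hcon2
    push_neg at hcon2
    have hmem : ((i, Z.erase g) : Fin n × Finset G) ∈ pairs := by
      rw [hpairs, Finset.mem_filter, Finset.mem_product]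
      exact ⟨⟨mem_univ i, Finset.mem_powerset.mpr ((Finset.erase_subset g Z).trans hZQ)⟩, hcon2⟩
    have := hmin _ hmem
    simp only at this
    rw [Finset.card_erase_of_mem hg] at this
    have hzpos : 0 < Z.card := Finset.card_pos.mpr ⟨g, hg⟩
    omega
  set S'' := Function.update S t' Z with hS''
  set E'' := E.erase t' with hE''
  have hS''t : S'' t' = Z := Function.update_self t' Z S
  have hS''o : ∀ i, i ≠ t' → S'' i = S i := fun i hi => Function.update_of_ne hi Z S
  have hZM : Z ⊆ M := hZQ.trans (Finset.sdiff_subset)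
  have hSM'' : ∀ i, S'' i ⊆ M := by
    intro i
    by_cases hi : i = t'
    · rw [hi, hS''t]; exact hZM
    · rw [hS''o i hi]; exact h1 i
  have hnotE'' : t' ∉ E'' := Finset.notMem_erase t' E
  have hmemE : ∀ i, i ∈ E'' → i ∈ E ∧ i ≠ t' := by
    intro i hi
    have := Finset.mem_erase.mp hi
    exact ⟨this.2, this.1⟩
  have hnotEmem : ∀ i, i ∉ E'' → i ≠ t' → i ∉ E := by
    intro i hi hne hiE
    exact hi (Finset.mem_erase.mpr ⟨hne, hiE⟩)
  -- the old bundle value of t'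
  have havalt' : sig D uI uD S E * dv D uD t' ≤ aval D uI uD S E t' :=
    sigd_le_aval hInn hDnn h1 t'
  -- sigma monotone
  have hsigmono : E''.Nonempty → sig D uI uD S E ≤ sig D uI uD S'' E'' := by
    intro hEne
    have hEn : E.Nonempty := by
      obtain ⟨i, hi⟩ := hEne
      exact ⟨i, (hmemE i hi).1⟩
    apply sig_ge
    · exact hEne
    · calc sig D uI uD S E ≤ ((E.card:ℝ))⁻¹ := sig_le_inv_card hEn
        _ ≤ ((E''.card:ℝ))⁻¹ := by
            apply inv_anti₀
            · exact_mod_cast Finset.card_pos.mpr hEne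
            · exact_mod_cast Finset.card_le_card (Finset.erase_subset t' E)
    · intro i hi hd
      by_cases hit : i = t'
      · subst hit
        rw [hS''t]
        rw [le_div_iff₀ hd]
        calc sig D uI uD S E * dv D uD i ≤ aval D uI uD S E i := havalt'
          _ ≤ uIv uI i Z := le_of_lt htZ
      · rw [hS''o i hit]
        exact sig_le_ratio hEn (hnotEmem i hi hit) hd
  -- aval monotone
  have havalmono : ∀ i, aval D uI uD S E i ≤ aval D uI uD S'' E'' i := by
    intro i
    by_cases hit : i = t'
    · subst hit
      unfold aval
      rw [hS''t, if_neg hnotE'']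
      have : (if i ∈ E then sig D uI uD S E * dv D uD i else 0) ≤
          uIv uI i Z - uIv uI i (S i) := by
        unfold aval at htZ havalt'
        by_cases hiE : i ∈ E
        · rw [if_pos hiE] at htZ ⊢
          linarith
        · rw [if_neg hiE] at htZ ⊢
          linarith
      linarith
    · unfold aval
      rw [hS''o i hit]
      by_cases hiE'' : i ∈ E''
      · rw [if_pos hiE'', if_pos (hmemE i hiE'').1]
        have := hsigmono ⟨i, hiE''⟩
        have hdnn := dv_nonneg hInn hDnn (uI := uI) (M := M) i
        nlinarith
      · rw [if_neg hiE'', if_neg (hnotEmem i hiE'' hit)]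
  -- validity of the new state
  have hvalid'' : Valid M D uI uD S'' E'' := by
    refine ⟨hSM'', ?_, ?_, ?_, ?_⟩
    · intro i j hij
      have hdisjZ : ∀ j, j ≠ t' → Disjoint Z (S j) := by
        intro j hj
        rw [Finset.disjoint_left]
        intro a haZ haS
        have := hZQ haZ
        rw [hQ, Finset.mem_sdiff] at this
        exact this.2 (Finset.mem_biUnion.mpr ⟨j, mem_univ j, haS⟩)
      by_cases hi : i = t'
      · have hjt : j ≠ t' := fun h => hij (hi.trans h.symm)
        rw [hi, hS''t, hS''o j hjt]
        exact hdisjZ j hjt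
      · by_cases hj : j = t'
        · subst hj
          rw [hS''t, hS''o i hi]
          exact (hdisjZ i hi).symm
        · rw [hS''o i hi, hS''o j hj]
          exact h2 i j hij
    · intro i hi
      have := hmemE i hi
      rw [hS''o i this.2]
      exact h3 i this.1
    · intro i hi
      exact h4 i (hmemE i hi).1
    · intro i j g hg
      by_cases hj : j = t'
      · subst hj
        rw [hS''t] at hg ⊢
        calc uIv uI i (Z.erase g) ≤ aval D uI uD S E i := hminimal i g hg
          _ ≤ aval D uI uD S'' E'' i := havalmono i
      · rw [hS''o j hj] at hg ⊢
        calc uIv uI i ((S j).erase g) ≤ aval D uI uD S E i := h5 i j g hg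
          _ ≤ aval D uI uD S'' E'' i := havalmono i
  -- social welfare strictly increases
  have hSWgt : SWv D uI uD S E < SWv D uI uD S'' E'' := by
    have hsum : ∀ i ∈ (univ : Finset (Fin n)), aval D uI uD S E i ≤ aval D uI uD S'' E'' i :=
      fun i _ => havalmono i
    have ht'lt : aval D uI uD S E t' < aval D uI uD S'' E'' t' := by
      calc aval D uI uD S E t' < uIv uI t' Z := htZ
        _ ≤ aval D uI uD S'' E'' t' := by
            unfold aval
            rw [hS''t, if_neg hnotE'']
            simp
    unfold SWv
    exact Finset.sum_lt_sum hsum ⟨t', mem_univ t', ht'lt⟩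
  exact absurd (hmax S'' E'' hvalid'') (not_le.mpr hSWgt)


lemma ypool_bound {S : Fin n → Finset G} {E : Finset (Fin n)}
    (hv : Valid M D uI uD S E)
    (hmax : ∀ S' E', Valid M D uI uD S' E' → SWv D uI uD S' E' ≤ SWv D uI uD S E)
    (hlex : ∀ S' E', Valid M D uI uD S' E' → SWv D uI uD S E ≤ SWv D uI uD S' E' →
      E'.card ≤ E.card) :
    (1 - sig D uI uD S E * E.card) * (∑ i, dv D uD i) ≤ SWv D uI uD S E := by
  classical
  obtain ⟨h1, h2, h3, h4, h5⟩ := hv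
  rcases E.eq_empty_or_nonempty with rfl | hEne
  · -- no divisible allocated: show every agent's total divisible value is at most its own bundle
    have hkey : ∀ i, dv D uD i ≤ aval D uI uD S (∅ : Finset (Fin n)) i := by
      by_contra hcon
      push_neg at hcon
      obtain ⟨i0, hi0⟩ := hcon
      have havali : ∀ i, aval D uI uD S (∅ : Finset (Fin n)) i = uIv uI i (S i) := by
        intro i; unfold aval; simp
      have hd0 : 0 < dv D uD i0 :=
        lt_of_le_of_lt (aval_nonneg hInn hDnn h1 i0) hi0
      set V := (univ : Finset (Fin n)).filter (fun i => 0 < dv D uD i) with hV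
      have hVne : V.Nonempty := ⟨i0, by rw [hV, Finset.mem_filter]; exact ⟨mem_univ _, hd0⟩⟩
      obtain ⟨ts, hts, htmin⟩ := V.exists_min_image
        (fun i => uIv uI i (S i) / dv D uD i) hVne
      have hdts : 0 < dv D uD ts := (Finset.mem_filter.mp hts).2
      set S'' := Function.update S ts (∅ : Finset G) with hS''
      set E'' : Finset (Fin n) := {ts} with hE''
      have hS''t : S'' ts = ∅ := Function.update_self ts ∅ S
      have hS''o : ∀ i, i ≠ ts → S'' i = S i := fun i hi => Function.update_of_ne hi ∅ S
      have hSM'' : ∀ i, S'' i ⊆ M := by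
        intro i
        by_cases hi : i = ts
        · rw [hi, hS''t]; exact empty_subset M
        · rw [hS''o i hi]; exact h1 i
      have hratts : uIv uI ts (S ts) / dv D uD ts ≤ sig D uI uD S'' E'' := by
        apply sig_ge
        · exact ⟨ts, Finset.mem_singleton_self ts⟩
        · rw [hE'']
          simp only [Finset.card_singleton, Nat.cast_one, inv_one]
          have hr0 : uIv uI i0 (S i0) / dv D uD i0 < 1 := by
            rw [div_lt_one hd0]
            rw [← havali i0]
            exact hi0
          calc uIv uI ts (S ts) / dv D uD ts ≤ uIv uI i0 (S i0) / dv D uD i0 :=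
                htmin i0 (Finset.mem_filter.mpr ⟨mem_univ _, hd0⟩)
            _ ≤ 1 := le_of_lt hr0
        · intro i hi hd
          rw [hS''o i (fun h => hi (h ▸ Finset.mem_singleton_self ts))]
          exact htmin i (Finset.mem_filter.mpr ⟨mem_univ _, hd⟩)
      have havalmono : ∀ i, aval D uI uD S (∅ : Finset (Fin n)) i ≤ aval D uI uD S'' E'' i := by
        intro i
        by_cases hi : i = ts
        · subst hi
          rw [havali i]
          unfold aval
          rw [hS''t, if_pos (Finset.mem_singleton_self i)]
          have : uIv uI i (∅ : Finset G) = 0 := by simp [uIv]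
          rw [this, zero_add]
          calc uIv uI i (S i) = (uIv uI i (S i) / dv D uD i) * dv D uD i :=
                (div_mul_cancel₀ _ (ne_of_gt hdts)).symm
            _ ≤ sig D uI uD S'' E'' * dv D uD i :=
                mul_le_mul_of_nonneg_right hratts (le_of_lt hdts)
        · rw [havali i]
          unfold aval
          rw [hS''o i hi, if_neg (by rw [hE'', Finset.mem_singleton]; exact hi)]
          simp
      have hvalid'' : Valid M D uI uD S'' E'' := by
        refine ⟨hSM'', ?_, ?_, ?_, ?_⟩
        · intro i j hij
          by_cases hi : i = ts
          · rw [hi, hS''t]; exact disjoint_empty_left _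
          · by_cases hj : j = ts
            · rw [hj, hS''t]; exact disjoint_empty_right _
            · rw [hS''o i hi, hS''o j hj]; exact h2 i j hij
        · intro i hi
          rw [Finset.mem_singleton] at hi
          rw [hi, hS''t]
        · intro i hi
          rw [Finset.mem_singleton] at hi
          rw [hi]; exact hdts
        · intro i j g hg
          by_cases hj : j = ts
          · rw [hj, hS''t] at hg
            exact absurd hg (notMem_empty g)
          · rw [hS''o j hj] at hg ⊢
            calc uIv uI i ((S j).erase g) ≤ aval D uI uD S (∅ : Finset (Fin n)) i :=
                  h5 i j g hg
              _ ≤ aval D uI uD S'' E'' i := havalmono i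
      have hSWge : SWv D uI uD S (∅ : Finset (Fin n)) ≤ SWv D uI uD S'' E'' :=
        Finset.sum_le_sum (fun i _ => havalmono i)
      have := hlex S'' E'' hvalid'' hSWge
      rw [hE''] at this
      simp at this
    calc (1 - sig D uI uD S (∅ : Finset (Fin n)) * (∅ : Finset (Fin n)).card) *
          (∑ i, dv D uD i) = ∑ i, dv D uD i := by
          simp
      _ ≤ ∑ i, aval D uI uD S (∅ : Finset (Fin n)) i := Finset.sum_le_sum fun i _ => hkey i
      _ = SWv D uI uD S (∅ : Finset (Fin n)) := rfl
  · -- E nonempty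
    have hsmem : sig D uI uD S E ∈ ratios D uI uD S E := by
      rw [sig, if_pos hEne]
      exact Finset.min'_mem _ _
    rcases Finset.mem_insert.mp hsmem with hcap | hblk
    · -- share is the cap: everything is allocated
      have hc : (0:ℝ) < E.card := by exact_mod_cast Finset.card_pos.mpr hEne
      have : sig D uI uD S E * E.card = 1 := by
        rw [hcap]
        exact inv_mul_cancel₀ (ne_of_gt hc)
      rw [this, sub_self, zero_mul]
      exact SW_nonneg hInn hDnn h1
    · -- share equals some blocker's ratio
      obtain ⟨istar, histar, hratio⟩ := Finset.mem_image.mp hblk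
      have histar' := Finset.mem_filter.mp histar
      have hiE : istar ∉ E := histar'.2.1
      have hdi : 0 < dv D uD istar := histar'.2.2
      by_cases hsigsmall : sig D uI uD S E ≤ ((E.card:ℝ) + 1)⁻¹
      · -- absorb the blocker : contradiction with lex-maximality
        exfalso
        set S'' := Function.update S istar (∅ : Finset G) with hS''
        set E'' := insert istar E with hE''
        have hS''t : S'' istar = ∅ := Function.update_self istar ∅ S
        have hS''o : ∀ i, i ≠ istar → S'' i = S i := fun i hi => Function.update_of_ne hi ∅ S
        have hcard'' : E''.card = E.card + 1 := Finset.card_insert_of_notMem hiE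
        have hSM'' : ∀ i, S'' i ⊆ M := by
          intro i
          by_cases hi : i = istar
          · rw [hi, hS''t]; exact empty_subset M
          · rw [hS''o i hi]; exact h1 i
        have hsig'' : sig D uI uD S E ≤ sig D uI uD S'' E'' := by
          apply sig_ge
          · exact ⟨istar, Finset.mem_insert_self _ _⟩
          · rw [hcard'']
            exact_mod_cast hsigsmall
          · intro i hi hd
            have hine : i ≠ istar := fun h => hi (h ▸ Finset.mem_insert_self _ _)
            have hiE' : i ∉ E := fun h => hi (Finset.mem_insert_of_mem h)
            rw [hS''o i hine]
            exact sig_le_ratio hEne hiE' hd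
        have havalmono : ∀ i, aval D uI uD S E i ≤ aval D uI uD S'' E'' i := by
          intro i
          unfold aval
          by_cases hi : i = istar
          · subst hi
            rw [hS''t, if_pos (Finset.mem_insert_self _ _), if_neg hiE]
            have : uIv uI i (∅ : Finset G) = 0 := by simp [uIv]
            rw [this, zero_add, add_zero]
            calc uIv uI i (S i) = (uIv uI i (S i) / dv D uD i) * dv D uD i :=
                  (div_mul_cancel₀ _ (ne_of_gt hdi)).symm
              _ = sig D uI uD S E * dv D uD i := by rw [hratio]
              _ ≤ sig D uI uD S'' E'' * dv D uD i :=
                  mul_le_mul_of_nonneg_right hsig'' (le_of_lt hdi)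
          · rw [hS''o i hi]
            by_cases hiE2 : i ∈ E
            · rw [if_pos hiE2, if_pos (Finset.mem_insert_of_mem hiE2)]
              have := dv_nonneg hInn hDnn (uI := uI) (M := M) i
              nlinarith
            · rw [if_neg hiE2, if_neg (by
                rw [hE'', Finset.mem_insert]
                push_neg
                exact ⟨hi, hiE2⟩)]
        have hvalid'' : Valid M D uI uD S'' E'' := by
          refine ⟨hSM'', ?_, ?_, ?_, ?_⟩
          · intro i j hij
            by_cases hi : i = istar
            · rw [hi, hS''t]; exact disjoint_empty_left _
            · by_cases hj : j = istar
              · rw [hj, hS''t]; exact disjoint_empty_right _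
              · rw [hS''o i hi, hS''o j hj]; exact h2 i j hij
          · intro i hi
            rcases Finset.mem_insert.mp hi with hi' | hi'
            · rw [hi', hS''t]
            · rw [hS''o i (fun h => hiE (h ▸ hi'))]
              exact h3 i hi'
          · intro i hi
            rcases Finset.mem_insert.mp hi with hi' | hi'
            · rw [hi']; exact hdi
            · exact h4 i hi'
          · intro i j g hg
            by_cases hj : j = istar
            · rw [hj, hS''t] at hg
              exact absurd hg (notMem_empty g)
            · rw [hS''o j hj] at hg ⊢
              calc uIv uI i ((S j).erase g) ≤ aval D uI uD S E i := h5 i j g hg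
                _ ≤ aval D uI uD S'' E'' i := havalmono i
        have hSWge : SWv D uI uD S E ≤ SWv D uI uD S'' E'' :=
          Finset.sum_le_sum (fun i _ => havalmono i)
        have := hlex S'' E'' hvalid'' hSWge
        omega
      · -- the share is large : the remainder is small
        push_neg at hsigsmall
        have hsigpos : 0 < sig D uI uD S E :=
          lt_trans (by positivity) hsigsmall
        have hkey2 : sig D uI uD S E * (∑ i, dv D uD i) ≤ SWv D uI uD S E := by
          rw [Finset.mul_sum]
          exact Finset.sum_le_sum (fun i _ => sigd_le_aval hInn hDnn h1 i)
        have hfac : 1 - sig D uI uD S E * E.card ≤ sig D uI uD S E := by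
          have hc1 : (0:ℝ) < (E.card:ℝ) + 1 := by positivity
          have h2' := mul_lt_mul_of_pos_right hsigsmall hc1
          rw [inv_mul_cancel₀ (ne_of_gt hc1)] at h2'
          nlinarith
        have hdsum : 0 ≤ ∑ i, dv D uD i :=
          Finset.sum_nonneg fun i _ => dv_nonneg hInn hDnn i
        calc (1 - sig D uI uD S E * E.card) * (∑ i, dv D uD i)
            ≤ sig D uI uD S E * (∑ i, dv D uD i) :=
              mul_le_mul_of_nonneg_right hfac hdsum
          _ ≤ SWv D uI uD S E := hkey2


lemma matching_bound (hn : 1 ≤ n) {S : Fin n → Finset G} {E : Finset (Fin n)}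
    (hv : Valid M D uI uD S E)
    (hmax : ∀ S' E', Valid M D uI uD S' E' → SWv D uI uD S' E' ≤ SWv D uI uD S E)
    (tg : Fin n → G) (htg : ∀ j, (S j).Nonempty → tg j ∈ S j) :
    ∑ j, ∑ i ∈ univ.erase j, (if (S j).Nonempty then uI i (tg j) else 0) ≤
      ((n:ℝ) - 1) * SWv D uI uD S E := by
  classical
  haveI : NeZero n := ⟨by omega⟩
  obtain ⟨h1, h2, h3, h4, h5⟩ := hv
  -- the matching allocations indexed by nonzero shifts
  set B : Fin n → Fin n → Finset G :=
    fun k i => if (S (i - k)).Nonempty then {tg (i - k)} else ∅ with hB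
  have hBM : ∀ k i, B k i ⊆ M := by
    intro k i
    rw [hB]
    dsimp only
    split
    · next hne =>
      intro g hg
      rw [Finset.mem_singleton] at hg
      rw [hg]
      exact h1 _ (htg _ hne)
    · exact empty_subset M
  have hvalidB : ∀ k, Valid M D uI uD (B k) (∅ : Finset (Fin n)) := by
    intro k
    refine ⟨hBM k, ?_, ?_, ?_, ?_⟩
    · intro i j hij
      rw [hB]
      dsimp only
      split
      · next hne1 =>
        split
        · next hne2 =>
          rw [Finset.disjoint_singleton]
          intro heq
          have hsub : i - k ≠ j - k := by
            intro h
            apply hij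
            have := congrArg (· + k) h
            simpa using this
          have := htg _ hne1
          rw [heq] at this
          exact (Finset.disjoint_left.mp (h2 _ _ hsub)) this (htg _ hne2)
        · exact disjoint_empty_right _
      · exact disjoint_empty_left _
    · intro i hi; exact absurd hi (notMem_empty i)
    · intro i hi; exact absurd hi (notMem_empty i)
    · intro i j g hg
      have hemp : uIv uI i ((B k j).erase g) = 0 := by
        rw [hB] at hg ⊢
        dsimp only at hg ⊢
        rcases (em ((S (j - k)).Nonempty)) with hne | hne
        · rw [if_pos hne] at hg ⊢
          rw [Finset.mem_singleton] at hg
          rw [hg, Finset.erase_singleton]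
          simp [uIv]
        · rw [if_neg hne] at hg
          exact absurd hg (notMem_empty g)
      rw [hemp]
      exact aval_nonneg hInn hDnn (hBM k) i
  -- welfare of the matching allocation
  have hSWB : ∀ k, SWv D uI uD (B k) (∅ : Finset (Fin n)) =
      ∑ j, (if (S j).Nonempty then uI (j + k) (tg j) else 0) := by
    intro k
    unfold SWv aval
    have : ∀ i, uIv uI i (B k i) + (if i ∈ (∅ : Finset (Fin n)) then
        sig D uI uD (B k) ∅ * dv D uD i else 0) =
        (if (S (i - k)).Nonempty then uI i (tg (i - k)) else 0) := by
      intro i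
      rw [if_neg (notMem_empty i), add_zero, hB]
      dsimp only
      split
      · rw [uIv, Finset.sum_singleton]
      · simp [uIv]
    rw [Finset.sum_congr rfl (fun i _ => this i)]
    rw [← Equiv.sum_comp (Equiv.addRight k)
      (fun i => if (S (i - k)).Nonempty then uI i (tg (i - k)) else 0)]
    apply Finset.sum_congr rfl
    intro j _
    have h2' : (Equiv.addRight k) j - k = j := by
      simp
    rw [h2']
    rfl
  -- sum over all nonzero shifts
  have hstep : ∀ j, ∑ k ∈ univ.erase (0 : Fin n),
      (if (S j).Nonempty then uI (j + k) (tg j) else 0) =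
      ∑ i ∈ univ.erase j, (if (S j).Nonempty then uI i (tg j) else 0) := by
    intro j
    apply Finset.sum_nbij' (fun k => j + k) (fun i => i - j)
    · intro k hk
      rw [Finset.mem_erase] at hk ⊢
      refine ⟨?_, mem_univ _⟩
      intro h
      apply hk.1
      have := congrArg (· - j) h
      simpa using this
    · intro i hi
      rw [Finset.mem_erase] at hi ⊢
      refine ⟨?_, mem_univ _⟩
      intro h
      apply hi.1
      have := congrArg (· + j) h
      simpa [sub_add_cancel] using this
    · intro k hk
      simp
    · intro i hi
      simp
    · intro k hk
      rfl
  calc ∑ j, ∑ i ∈ univ.erase j, (if (S j).Nonempty then uI i (tg j) else 0)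
      = ∑ j, ∑ k ∈ univ.erase (0 : Fin n),
          (if (S j).Nonempty then uI (j + k) (tg j) else 0) := by
        exact (Finset.sum_congr rfl (fun j _ => (hstep j).symm))
    _ = ∑ k ∈ univ.erase (0 : Fin n), ∑ j,
          (if (S j).Nonempty then uI (j + k) (tg j) else 0) := Finset.sum_comm
    _ = ∑ k ∈ univ.erase (0 : Fin n), SWv D uI uD (B k) (∅ : Finset (Fin n)) := by
        exact Finset.sum_congr rfl (fun k _ => (hSWB k).symm)
    _ ≤ ∑ k ∈ univ.erase (0 : Fin n), SWv D uI uD S E :=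
        Finset.sum_le_sum (fun k _ => hmax (B k) ∅ (hvalidB k))
    _ = ((univ.erase (0 : Fin n)).card : ℝ) * SWv D uI uD S E := by
        rw [Finset.sum_const, nsmul_eq_mul]
    _ = ((n:ℝ) - 1) * SWv D uI uD S E := by
        rw [Finset.card_erase_of_mem (mem_univ _), Finset.card_univ, Fintype.card_fin]
        congr 1
        rw [Nat.cast_sub hn, Nat.cast_one]

end Moves
end Stmt14

open Stmt14 in
/-- For `n` agents with additive utilities over mixed goods, there exists a
partial EFXM allocation with social welfare at least `(1 / (2n+1)) · ∑_i u_i(M ∪ D)`. -/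
theorem stmt_14 {G H : Type*} [DecidableEq G] (n : ℕ) (hn : 1 ≤ n)
    (M : Finset G) (D : Finset H) (uI : Fin n → G → ℝ) (uD : Fin n → H → ℝ)
    (hInn : ∀ i, ∀ g ∈ M, 0 ≤ uI i g) (hDnn : ∀ i, ∀ h ∈ D, 0 ≤ uD i h) :
    ∃ A : Fin n → Finset G × (H → ℝ), FeasibleN M D A ∧ EFXM uI uD D A ∧
      (1 / (2 * (n : ℝ) + 1)) * ∑ i, (∑ g ∈ M, uI i g + ∑ h ∈ D, uD i h) ≤
        ∑ i, mval (uI i) (uD i) D (A i) := by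

  classical
  obtain ⟨S, E, hv, hmax, hlex⟩ := exists_lexmax (M := M) (D := D) (uI := uI) (uD := uD)
  refine ⟨allocOf D uI uD S E, feasible_alloc hInn hDnn hv, efxm_alloc hInn hDnn hv, ?_⟩
  have hSWeq : ∑ i, mval (uI i) (uD i) D (allocOf D uI uD S E i) = SWv D uI uD S E :=
    Finset.sum_congr rfl (fun i _ => mval_alloc_own S E i)
  rw [hSWeq]
  have h2n1 : (0:ℝ) < 2*(n:ℝ)+1 := by positivity
  rw [one_div, inv_mul_le_iff₀ h2n1]
  -- notation
  obtain ⟨h1, h2, h3, h4, h5⟩ := hv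
  have hv' : Valid M D uI uD S E := ⟨h1, h2, h3, h4, h5⟩
  set σ := sig D uI uD S E with hσ
  set W := SWv D uI uD S E with hW
  set Q := M \ univ.biUnion S with hQdef
  -- decomposition of each agent's full value
  have hbu : univ.biUnion S ⊆ M := Finset.biUnion_subset.mpr (fun j _ => h1 j)
  have hdecM : ∀ i, ∑ g ∈ M, uI i g = uIv uI i Q + ∑ j, uIv uI i (S j) := by
    intro i
    have hsd := Finset.sum_sdiff (f := uI i) hbu
    have hbi : ∑ g ∈ univ.biUnion S, uI i g = ∑ j, uIv uI i (S j) := by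
      rw [Finset.sum_biUnion (fun a _ b _ hab => h2 a b hab)]
      rfl
    rw [← hsd, hbi]
    rfl
  -- pool bound
  have hpool : ∑ i, uIv uI i Q ≤ W := by
    calc ∑ i, uIv uI i Q ≤ ∑ i, aval D uI uD S E i :=
          Finset.sum_le_sum (fun i _ => pool_bound hInn hDnn hv' hmax i)
      _ = W := rfl
  -- leftover divisible bound
  have hy : (1 - σ * E.card) * (∑ i, dv D uD i) ≤ W :=
    ypool_bound hInn hDnn hv' hmax hlex
  -- cross-value bounds
  have hWnn : 0 ≤ W := SW_nonneg hInn hDnn h1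
  have hκ : ∃ κ : Fin n → Fin n → ℝ,
      (∀ i j, uIv uI i (S j) + (if j ∈ E then σ * dv D uD i else 0) ≤
        aval D uI uD S E i + κ i j) ∧
      (∑ j, ∑ i ∈ univ.erase j, κ i j ≤ ((n:ℝ) - 1) * W) := by
    rcases em (∃ j0 : Fin n, (S j0).Nonempty) with ⟨j0, hj0⟩ | hno
    · set tg : Fin n → G := fun j => if h : (S j).Nonempty then h.choose else hj0.choose
        with htgdef
      have htg : ∀ j, (S j).Nonempty → tg j ∈ S j := by
        intro j hne
        rw [htgdef]
        dsimp only
        rw [dif_pos hne]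
        exact hne.choose_spec
      refine ⟨fun i j => uIv uI i (S j) - uIv uI i ((S j).erase (tg j)), ?_, ?_⟩
      · intro i j
        dsimp only
        have hkey : uIv uI i ((S j).erase (tg j)) ≤ aval D uI uD S E i := by
          by_cases hne : (S j).Nonempty
          · exact h5 i j (tg j) (htg j hne)
          · rw [Finset.not_nonempty_iff_eq_empty] at hne
            rw [hne, Finset.erase_empty]
            have he : uIv uI i (∅ : Finset G) = 0 := by simp [uIv]
            rw [he]
            exact aval_nonneg hInn hDnn h1 i
        have hiteE : (if j ∈ E then σ * dv D uD i else 0) ≤ aval D uI uD S E i := by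
          split
          · exact sigd_le_aval hInn hDnn h1 i
          · exact aval_nonneg hInn hDnn h1 i
        by_cases hjE : j ∈ E
        · have hSj := h3 j hjE
          have hz : uIv uI i (S j) = 0 := by rw [hSj]; simp [uIv]
          have hz2 : uIv uI i ((S j).erase (tg j)) = 0 := by
            rw [hSj, Finset.erase_empty]
            simp [uIv]
          rw [hz, hz2]
          linarith
        · rw [if_neg hjE]
          linarith
      · dsimp only
        have hpt : ∀ i j, uIv uI i (S j) - uIv uI i ((S j).erase (tg j)) =
            (if (S j).Nonempty then uI i (tg j) else 0) := by
          intro i j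
          by_cases hne : (S j).Nonempty
          · rw [if_pos hne]
            have h := Finset.sum_erase_add (S j) (uI i) (htg j hne)
            unfold uIv
            linarith
          · rw [if_neg hne]
            rw [Finset.not_nonempty_iff_eq_empty] at hne
            rw [hne, Finset.erase_empty, sub_self]
        calc ∑ j, ∑ i ∈ univ.erase j, (uIv uI i (S j) - uIv uI i ((S j).erase (tg j)))
            = ∑ j, ∑ i ∈ univ.erase j, (if (S j).Nonempty then uI i (tg j) else 0) := by
              exact Finset.sum_congr rfl (fun j _ => Finset.sum_congr rfl
                (fun i _ => hpt i j))
          _ ≤ ((n:ℝ) - 1) * W := matching_bound hInn hDnn hn hv' hmax tg htg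
    · push_neg at hno
      refine ⟨fun _ _ => 0, ?_, ?_⟩
      · intro i j
        dsimp only
        have hSj : S j = ∅ := hno j
        have hz : uIv uI i (S j) = 0 := by rw [hSj]; simp [uIv]
        have hiteE : (if j ∈ E then σ * dv D uD i else 0) ≤ aval D uI uD S E i := by
          split
          · exact sigd_le_aval hInn hDnn h1 i
          · exact aval_nonneg hInn hDnn h1 i
        rw [hz]
        linarith
      · have : ∀ j : Fin n, ∑ i ∈ univ.erase j, (0:ℝ) = 0 := fun j => Finset.sum_const_zero
        rw [Finset.sum_congr rfl (fun j _ => this j), Finset.sum_const_zero]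
        have hcast : (1:ℝ) ≤ (n:ℝ) := by exact_mod_cast hn
        nlinarith
  obtain ⟨κ, hκ1, hκ2⟩ := hκ
  -- swap the double sum
  have hswap : ∑ i, ∑ j ∈ univ.erase i, κ i j = ∑ j, ∑ i ∈ univ.erase j, κ i j := by
    have e1 : ∀ i : Fin n, ∑ j ∈ univ.erase i, κ i j = ∑ j, if j ≠ i then κ i j else 0 := by
      intro i
      rw [← Finset.filter_ne' univ i, Finset.sum_filter]
    have e2 : ∀ j : Fin n, ∑ i ∈ univ.erase j, κ i j = ∑ i, if i ≠ j then κ i j else 0 := by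
      intro j
      rw [← Finset.filter_ne' univ j, Finset.sum_filter]
    calc ∑ i, ∑ j ∈ univ.erase i, κ i j = ∑ i, ∑ j, if j ≠ i then κ i j else 0 :=
          Finset.sum_congr rfl (fun i _ => e1 i)
      _ = ∑ j, ∑ i, if j ≠ i then κ i j else 0 := Finset.sum_comm
      _ = ∑ j, ∑ i, if i ≠ j then κ i j else 0 := by
          apply Finset.sum_congr rfl
          intro j _
          apply Finset.sum_congr rfl
          intro i _
          simp [ne_comm]
      _ = ∑ j, ∑ i ∈ univ.erase j, κ i j :=
          Finset.sum_congr rfl (fun j _ => (e2 j).symm)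
  -- the c-matrix
  set c : Fin n → Fin n → ℝ := fun i j => uIv uI i (S j) + (if j ∈ E then σ * dv D uD i else 0)
    with hc
  have hcdiag : ∀ i, c i i = aval D uI uD S E i := fun i => rfl
  have hcross : ∑ i, ∑ j, c i j ≤ W + ((n:ℝ) - 1) * W + ((n:ℝ) - 1) * W := by
    have hsplit : ∀ i, ∑ j, c i j = c i i + ∑ j ∈ univ.erase i, c i j := by
      intro i
      exact (Finset.add_sum_erase univ (c i) (mem_univ i)).symm
    have hoff : ∑ i, ∑ j ∈ univ.erase i, c i j ≤ ((n:ℝ) - 1) * W + ((n:ℝ) - 1) * W := by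
      have hb : ∑ i, ∑ j ∈ univ.erase i, c i j ≤
          ∑ i, ∑ j ∈ univ.erase i, (aval D uI uD S E i + κ i j) := by
        apply Finset.sum_le_sum
        intro i _
        apply Finset.sum_le_sum
        intro j _
        exact hκ1 i j
      have hcard : ∀ i : Fin n, ((univ.erase i).card : ℝ) = (n:ℝ) - 1 := by
        intro i
        rw [Finset.card_erase_of_mem (mem_univ _), Finset.card_univ, Fintype.card_fin,
          Nat.cast_sub hn, Nat.cast_one]
      have hsum2 : ∑ i, ∑ j ∈ univ.erase i, (aval D uI uD S E i + κ i j) =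
          ((n:ℝ) - 1) * W + ∑ i, ∑ j ∈ univ.erase i, κ i j := by
        have : ∀ i : Fin n, ∑ j ∈ univ.erase i, (aval D uI uD S E i + κ i j) =
            ((n:ℝ) - 1) * aval D uI uD S E i + ∑ j ∈ univ.erase i, κ i j := by
          intro i
          rw [Finset.sum_add_distrib, Finset.sum_const, nsmul_eq_mul, hcard i]
        rw [Finset.sum_congr rfl (fun i _ => this i), Finset.sum_add_distrib,
          ← Finset.mul_sum]
        congr 1
      calc ∑ i, ∑ j ∈ univ.erase i, c i j
          ≤ ((n:ℝ) - 1) * W + ∑ i, ∑ j ∈ univ.erase i, κ i j := by rw [← hsum2]; exact hb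
        _ ≤ ((n:ℝ) - 1) * W + ((n:ℝ) - 1) * W := by
            rw [hswap]
            linarith
    calc ∑ i, ∑ j, c i j = ∑ i, (c i i + ∑ j ∈ univ.erase i, c i j) :=
          Finset.sum_congr rfl (fun i _ => hsplit i)
      _ = W + ∑ i, ∑ j ∈ univ.erase i, c i j := by
          rw [Finset.sum_add_distrib]
          congr 1
      _ ≤ W + (((n:ℝ) - 1) * W + ((n:ℝ) - 1) * W) := by linarith
      _ = W + ((n:ℝ) - 1) * W + ((n:ℝ) - 1) * W := by ring
  -- assemble
  have hone : ∀ i, ∑ j, (if j ∈ E then σ * dv D uD i else 0) = (E.card:ℝ) * (σ * dv D uD i) := by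
    intro i
    rw [Finset.sum_ite_mem, Finset.univ_inter, Finset.sum_const, nsmul_eq_mul]
  have hT : ∑ i, (∑ g ∈ M, uI i g + ∑ h ∈ D, uD i h) =
      (∑ i, uIv uI i Q) + (1 - σ * E.card) * (∑ i, dv D uD i) + ∑ i, ∑ j, c i j := by
    have : ∀ i, (∑ g ∈ M, uI i g + ∑ h ∈ D, uD i h) =
        uIv uI i Q + (1 - σ * E.card) * dv D uD i + ∑ j, c i j := by
      intro i
      rw [hdecM i]
      have : ∑ j, c i j = (∑ j, uIv uI i (S j)) + (E.card:ℝ) * (σ * dv D uD i) := by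
        rw [hc]
        dsimp only
        rw [Finset.sum_add_distrib, hone i]
      rw [this]
      have hdv : ∑ h ∈ D, uD i h = dv D uD i := rfl
      rw [hdv]
      ring
    rw [Finset.sum_congr rfl (fun i _ => this i), Finset.sum_add_distrib,
      Finset.sum_add_distrib, ← Finset.mul_sum]
  rw [hT]
  have hcast : (1:ℝ) ≤ (n:ℝ) := by exact_mod_cast hn
  calc (∑ i, uIv uI i Q) + (1 - σ * E.card) * (∑ i, dv D uD i) + ∑ i, ∑ j, c i j
      ≤ W + W + (W + ((n:ℝ) - 1) * W + ((n:ℝ) - 1) * W) := by linarith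
    _ ≤ (2*(n:ℝ)+1) * W := by nlinarith
end

section
/- Suppose allocation A = (A1, …, An) is EFXM, the welfare satisfies n·SW(A) ≥ Σ_{i∈N} Σ_{g∈M̃^i} u_i(g) (where M̃^i is a set of n most valuable indivisible goods to agent i), and SW(A) ≥ Σ_{i∈N} u_i(P) for the set P of unallocated goods. Then SW(A) ≥ (1/(2n+1)) · Σ_{i∈N} u_i(M ∪ D). -/
open Finset

/-- If `A` is an EFXM (partial) allocation such that
`n · SW(A) ≥ ∑_i ∑_{g ∈ M̃^i} u_i(g)` (with `M̃^i` a set of `n` most valuable indivisible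
goods for agent `i`) and `SW(A) ≥ ∑_i u_i(P)` for the set `P` of unallocated indivisible
goods (the divisible goods being fully allocated), then
`SW(A) ≥ (1/(2n+1)) · ∑_i u_i(M̃ ∪ D)`. -/
theorem stmt_15 {G H : Type*} [DecidableEq G] (n : ℕ) (hn : 1 ≤ n)
    (Mt : Finset G) (D : Finset H) (hcard : n ≤ Mt.card)
    (uI : Fin n → G → ℝ) (uD : Fin n → H → ℝ)
    (hInn : ∀ i, ∀ g ∈ Mt, 0 ≤ uI i g) (hDnn : ∀ i, ∀ h ∈ D, 0 ≤ uD i h)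
    (Mi : Fin n → Finset G)
    (hMisub : ∀ i, Mi i ⊆ Mt) (hMicard : ∀ i, (Mi i).card = n)
    (hMimax : ∀ i, ∀ S ⊆ Mt, S.card = n → ∑ g ∈ S, uI i g ≤ ∑ g ∈ Mi i, uI i g)
    (A : Fin n → Finset G × (H → ℝ)) (hfeas : FeasibleN Mt D A)
    (hfull : ∀ h ∈ D, ∑ i, (A i).2 h = 1)
    (P : Finset G) (hP : P = Mt \ Finset.univ.biUnion (fun i => (A i).1))
    (hEFXM : EFXM uI uD D A)
    (hmatch : ∑ i, ∑ g ∈ Mi i, uI i g ≤ (n : ℝ) * ∑ i, mval (uI i) (uD i) D (A i))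
    (hunalloc : ∑ i, ∑ g ∈ P, uI i g ≤ ∑ i, mval (uI i) (uD i) D (A i)) :
    (1 / (2 * (n : ℝ) + 1)) * ∑ i, (∑ g ∈ Mt, uI i g + ∑ h ∈ D, uD i h) ≤
      ∑ i, mval (uI i) (uD i) D (A i) := by
  obtain ⟨hsub, hdisj, hnn2, hle1⟩ := hfeas
  have hSWi : ∀ i, 0 ≤ mval (uI i) (uD i) D (A i) := by
    intro i
    exact add_nonneg (Finset.sum_nonneg fun g hg => hInn i g (hsub i hg))
      (Finset.sum_nonneg fun h hh => mul_nonneg (hnn2 i h hh) (hDnn i h hh))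
  -- key envy bound
  have key : ∀ i j, ∃ T, T ⊆ (A j).1 ∧ T.card ≤ 1 ∧
      mval (uI i) (uD i) D (A j) ≤ mval (uI i) (uD i) D (A i) + ∑ g ∈ T, uI i g := by
    intro i j
    by_cases hOI : OnlyIndiv D (A j)
    · rcases (hEFXM i j).1 hOI with h | h
      · exact ⟨∅, empty_subset _, by simp, by simpa using h⟩
      · rcases Finset.eq_empty_or_nonempty (A j).1 with he | ⟨g, hg⟩
        · refine ⟨∅, empty_subset _, by simp, ?_⟩
          have hz : ∑ h ∈ D, (A j).2 h * uD i h = 0 :=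
            Finset.sum_eq_zero fun h hh => by rw [hOI h hh]; ring
          have : mval (uI i) (uD i) D (A j) = 0 := by
            simp [mval, he, hz]
          rw [this]
          simpa using hSWi i
        · refine ⟨{g}, by simpa using hg, by simp, ?_⟩
          have h1 := h g hg
          have h2 : mval (uI i) (uD i) D ((A j).1.erase g, (A j).2)
              = mval (uI i) (uD i) D (A j) - uI i g := by
            simp only [mval]
            rw [Finset.sum_erase_eq_sub hg]
            ring
          rw [h2] at h1
          simp only [Finset.sum_singleton]
          linarith
    · exact ⟨∅, empty_subset _, by simp, by simpa using (hEFXM i j).2 hOI⟩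
  choose T hTsub hTcard hTle using key
  -- per agent bound on sum of envies
  have step : ∀ i, ∑ j, mval (uI i) (uD i) D (A j)
      ≤ (n : ℝ) * mval (uI i) (uD i) D (A i) + ∑ g ∈ Mi i, uI i g := by
    intro i
    have h1 : ∑ j, mval (uI i) (uD i) D (A j)
        ≤ ∑ j : Fin n, (mval (uI i) (uD i) D (A i) + ∑ g ∈ T i j, uI i g) :=
      Finset.sum_le_sum fun j _ => hTle i j
    rw [Finset.sum_add_distrib, Finset.sum_const, Finset.card_univ, Fintype.card_fin,
      nsmul_eq_mul] at h1
    set U := Finset.univ.biUnion (T i) with hU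
    have hpd : ((Finset.univ : Finset (Fin n)) : Set (Fin n)).PairwiseDisjoint (T i) := by
      intro a _ b _ hab
      exact (hdisj a b hab).mono (hTsub i a) (hTsub i b)
    have hsumU : ∑ j, ∑ g ∈ T i j, uI i g = ∑ g ∈ U, uI i g :=
      (Finset.sum_biUnion hpd).symm
    have hUM : U ⊆ Mt := by
      intro g hg
      obtain ⟨j, _, hj⟩ := Finset.mem_biUnion.mp hg
      exact hsub j (hTsub i j hj)
    have hUcard : U.card ≤ n := by
      calc U.card ≤ ∑ j, (T i j).card := Finset.card_biUnion_le
        _ ≤ ∑ _j : Fin n, 1 := Finset.sum_le_sum fun j _ => hTcard i j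
        _ = n := by simp
    obtain ⟨V, hUV, hVM, hVcard⟩ := Finset.exists_subsuperset_card_eq hUM hUcard hcard
    have h2 : ∑ g ∈ U, uI i g ≤ ∑ g ∈ V, uI i g :=
      Finset.sum_le_sum_of_subset_of_nonneg hUV fun g hg _ => hInn i g (hVM hg)
    have h3 := hMimax i V hVM hVcard
    rw [hsumU] at h1
    linarith
  -- decomposition of total value
  set B := Finset.univ.biUnion (fun j => (A j).1) with hB
  have hBM : B ⊆ Mt := by
    intro g hg
    obtain ⟨j, _, hj⟩ := Finset.mem_biUnion.mp hg
    exact hsub j hj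
  have hpdA : ((Finset.univ : Finset (Fin n)) : Set (Fin n)).PairwiseDisjoint (fun j => (A j).1) :=
    fun a _ b _ hab => hdisj a b hab
  have decomp : ∀ i, ∑ g ∈ Mt, uI i g + ∑ h ∈ D, uD i h
      = ∑ j, mval (uI i) (uD i) D (A j) + ∑ g ∈ P, uI i g := by
    intro i
    have hMt : ∑ g ∈ Mt, uI i g = ∑ g ∈ P, uI i g + ∑ g ∈ B, uI i g := by
      rw [hP]
      exact (Finset.sum_sdiff hBM).symm
    have hBsum : ∑ g ∈ B, uI i g = ∑ j, ∑ g ∈ (A j).1, uI i g :=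
      Finset.sum_biUnion hpdA
    have hDsum : ∑ h ∈ D, uD i h = ∑ j, ∑ h ∈ D, (A j).2 h * uD i h := by
      rw [Finset.sum_comm]
      refine Finset.sum_congr rfl fun h hh => ?_
      rw [← Finset.sum_mul, hfull h hh, one_mul]
    rw [hMt, hBsum, hDsum]
    simp only [mval, Finset.sum_add_distrib]
    ring
  have total : ∑ i, (∑ g ∈ Mt, uI i g + ∑ h ∈ D, uD i h)
      ≤ (2 * (n : ℝ) + 1) * ∑ i, mval (uI i) (uD i) D (A i) := by
    have h1 : ∑ i, (∑ g ∈ Mt, uI i g + ∑ h ∈ D, uD i h)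
        = ∑ i, ∑ j, mval (uI i) (uD i) D (A j) + ∑ i, ∑ g ∈ P, uI i g := by
      rw [← Finset.sum_add_distrib]
      exact Finset.sum_congr rfl fun i _ => decomp i
    have h2 : ∑ i, ∑ j, mval (uI i) (uD i) D (A j)
        ≤ ∑ i, ((n : ℝ) * mval (uI i) (uD i) D (A i) + ∑ g ∈ Mi i, uI i g) :=
      Finset.sum_le_sum fun i _ => step i
    rw [Finset.sum_add_distrib, ← Finset.mul_sum] at h2
    rw [h1]
    linarith
  have hpos : (0 : ℝ) < 2 * (n : ℝ) + 1 := by positivity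
  rw [div_mul_eq_mul_div, one_mul, div_le_iff₀ hpos]
  linarith
end

section
/- For n agents and at least n indivisible goods, consider the complete bipartite graph between agents and goods with edge weight u_i(g); let π be a maximum-weight matching saturating all agents. Then Σ_{i∈N} u_i(π(i)) ≥ (1/n) · Σ_{i∈N} Σ_{g∈M̃^i} u_i(g), where M̃^i is a set of n most valuable goods for agent i. -/
open Finset

lemma sum_count_slices {α : Type*} [DecidableEq α] (l : List α) (m : ℕ) (a : α) :
    ∀ d, ∑ j ∈ Finset.range d, ((l.drop (j * m)).take m).count a
      = (l.take (d * m)).count a := by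
  intro d
  induction d with
  | zero => simp
  | succ d ih =>
    rw [Finset.sum_range_succ, ih, Nat.succ_mul, List.take_add, List.count_append]

lemma exists_good_sdr {G : Type*} [DecidableEq G] {n m : ℕ} (hm : 1 ≤ m)
    (S : Fin n → Finset G) (hScard : ∀ i, (S i).card = m)
    (hmult : ∀ g, (univ.filter fun i => g ∈ S i).card ≤ m) :
    ∃ f : Fin n → G, Function.Injective f ∧ (∀ i, f i ∈ S i) ∧
      ∀ g, (univ.filter fun i => g ∈ S i).card = m → ∃ i, f i = g := by
  classical
  set U : Finset G := univ.biUnion S with hUdef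
  set mult : G → ℕ := fun g => (univ.filter fun i => g ∈ S i).card with hmultdef
  have hSU : ∀ i, S i ⊆ U := fun i => subset_biUnion_of_mem S (mem_univ i)
  have hmultite : ∀ g, mult g = ∑ i, if g ∈ S i then 1 else 0 := fun g =>
    Finset.card_filter _ _
  have hrowreal : ∀ i : Fin n, (∑ g ∈ U, if g ∈ S i then 1 else 0) = m := by
    intro i
    rw [← Finset.card_filter, Finset.filter_mem_eq_inter,
      Finset.inter_eq_right.mpr (hSU i), hScard i]
  have hEdge : ∑ g ∈ U, mult g = n * m := by
    calc ∑ g ∈ U, mult g = ∑ g ∈ U, ∑ i, if g ∈ S i then 1 else 0 :=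
          Finset.sum_congr rfl fun g _ => hmultite g
      _ = ∑ i, ∑ g ∈ U, if g ∈ S i then 1 else 0 := Finset.sum_comm
      _ = ∑ _i : Fin n, m := Finset.sum_congr rfl fun i _ => hrowreal i
      _ = n * m := by simp [mul_comm]
  have hU : n ≤ U.card := by
    have h1 : n * m ≤ U.card * m := by
      rw [← hEdge]
      calc ∑ g ∈ U, mult g ≤ ∑ _g ∈ U, m := Finset.sum_le_sum fun g _ => hmult g
        _ = U.card * m := by simp [mul_comm]
    exact Nat.le_of_mul_le_mul_right h1 hm
  set d : ℕ := U.card - n with hddef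
  have hdn : U.card = n + d := (Nat.add_sub_cancel' hU).symm
  -- the deficiency multiset
  set l0 : Multiset G := ∑ g ∈ U, Multiset.replicate (m - mult g) g with hl0def
  have hl0count : ∀ g, l0.count g = if g ∈ U then m - mult g else 0 := by
    intro g
    rw [hl0def, Multiset.count_sum']
    simp only [Multiset.count_replicate]
    exact Finset.sum_ite_eq' U g (fun g' => m - mult g')
  have hl0card : Multiset.card l0 = d * m := by
    have hcs : ∀ (s : Finset G) (f : G → Multiset G),
        Multiset.card (∑ g ∈ s, f g) = ∑ g ∈ s, Multiset.card (f g) := by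
      intro s f
      induction s using Finset.induction with
      | empty => simp
      | insert _ _ h ih => rw [Finset.sum_insert h, Finset.sum_insert h, Multiset.card_add, ih]
    have h1 : Multiset.card l0 = ∑ g ∈ U, (m - mult g) := by
      rw [hl0def, hcs]
      simp
    have h2 : ∑ g ∈ U, (m - mult g) + ∑ g ∈ U, mult g = ∑ _g ∈ U, m := by
      rw [← Finset.sum_add_distrib]
      exact Finset.sum_congr rfl fun g _ => Nat.sub_add_cancel (hmult g)
    have h3 : ∑ _g ∈ U, m = n * m + d * m := by
      rw [Finset.sum_const, smul_eq_mul, hdn, Nat.add_mul]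
    rw [h1]
    omega
  set l : List G := l0.toList with hldef
  have hllen : l.length = d * m := by rw [hldef, Multiset.length_toList, hl0card]
  have hlcount : ∀ g, l.count g = l0.count g := by
    intro g
    rw [hldef, ← Multiset.coe_count, Multiset.coe_toList]
  -- slices
  have hslicelen : ∀ j : Fin d, ((l.drop (j.1 * m)).take m).length = m := by
    intro j
    rw [List.length_take, List.length_drop, hllen]
    have h : (j.1 + 1) * m ≤ d * m := Nat.mul_le_mul_right m j.2
    rw [Nat.succ_mul] at h
    omega
  have hslicemem : ∀ (j : Fin d) (g : G), g ∈ (l.drop (j.1 * m)).take m → g ∈ U := by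
    intro j g hg
    have hgl : g ∈ l := List.drop_subset _ l (List.take_subset _ _ hg)
    have hc : l.count g ≠ 0 := Nat.pos_iff_ne_zero.mp (List.count_pos_iff.mpr hgl)
    rw [hlcount, hl0count] at hc
    by_contra hgu
    simp [hgu] at hc
  -- the bipartite structure
  set Nb : Fin n ⊕ Fin d → Finset G :=
    Sum.elim S (fun j => ((l.drop (j.1 * m)).take m).toFinset) with hNbdef
  set cnt : (Fin n ⊕ Fin d) → G → ℕ :=
    Sum.elim (fun i g => if g ∈ S i then 1 else 0)
      (fun j g => ((l.drop (j.1 * m)).take m).count g) with hcntdef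
  have hNbU : ∀ a, Nb a ⊆ U := by
    rintro (i | j) g hg
    · exact hSU i hg
    · exact hslicemem j g (List.mem_toFinset.mp hg)
  have hzero : ∀ a g, g ∉ Nb a → cnt a g = 0 := by
    rintro (i | j) g hg
    · simpa [hcntdef, hNbdef] using fun h => absurd h (by simpa [hNbdef] using hg)
    · simp only [hcntdef, Sum.elim_inr]
      exact List.count_eq_zero.mpr (fun h => hg (List.mem_toFinset.mpr h))
  have hrow : ∀ a, ∑ g ∈ U, cnt a g = m := by
    rintro (i | j)
    · exact hrowreal i
    · simp only [hcntdef, Sum.elim_inr]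
      have hsub : ((l.drop (j.1 * m)).take m).toFinset ⊆ U := fun g hg =>
        hslicemem j g (List.mem_toFinset.mp hg)
      rw [← Finset.sum_subset hsub (fun g _ hg => List.count_eq_zero.mpr
        (fun h => hg (List.mem_toFinset.mpr h)))]
      have hms := Multiset.toFinset_sum_count_eq
        ((List.take m (List.drop (j.1 * m) l) : List G) : Multiset G)
      simpa [hslicelen j] using hms
  have hcol : ∀ g ∈ U, ∑ a : Fin n ⊕ Fin d, cnt a g = m := by
    intro g hg
    rw [Fintype.sum_sum_type]
    have h1 : ∑ i : Fin n, cnt (Sum.inl i) g = mult g := by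
      simp only [hcntdef, Sum.elim_inl]
      exact (hmultite g).symm
    have h2 : ∑ j : Fin d, cnt (Sum.inr j) g = m - mult g := by
      simp only [hcntdef, Sum.elim_inr]
      rw [Fin.sum_univ_eq_sum_range (fun j => ((l.drop (j * m)).take m).count g) d,
        sum_count_slices l m g d, ← hllen, List.take_length, hlcount, hl0count]
      simp [hg]
    rw [h1, h2]
    exact Nat.add_sub_cancel' (hmult g)
  have hall : ∀ A : Finset (Fin n ⊕ Fin d), A.card ≤ (A.biUnion Nb).card := by
    intro A
    have hsub : A.biUnion Nb ⊆ U := by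
      intro g hg
      obtain ⟨a, _, hga⟩ := Finset.mem_biUnion.mp hg
      exact hNbU a hga
    have key : m * A.card ≤ m * (A.biUnion Nb).card := by
      calc m * A.card = ∑ _a ∈ A, m := by rw [Finset.sum_const, smul_eq_mul, mul_comm]
        _ = ∑ a ∈ A, ∑ g ∈ U, cnt a g := Finset.sum_congr rfl fun a _ => (hrow a).symm
        _ = ∑ g ∈ U, ∑ a ∈ A, cnt a g := Finset.sum_comm
        _ = ∑ g ∈ A.biUnion Nb, ∑ a ∈ A, cnt a g := by
            refine (Finset.sum_subset hsub ?_).symm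
            intro g _ hg
            exact Finset.sum_eq_zero fun a ha =>
              hzero a g (fun hmem => hg (Finset.mem_biUnion.mpr ⟨a, ha, hmem⟩))
        _ ≤ ∑ g ∈ A.biUnion Nb, m := by
            refine Finset.sum_le_sum fun g hg => ?_
            calc ∑ a ∈ A, cnt a g ≤ ∑ a : Fin n ⊕ Fin d, cnt a g :=
                  Finset.sum_le_sum_of_subset (Finset.subset_univ A)
              _ = m := hcol g (hsub hg)
        _ = m * (A.biUnion Nb).card := by rw [Finset.sum_const, smul_eq_mul, mul_comm]
    exact Nat.le_of_mul_le_mul_left key hm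
  obtain ⟨F, hFinj, hFmem⟩ :=
    (Finset.all_card_le_biUnion_card_iff_exists_injective Nb).mp hall
  have himg : Finset.image F univ = U := by
    apply Finset.eq_of_subset_of_card_le
    · intro g hg
      obtain ⟨a, _, rfl⟩ := Finset.mem_image.mp hg
      exact hNbU a (hFmem a)
    · rw [Finset.card_image_of_injective _ hFinj, Finset.card_univ,
        Fintype.card_sum, Fintype.card_fin, Fintype.card_fin, hdn]
  refine ⟨F ∘ Sum.inl, hFinj.comp Sum.inl_injective, fun i => hFmem (Sum.inl i), ?_⟩
  intro g hg
  have hgU : g ∈ U := by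
    have hpos : 0 < (univ.filter fun i => g ∈ S i).card := by omega
    obtain ⟨i, hi⟩ := Finset.card_pos.mp hpos
    exact hSU i (Finset.mem_filter.mp hi).2
  have hnotl : g ∉ l := by
    intro hgl
    have hc : l.count g ≠ 0 := Nat.pos_iff_ne_zero.mp (List.count_pos_iff.mpr hgl)
    rw [hlcount, hl0count] at hc
    have hmg : mult g = m := hg
    simp [hgU, hmg] at hc
  obtain ⟨a, _, ha⟩ := Finset.mem_image.mp (himg ▸ hgU)
  rcases a with i | j
  · exact ⟨i, ha⟩
  · exfalso
    have := hFmem (Sum.inr j)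
    rw [hNbdef] at this
    simp only [Sum.elim_inr, List.mem_toFinset] at this
    exact hnotl (List.drop_subset _ l (List.take_subset _ _ (ha ▸ this)))

lemma main_bound {G : Type*} [DecidableEq G] {n : ℕ} (Mt : Finset G)
    (u : Fin n → G → ℝ) (W : ℝ)
    (hW : ∀ σ : Fin n → G, (∀ i, σ i ∈ Mt) → Function.Injective σ →
      ∑ i, u i (σ i) ≤ W) :
    ∀ m (S : Fin n → Finset G), (∀ i, S i ⊆ Mt) → (∀ i, (S i).card = m) →
      (∀ g, (univ.filter fun i => g ∈ S i).card ≤ m) →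
      ∑ i, ∑ g ∈ S i, u i g ≤ (m : ℝ) * W := by
  intro m
  induction m with
  | zero =>
    intro S _ hcard _
    have hempty : ∀ i, S i = ∅ := fun i => Finset.card_eq_zero.mp (hcard i)
    simp [hempty]
  | succ m ih =>
    intro S hsub hcard hmult
    obtain ⟨f, hfinj, hfmem, hffull⟩ :=
      exists_good_sdr (Nat.succ_le_succ (Nat.zero_le m)) S hcard hmult
    set S' : Fin n → Finset G := fun i => (S i).erase (f i) with hS'def
    have hS'card : ∀ i, (S' i).card = m := by
      intro i
      rw [hS'def]
      simp only
      rw [Finset.card_erase_of_mem (hfmem i), hcard i]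
      rfl
    have hS'sub : ∀ i, S' i ⊆ Mt := fun i =>
      (Finset.erase_subset _ _).trans (hsub i)
    have hS'mult : ∀ g, (univ.filter fun i => g ∈ S' i).card ≤ m := by
      intro g
      by_cases hfull : (univ.filter fun i => g ∈ S i).card = m + 1
      · obtain ⟨i0, hi0⟩ := hffull g hfull
        have hsub2 : (univ.filter fun i => g ∈ S' i) ⊆
            (univ.filter fun i => g ∈ S i).erase i0 := by
          intro i hi
          rw [Finset.mem_filter, hS'def] at hi
          simp only [Finset.mem_erase] at hi
          rcases hi with ⟨-, hne, hgS⟩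
          refine Finset.mem_erase.mpr ⟨?_, Finset.mem_filter.mpr ⟨Finset.mem_univ i, hgS⟩⟩
          rintro rfl
          exact hne hi0.symm
        calc (univ.filter fun i => g ∈ S' i).card
            ≤ ((univ.filter fun i => g ∈ S i).erase i0).card :=
              Finset.card_le_card hsub2
          _ = m := by
              have hmem : i0 ∈ univ.filter fun i => g ∈ S i :=
                Finset.mem_filter.mpr ⟨Finset.mem_univ i0, hi0 ▸ hfmem i0⟩
              rw [Finset.card_erase_of_mem hmem, hfull]
              rfl
      · have hle : (univ.filter fun i => g ∈ S i).card ≤ m := by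
          have := hmult g
          omega
        refine le_trans (Finset.card_le_card ?_) hle
        intro i hi
        rw [Finset.mem_filter] at hi ⊢
        exact ⟨hi.1, Finset.mem_of_mem_erase hi.2⟩
    have hsplit : ∀ i, ∑ g ∈ S i, u i g = u i (f i) + ∑ g ∈ S' i, u i g := by
      intro i
      rw [hS'def]
      exact (Finset.add_sum_erase _ _ (hfmem i)).symm
    calc ∑ i, ∑ g ∈ S i, u i g
        = ∑ i, u i (f i) + ∑ i, ∑ g ∈ S' i, u i g := by
          rw [← Finset.sum_add_distrib]
          exact Finset.sum_congr rfl fun i _ => hsplit i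
      _ ≤ W + (m : ℝ) * W :=
          add_le_add (hW f (fun i => hsub i (hfmem i)) hfinj)
            (ih S' hS'sub hS'card hS'mult)
      _ = ((m + 1 : ℕ) : ℝ) * W := by push_cast; ring


/-- For `n` agents and at least `n` indivisible goods, a maximum-weight
matching `π` saturating all agents (edge weights `u i g`) has total weight at least
`(1/n) · ∑_i ∑_{g ∈ M̃^i} u_i(g)`, where `M̃^i` is a set of `n` most valuable goods for
agent `i`. -/
theorem stmt_16 {G : Type*} [DecidableEq G] (n : ℕ) (hn : 1 ≤ n)
    (Mt : Finset G) (hcard : n ≤ Mt.card)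
    (u : Fin n → G → ℝ) (hnn : ∀ i, ∀ g ∈ Mt, 0 ≤ u i g)
    (π : Fin n → G) (hπmem : ∀ i, π i ∈ Mt) (hπinj : Function.Injective π)
    (hπmax : ∀ σ : Fin n → G, (∀ i, σ i ∈ Mt) → Function.Injective σ →
      ∑ i, u i (σ i) ≤ ∑ i, u i (π i))
    (Mi : Fin n → Finset G)
    (hMisub : ∀ i, Mi i ⊆ Mt) (hMicard : ∀ i, (Mi i).card = n)
    (hMimax : ∀ i, ∀ S ⊆ Mt, S.card = n → ∑ g ∈ S, u i g ≤ ∑ g ∈ Mi i, u i g) :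
    (1 / (n : ℝ)) * ∑ i, ∑ g ∈ Mi i, u i g ≤ ∑ i, u i (π i) := by
  have key := main_bound Mt u (∑ i, u i (π i)) hπmax n Mi hMisub hMicard
    (fun g => le_trans (Finset.card_le_card (Finset.filter_subset _ _)) (by simp))
  have hn0 : (0 : ℝ) < n := by exact_mod_cast hn
  calc (1 / (n : ℝ)) * ∑ i, ∑ g ∈ Mi i, u i g
      ≤ (1 / (n : ℝ)) * ((n : ℝ) * ∑ i, u i (π i)) :=
        mul_le_mul_of_nonneg_left key (by positivity)
    _ = ∑ i, u i (π i) := by field_simp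
end

section
/- For two agents with additive utilities over mixed goods and unscaled utilities, the price of EFM, EFXM, and EFX equals 2: there exists an EFXM allocation with welfare at least half the optimum, and there are instances where no EFX (resp. EFM) allocation achieves more than half (plus ε) of the optimum. -/
open Finset

def EFMpair {G H : Type*} [DecidableEq G] (uI : G → ℝ) (uD : H → ℝ) (D : Finset H)
    (Bi Bj : Finset G × (H → ℝ)) : Prop :=
  (OnlyIndiv D Bj →
    (mval uI uD D Bj ≤ mval uI uD D Bi ∨
      ∃ g ∈ Bj.1, mval uI uD D (Bj.1.erase g, Bj.2) ≤ mval uI uD D Bi)) ∧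
  (¬ OnlyIndiv D Bj → mval uI uD D Bj ≤ mval uI uD D Bi)

section Aux

set_option linter.unusedSectionVars false
variable {G H : Type} [DecidableEq G]

lemma feas_symm {M : Finset G} {D : Finset H} {A1 A2 : Finset G × (H → ℝ)}
    (h : Feasible2 M D A1 A2) : Feasible2 M D A2 A1 := by
  obtain ⟨h1, h2, h3, h4, h5, h6⟩ := h
  exact ⟨h2, h1, h3.symm, h5, h4, fun x hx => by linarith [h6 x hx]⟩

lemma mval_const (u : G → ℝ) (uD : H → ℝ) (D : Finset H) (S : Finset G) (c : ℝ) :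
    mval u uD D (S, fun _ => c) = (∑ g ∈ S, u g) + c * ∑ h ∈ D, uD h := by
  simp [mval, Finset.mul_sum]

lemma efxm_of_ef {u : G → ℝ} {uD : H → ℝ} {D : Finset H} {Bi Bj : Finset G × (H → ℝ)}
    (h : mval u uD D Bj ≤ mval u uD D Bi) : EFXMpair u uD D Bi Bj :=
  ⟨fun _ => Or.inl h, fun _ => h⟩

lemma efxm_of_efx {u : G → ℝ} {uD : H → ℝ} {D : Finset H} {Bi : Finset G × (H → ℝ)}
    {S : Finset G}
    (h : ∀ g ∈ S, mval u uD D (S.erase g, fun _ => (0:ℝ)) ≤ mval u uD D Bi) :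
    EFXMpair u uD D Bi (S, fun _ => (0:ℝ)) := by
  constructor
  · intro _; exact Or.inr h
  · intro hn; exact absurd (fun h _ => rfl) hn

/-- welfare of any feasible allocation is at most the pointwise-max total. -/
lemma welfare_ub {M : Finset G} {D : Finset H} {u1 u2 : G → ℝ} {uD1 uD2 : H → ℝ}
    (hu1 : ∀ g ∈ M, 0 ≤ u1 g)
    (hd1 : ∀ h ∈ D, 0 ≤ uD1 h)
    (B1 B2 : Finset G × (H → ℝ)) (hF : Feasible2 M D B1 B2) :
    mval u1 uD1 D B1 + mval u2 uD2 D B2 ≤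
      (∑ g ∈ M, max (u1 g) (u2 g)) + ∑ h ∈ D, max (uD1 h) (uD2 h) := by
  obtain ⟨hB1, hB2, hdisj, hx1, hx2, hxs⟩ := hF
  have e1 : ∑ g ∈ B1.1, u1 g ≤ ∑ g ∈ B1.1, max (u1 g) (u2 g) :=
    Finset.sum_le_sum fun g _ => le_max_left _ _
  have e2 : ∑ g ∈ B2.1, u2 g ≤ ∑ g ∈ B2.1, max (u1 g) (u2 g) :=
    Finset.sum_le_sum fun g _ => le_max_right _ _
  have e3 : (∑ g ∈ B1.1, max (u1 g) (u2 g)) + ∑ g ∈ B2.1, max (u1 g) (u2 g)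
      = ∑ g ∈ B1.1 ∪ B2.1, max (u1 g) (u2 g) := (Finset.sum_union hdisj).symm
  have e4 : ∑ g ∈ B1.1 ∪ B2.1, max (u1 g) (u2 g) ≤ ∑ g ∈ M, max (u1 g) (u2 g) := by
    apply Finset.sum_le_sum_of_subset_of_nonneg (Finset.union_subset hB1 hB2)
    intro g hg _
    exact le_trans (hu1 g hg) (le_max_left _ _)
  have hdiv : (∑ h ∈ D, B1.2 h * uD1 h) + ∑ h ∈ D, B2.2 h * uD2 h
      ≤ ∑ h ∈ D, max (uD1 h) (uD2 h) := by
    rw [← Finset.sum_add_distrib]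
    apply Finset.sum_le_sum
    intro h hh
    have m0 : 0 ≤ max (uD1 h) (uD2 h) := le_trans (hd1 h hh) (le_max_left _ _)
    have a1 : B1.2 h * uD1 h ≤ B1.2 h * max (uD1 h) (uD2 h) :=
      mul_le_mul_of_nonneg_left (le_max_left _ _) (hx1 h hh)
    have a2 : B2.2 h * uD2 h ≤ B2.2 h * max (uD1 h) (uD2 h) :=
      mul_le_mul_of_nonneg_left (le_max_right _ _) (hx2 h hh)
    have a3 : (B1.2 h + B2.2 h) * max (uD1 h) (uD2 h) ≤ 1 * max (uD1 h) (uD2 h) :=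
      mul_le_mul_of_nonneg_right (hxs h hh) m0
    nlinarith
  simp only [mval]
  linarith

/-- the pointwise-max total is at most the sum of both agents' totals. -/
lemma P_le_total {M : Finset G} {D : Finset H} {u1 u2 : G → ℝ} {uD1 uD2 : H → ℝ}
    (hu1 : ∀ g ∈ M, 0 ≤ u1 g) (hu2 : ∀ g ∈ M, 0 ≤ u2 g)
    (hd1 : ∀ h ∈ D, 0 ≤ uD1 h) (hd2 : ∀ h ∈ D, 0 ≤ uD2 h) :
    (∑ g ∈ M, max (u1 g) (u2 g)) + ∑ h ∈ D, max (uD1 h) (uD2 h) ≤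
      ((∑ g ∈ M, u1 g) + ∑ g ∈ M, u2 g) + ((∑ h ∈ D, uD1 h) + ∑ h ∈ D, uD2 h) := by
  have e1 : ∑ g ∈ M, max (u1 g) (u2 g) ≤ ∑ g ∈ M, (u1 g + u2 g) := by
    apply Finset.sum_le_sum
    intro g hg
    exact max_le (le_add_of_nonneg_right (hu2 g hg)) (le_add_of_nonneg_left (hu1 g hg))
  have e2 : ∑ h ∈ D, max (uD1 h) (uD2 h) ≤ ∑ h ∈ D, (uD1 h + uD2 h) := by
    apply Finset.sum_le_sum
    intro h hh
    exact max_le (le_add_of_nonneg_right (hd2 h hh)) (le_add_of_nonneg_left (hd1 h hh))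
  rw [Finset.sum_add_distrib] at e1 e2
  linarith

/-- Existence of a "minimal heavy side" partition. -/
lemma exists_good_partition (M : Finset G) (u : G → ℝ) (hu : ∀ g ∈ M, 0 ≤ u g) :
    ∃ X ⊆ M, (∑ g ∈ M \ X, u g) ≤ (∑ g ∈ X, u g) ∧
      (∀ g ∈ X, ∑ x ∈ X.erase g, u x ≤ ∑ g ∈ M \ X, u g) ∧
      (∀ T ⊆ M, 2 * (∑ g ∈ T, u g) ≤ (∑ g ∈ M, u g) →
        (∑ g ∈ T, u g) ≤ ∑ g ∈ M \ X, u g) := by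
  classical
  set C : Finset (Finset G) :=
    (M.powerset).filter (fun X => (∑ g ∈ M \ X, u g) ≤ ∑ g ∈ X, u g) with hC
  have hMC : M ∈ C := by
    rw [hC, Finset.mem_filter, Finset.mem_powerset]
    refine ⟨subset_rfl, ?_⟩
    rw [Finset.sdiff_self]
    simp only [Finset.sum_empty]
    exact Finset.sum_nonneg hu
  obtain ⟨X0, hX0, hmin0⟩ := Finset.exists_min_image C (fun X => ∑ g ∈ X, u g) ⟨M, hMC⟩
  obtain ⟨X, hXmem, hcard⟩ := Finset.exists_min_image
    (C.filter (fun Y => (∑ g ∈ Y, u g) = ∑ g ∈ X0, u g)) (fun Y => Y.card)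
    ⟨X0, by simp [hX0]⟩
  rw [Finset.mem_filter] at hXmem
  obtain ⟨hXC, hXval⟩ := hXmem
  have hmin : ∀ Y ∈ C, (∑ g ∈ X, u g) ≤ ∑ g ∈ Y, u g := by
    intro Y hY; rw [hXval]; exact hmin0 Y hY
  have hXM : X ⊆ M := by
    have := hXC; rw [hC, Finset.mem_filter, Finset.mem_powerset] at this; exact this.1
  have hheavy : (∑ g ∈ M \ X, u g) ≤ ∑ g ∈ X, u g := by
    have := hXC; rw [hC, Finset.mem_filter] at this; exact this.2
  have hsplit : (∑ g ∈ M \ X, u g) + ∑ g ∈ X, u g = ∑ g ∈ M, u g :=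
    Finset.sum_sdiff hXM
  refine ⟨X, hXM, hheavy, ?_, ?_⟩
  · -- EFX feasibility of heavy side
    intro g hg
    by_contra hvio
    push_neg at hvio
    have hgsum : (∑ x ∈ X.erase g, u x) + u g = ∑ x ∈ X, u x :=
      Finset.sum_erase_add X u hg
    have hgnn : 0 ≤ u g := hu g (hXM hg)
    have hX'M : X.erase g ⊆ M := (Finset.erase_subset g X).trans hXM
    have hsplit' : (∑ x ∈ M \ X.erase g, u x) + ∑ x ∈ X.erase g, u x = ∑ x ∈ M, u x :=
      Finset.sum_sdiff hX'M
    by_cases hC' : X.erase g ∈ C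
    · have h1 : (∑ x ∈ X, u x) ≤ ∑ x ∈ X.erase g, u x := hmin _ hC'
      have hg0 : u g = 0 := by linarith
      have hval' : (∑ x ∈ X.erase g, u x) = ∑ g ∈ X0, u g := by
        rw [← hXval]; linarith
      have := hcard (X.erase g) (by rw [Finset.mem_filter]; exact ⟨hC', hval'⟩)
      have hce : (X.erase g).card = X.card - 1 := Finset.card_erase_of_mem hg
      have hpos : 0 < X.card := Finset.card_pos.mpr ⟨g, hg⟩
      omega
    · -- then M \ (X.erase g) is heavy
      have hne : ¬ ((∑ x ∈ M \ X.erase g, u x) ≤ ∑ x ∈ X.erase g, u x) := by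
        intro hle
        exact hC' (by rw [hC, Finset.mem_filter, Finset.mem_powerset]; exact ⟨hX'M, hle⟩)
      push_neg at hne
      have hmem : M \ X.erase g ∈ C := by
        rw [hC, Finset.mem_filter, Finset.mem_powerset]
        refine ⟨Finset.sdiff_subset, ?_⟩
        have : M \ (M \ X.erase g) = X.erase g := Finset.sdiff_sdiff_eq_self hX'M
        rw [this]
        exact le_of_lt hne
      have h2 : (∑ x ∈ X, u x) ≤ ∑ x ∈ M \ X.erase g, u x := hmin _ hmem
      linarith
  · -- minimality
    intro T hTM hT
    have hTsplit : (∑ g ∈ M \ T, u g) + ∑ g ∈ T, u g = ∑ g ∈ M, u g :=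
      Finset.sum_sdiff hTM
    have hmem : M \ T ∈ C := by
      rw [hC, Finset.mem_filter, Finset.mem_powerset]
      refine ⟨Finset.sdiff_subset, ?_⟩
      have : M \ (M \ T) = T := Finset.sdiff_sdiff_eq_self hTM
      rw [this]
      linarith
    have := hmin _ hmem
    linarith

end Aux

section Cases
set_option linter.unusedSectionVars false
variable {G H : Type} [DecidableEq G]

/-- key combinatorial claim for the double-heavy-chooser case. -/
lemma claimC {M : Finset G} (u1 u2 : G → ℝ)
    (hu1 : ∀ g ∈ M, 0 ≤ u1 g) (hu2 : ∀ g ∈ M, 0 ≤ u2 g)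
    (X1 X2 : Finset G) (hX1 : X1 ⊆ M) (hX2 : X2 ⊆ M)
    (hmin1 : ∀ T ⊆ M, 2 * (∑ g ∈ T, u1 g) ≤ (∑ g ∈ M, u1 g) →
        (∑ g ∈ T, u1 g) ≤ ∑ g ∈ M \ X1, u1 g)
    (hmin2 : ∀ T ⊆ M, 2 * (∑ g ∈ T, u2 g) ≤ (∑ g ∈ M, u2 g) →
        (∑ g ∈ T, u2 g) ≤ ∑ g ∈ M \ X2, u2 g)
    (hc1 : (∑ g ∈ M \ X1, u2 g) ≤ ∑ g ∈ X1, u2 g)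
    (hc2 : (∑ g ∈ M \ X2, u1 g) ≤ ∑ g ∈ X2, u1 g) :
    (∑ g ∈ M, max (u1 g) (u2 g)) ≤
      ((∑ g ∈ M \ X1, u1 g) + ∑ g ∈ X1, u2 g) +
      ((∑ g ∈ M \ X2, u2 g) + ∑ g ∈ X2, u1 g) := by
  classical
  set P1 : Finset G := M.filter (fun g => u2 g ≤ u1 g) with hP1
  have hP1M : P1 ⊆ M := Finset.filter_subset _ _
  have hsplitP : (∑ g ∈ M \ P1, max (u1 g) (u2 g)) + ∑ g ∈ P1, max (u1 g) (u2 g)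
      = ∑ g ∈ M, max (u1 g) (u2 g) := Finset.sum_sdiff hP1M
  have hstep1 : (∑ g ∈ P1, max (u1 g) (u2 g)) = ∑ g ∈ P1, u1 g := by
    apply Finset.sum_congr rfl
    intro g hg
    rw [hP1, Finset.mem_filter] at hg
    exact max_eq_left hg.2
  have hstep2 : (∑ g ∈ M \ P1, max (u1 g) (u2 g)) = ∑ g ∈ M \ P1, u2 g := by
    apply Finset.sum_congr rfl
    intro g hg
    rw [Finset.mem_sdiff, hP1, Finset.mem_filter] at hg
    have : ¬ (u2 g ≤ u1 g) := fun h => hg.2 ⟨hg.1, h⟩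
    exact max_eq_right (le_of_not_ge this)
  -- bound ∑_{P1} u1 ≤ u1(X2) + u1(M\X1)
  have hb1 : (∑ g ∈ P1, u1 g) ≤ (∑ g ∈ X2, u1 g) + ∑ g ∈ M \ X1, u1 g := by
    have hsplit : (∑ g ∈ P1 ∩ X2, u1 g) + ∑ g ∈ P1 \ X2, u1 g = ∑ g ∈ P1, u1 g :=
      Finset.sum_inter_add_sum_sdiff P1 X2 u1
    have h1 : (∑ g ∈ P1 ∩ X2, u1 g) ≤ ∑ g ∈ X2, u1 g := by
      apply Finset.sum_le_sum_of_subset_of_nonneg Finset.inter_subset_right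
      intro g hg _; exact hu1 g (hX2 hg)
    have hTsub : P1 \ X2 ⊆ M \ X2 := Finset.sdiff_subset_sdiff hP1M subset_rfl
    have h2 : (∑ g ∈ P1 \ X2, u1 g) ≤ ∑ g ∈ M \ X2, u1 g := by
      apply Finset.sum_le_sum_of_subset_of_nonneg hTsub
      intro g hg _; exact hu1 g (Finset.mem_sdiff.mp hg).1
    have hX2split : (∑ g ∈ M \ X2, u1 g) + ∑ g ∈ X2, u1 g = ∑ g ∈ M, u1 g :=
      Finset.sum_sdiff hX2
    have h3 : (∑ g ∈ P1 \ X2, u1 g) ≤ ∑ g ∈ M \ X1, u1 g := by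
      apply hmin1 _ ((Finset.sdiff_subset).trans hP1M)
      linarith
    linarith
  -- bound ∑_{M\P1} u2 ≤ u2(X1) + u2(M\X2)
  have hb2 : (∑ g ∈ M \ P1, u2 g) ≤ (∑ g ∈ X1, u2 g) + ∑ g ∈ M \ X2, u2 g := by
    have hsplit : (∑ g ∈ (M \ P1) ∩ X1, u2 g) + ∑ g ∈ (M \ P1) \ X1, u2 g
        = ∑ g ∈ M \ P1, u2 g := Finset.sum_inter_add_sum_sdiff _ X1 u2
    have h1 : (∑ g ∈ (M \ P1) ∩ X1, u2 g) ≤ ∑ g ∈ X1, u2 g := by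
      apply Finset.sum_le_sum_of_subset_of_nonneg Finset.inter_subset_right
      intro g hg _; exact hu2 g (hX1 hg)
    have hTsub : (M \ P1) \ X1 ⊆ M \ X1 :=
      Finset.sdiff_subset_sdiff Finset.sdiff_subset subset_rfl
    have h2 : (∑ g ∈ (M \ P1) \ X1, u2 g) ≤ ∑ g ∈ M \ X1, u2 g := by
      apply Finset.sum_le_sum_of_subset_of_nonneg hTsub
      intro g hg _; exact hu2 g (Finset.mem_sdiff.mp hg).1
    have hX1split : (∑ g ∈ M \ X1, u2 g) + ∑ g ∈ X1, u2 g = ∑ g ∈ M, u2 g :=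
      Finset.sum_sdiff hX1
    have h3 : (∑ g ∈ (M \ P1) \ X1, u2 g) ≤ ∑ g ∈ M \ X2, u2 g := by
      apply hmin2 _ ((Finset.sdiff_subset).trans Finset.sdiff_subset)
      linarith
    linarith
  linarith

/-- the conclusion of part (i) for a given instance. -/
def Goal1 (M : Finset G) (D : Finset H) (u1 u2 : G → ℝ) (uD1 uD2 : H → ℝ) : Prop :=
  ∃ A1 A2 : Finset G × (H → ℝ), Feasible2 M D A1 A2 ∧
    EFXMpair u1 uD1 D A1 A2 ∧ EFXMpair u2 uD2 D A2 A1 ∧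
    ∀ B1 B2 : Finset G × (H → ℝ), Feasible2 M D B1 B2 →
      mval u1 uD1 D B1 + mval u2 uD2 D B2 ≤
        2 * (mval u1 uD1 D A1 + mval u2 uD2 D A2)

lemma goal1_symm {M : Finset G} {D : Finset H} {u1 u2 : G → ℝ} {uD1 uD2 : H → ℝ}
    (h : Goal1 M D u2 u1 uD2 uD1) : Goal1 M D u1 u2 uD1 uD2 := by
  obtain ⟨A1, A2, hF, hx2, hx1, hB⟩ := h
  refine ⟨A2, A1, feas_symm hF, hx1, hx2, fun B1 B2 hFB => ?_⟩
  have := hB B2 B1 (feas_symm hFB)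
  linarith

/-- Case I: the divider can equalize both bundles using the divisible goods. -/
lemma case_I {M : Finset G} {D : Finset H} {u1 u2 : G → ℝ} {uD1 uD2 : H → ℝ}
    (hu1 : ∀ g ∈ M, 0 ≤ u1 g) (hu2 : ∀ g ∈ M, 0 ≤ u2 g)
    (hd1 : ∀ h ∈ D, 0 ≤ uD1 h) (hd2 : ∀ h ∈ D, 0 ≤ uD2 h)
    (X : Finset G) (hXM : X ⊆ M)
    (hheavy : (∑ g ∈ M \ X, u1 g) ≤ ∑ g ∈ X, u1 g)
    (hd : (∑ g ∈ X, u1 g) - (∑ g ∈ M \ X, u1 g) < ∑ h ∈ D, uD1 h) :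
    Goal1 M D u1 u2 uD1 uD2 := by
  set a := ∑ g ∈ X, u1 g with ha
  set b := ∑ g ∈ M \ X, u1 g with hb
  set d1 := ∑ h ∈ D, uD1 h with hdd1
  set d2 := ∑ h ∈ D, uD2 h with hdd2
  have hd1pos : 0 < d1 := lt_of_le_of_lt (by linarith) hd
  set t : ℝ := (d1 - (a - b)) / (2 * d1) with ht
  have ht0 : 0 ≤ t := div_nonneg (by linarith) (by linarith)
  have ht1 : t ≤ 1 := by
    rw [ht, div_le_one (by linarith)]
    linarith
  have hkey : a + t * d1 = b + (1 - t) * d1 := by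
    rw [ht]
    field_simp
    ring
  have hsplit1 : b + a = ∑ g ∈ M, u1 g := Finset.sum_sdiff hXM
  have hsplit2 : (∑ g ∈ M \ X, u2 g) + ∑ g ∈ X, u2 g = ∑ g ∈ M, u2 g :=
    Finset.sum_sdiff hXM
  -- the two bundles
  set P : Finset G × (H → ℝ) := (X, fun _ => t) with hP
  set Q : Finset G × (H → ℝ) := (M \ X, fun _ => 1 - t) with hQ
  have hmv1P : mval u1 uD1 D P = a + t * d1 := mval_const u1 uD1 D X t
  have hmv1Q : mval u1 uD1 D Q = b + (1 - t) * d1 := mval_const u1 uD1 D (M \ X) (1 - t)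
  have hmv2P : mval u2 uD2 D P = (∑ g ∈ X, u2 g) + t * d2 := mval_const u2 uD2 D X t
  have hmv2Q : mval u2 uD2 D Q = (∑ g ∈ M \ X, u2 g) + (1 - t) * d2 :=
    mval_const u2 uD2 D (M \ X) (1 - t)
  have hexp1 : (1 - t) * d1 = d1 - t * d1 := by ring
  have hexp2 : (1 - t) * d2 = d2 - t * d2 := by ring
  have hFeasPQ : Feasible2 M D P Q :=
    ⟨hXM, Finset.sdiff_subset, disjoint_sdiff,
      fun _ _ => ht0, fun _ _ => by show (0:ℝ) ≤ 1 - t; linarith, fun _ _ => by show t + (1 - t) ≤ (1:ℝ); linarith⟩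
  by_cases hc : mval u2 uD2 D P ≤ mval u2 uD2 D Q
  · refine ⟨P, Q, hFeasPQ, efxm_of_ef (le_of_eq (by rw [hmv1P, hmv1Q, hkey])),
      efxm_of_ef hc, fun B1 B2 hFB => ?_⟩
    have hub := welfare_ub (u2 := u2) (uD2 := uD2) hu1 hd1 B1 B2 hFB
    have htot := P_le_total hu1 hu2 hd1 hd2
    rw [hmv1P, hmv2Q]
    rw [hmv2P, hmv2Q] at hc
    linarith
  · push_neg at hc
    refine ⟨Q, P, feas_symm hFeasPQ, efxm_of_ef (le_of_eq (by rw [hmv1P, hmv1Q, hkey])),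
      efxm_of_ef (le_of_lt hc), fun B1 B2 hFB => ?_⟩
    have hub := welfare_ub (u2 := u2) (uD2 := uD2) hu1 hd1 B1 B2 hFB
    have htot := P_le_total hu1 hu2 hd1 hd2
    rw [hmv1Q, hmv2P]
    rw [hmv2P, hmv2Q] at hc
    linarith

/-- Case IIIa: divisibles fit in the gap and the chooser prefers the light side. -/
lemma case_IIIa {M : Finset G} {D : Finset H} {u1 u2 : G → ℝ} {uD1 uD2 : H → ℝ}
    (hu1 : ∀ g ∈ M, 0 ≤ u1 g) (hu2 : ∀ g ∈ M, 0 ≤ u2 g)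
    (hd1 : ∀ h ∈ D, 0 ≤ uD1 h) (hd2 : ∀ h ∈ D, 0 ≤ uD2 h)
    (X : Finset G) (hXM : X ⊆ M)
    (hgap : (∑ h ∈ D, uD1 h) ≤ (∑ g ∈ X, u1 g) - ∑ g ∈ M \ X, u1 g)
    (hch : (∑ g ∈ X, u2 g) ≤ (∑ g ∈ M \ X, u2 g) + ∑ h ∈ D, uD2 h) :
    Goal1 M D u1 u2 uD1 uD2 := by
  have hsplit1 : (∑ g ∈ M \ X, u1 g) + ∑ g ∈ X, u1 g = ∑ g ∈ M, u1 g :=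
    Finset.sum_sdiff hXM
  have hsplit2 : (∑ g ∈ M \ X, u2 g) + ∑ g ∈ X, u2 g = ∑ g ∈ M, u2 g :=
    Finset.sum_sdiff hXM
  refine ⟨(X, fun _ => (0:ℝ)), (M \ X, fun _ => (1:ℝ)),
    ⟨hXM, Finset.sdiff_subset, disjoint_sdiff,
      fun _ _ => le_refl _, fun _ _ => by norm_num, fun _ _ => by norm_num⟩,
    efxm_of_ef ?_, efxm_of_ef ?_, fun B1 B2 hFB => ?_⟩
  · rw [mval_const, mval_const]; linarith
  · rw [mval_const, mval_const]; linarith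
  · have hub := welfare_ub (u2 := u2) (uD2 := uD2) hu1 hd1 B1 B2 hFB
    have htot := P_le_total hu1 hu2 hd1 hd2
    rw [mval_const, mval_const]
    linarith

/-- Case IIIc: divisibles fit in the gap, chooser prefers the heavy side, and this
allocation's welfare is at least half the optimum. -/
lemma case_IIIc {M : Finset G} {D : Finset H} {u1 u2 : G → ℝ} {uD1 uD2 : H → ℝ}
    (hu1 : ∀ g ∈ M, 0 ≤ u1 g) (hu2 : ∀ g ∈ M, 0 ≤ u2 g)
    (hd1 : ∀ h ∈ D, 0 ≤ uD1 h) (hd2 : ∀ h ∈ D, 0 ≤ uD2 h)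
    (X : Finset G) (hXM : X ⊆ M)
    (hEFX : ∀ g ∈ X, (∑ x ∈ X.erase g, u1 x) ≤ ∑ g ∈ M \ X, u1 g)
    (hch : (∑ g ∈ M \ X, u2 g) + (∑ h ∈ D, uD2 h) ≤ ∑ g ∈ X, u2 g)
    (hW : (∑ g ∈ M, max (u1 g) (u2 g)) + (∑ h ∈ D, max (uD1 h) (uD2 h)) ≤
      2 * (((∑ g ∈ M \ X, u1 g) + ∑ h ∈ D, uD1 h) + ∑ g ∈ X, u2 g)) :
    Goal1 M D u1 u2 uD1 uD2 := by
  have hd1nn : 0 ≤ ∑ h ∈ D, uD1 h := Finset.sum_nonneg hd1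
  refine ⟨(M \ X, fun _ => (1:ℝ)), (X, fun _ => (0:ℝ)),
    ⟨Finset.sdiff_subset, hXM, disjoint_sdiff_self_left,
      fun _ _ => by norm_num, fun _ _ => le_refl _, fun _ _ => by norm_num⟩,
    efxm_of_efx ?_, efxm_of_ef ?_, fun B1 B2 hFB => ?_⟩
  · intro g hg
    rw [mval_const, mval_const]
    have := hEFX g hg
    linarith
  · rw [mval_const, mval_const]; linarith
  · have hub := welfare_ub (u2 := u2) (uD2 := uD2) hu1 hd1 B1 B2 hFB
    rw [mval_const, mval_const]
    linarith

end Cases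

section Main
set_option linter.unusedSectionVars false
variable {G H : Type} [DecidableEq G]

lemma part1_main (M : Finset G) (D : Finset H) (u1 u2 : G → ℝ) (uD1 uD2 : H → ℝ)
    (hu1 : ∀ g ∈ M, 0 ≤ u1 g) (hu2 : ∀ g ∈ M, 0 ≤ u2 g)
    (hd1 : ∀ h ∈ D, 0 ≤ uD1 h) (hd2 : ∀ h ∈ D, 0 ≤ uD2 h) :
    Goal1 M D u1 u2 uD1 uD2 := by
  obtain ⟨X1, hX1M, hheavy1, hEFX1, hmin1⟩ := exists_good_partition M u1 hu1
  obtain ⟨X2, hX2M, hheavy2, hEFX2, hmin2⟩ := exists_good_partition M u2 hu2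
  have hd1nn : 0 ≤ ∑ h ∈ D, uD1 h := Finset.sum_nonneg hd1
  have hd2nn : 0 ≤ ∑ h ∈ D, uD2 h := Finset.sum_nonneg hd2
  by_cases hA1 : (∑ g ∈ X1, u1 g) - (∑ g ∈ M \ X1, u1 g) < ∑ h ∈ D, uD1 h
  · exact case_I hu1 hu2 hd1 hd2 X1 hX1M hheavy1 hA1
  push_neg at hA1
  by_cases hA2 : (∑ g ∈ X2, u2 g) - (∑ g ∈ M \ X2, u2 g) < ∑ h ∈ D, uD2 h
  · exact goal1_symm (case_I hu2 hu1 hd2 hd1 X2 hX2M hheavy2 hA2)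
  push_neg at hA2
  by_cases hB1 : (∑ g ∈ X1, u2 g) ≤ (∑ g ∈ M \ X1, u2 g) + ∑ h ∈ D, uD2 h
  · exact case_IIIa hu1 hu2 hd1 hd2 X1 hX1M hA1 hB1
  push_neg at hB1
  by_cases hB2 : (∑ g ∈ X2, u1 g) ≤ (∑ g ∈ M \ X2, u1 g) + ∑ h ∈ D, uD1 h
  · exact goal1_symm (case_IIIa hu2 hu1 hd2 hd1 X2 hX2M hA2 hB2)
  push_neg at hB2
  -- double-heavy-chooser case
  have hc1 : (∑ g ∈ M \ X1, u2 g) ≤ ∑ g ∈ X1, u2 g := by linarith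
  have hc2 : (∑ g ∈ M \ X2, u1 g) ≤ ∑ g ∈ X2, u1 g := by linarith
  have hC := claimC u1 u2 hu1 hu2 X1 X2 hX1M hX2M hmin1 hmin2 hc1 hc2
  have hmaxD : (∑ h ∈ D, max (uD1 h) (uD2 h)) ≤ (∑ h ∈ D, uD1 h) + ∑ h ∈ D, uD2 h := by
    rw [← Finset.sum_add_distrib]
    apply Finset.sum_le_sum
    intro h hh
    exact max_le (le_add_of_nonneg_right (hd2 h hh)) (le_add_of_nonneg_left (hd1 h hh))
  by_cases hW : (∑ g ∈ M, max (u1 g) (u2 g)) + (∑ h ∈ D, max (uD1 h) (uD2 h)) ≤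
      2 * (((∑ g ∈ M \ X1, u1 g) + ∑ h ∈ D, uD1 h) + ∑ g ∈ X1, u2 g)
  · exact case_IIIc hu1 hu2 hd1 hd2 X1 hX1M hEFX1 (le_of_lt hB1) hW
  · push_neg at hW
    apply goal1_symm
    apply case_IIIc hu2 hu1 hd2 hd1 X2 hX2M hEFX2 (le_of_lt hB2)
    have hmc : (∑ g ∈ M, max (u2 g) (u1 g)) = ∑ g ∈ M, max (u1 g) (u2 g) :=
      Finset.sum_congr rfl fun g _ => max_comm _ _
    have hmcD : (∑ h ∈ D, max (uD2 h) (uD1 h)) = ∑ h ∈ D, max (uD1 h) (uD2 h) :=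
      Finset.sum_congr rfl fun h _ => max_comm _ _
    rw [hmc, hmcD]
    linarith

end Main

section LowerBounds

lemma sum_one_fin2 : (∑ _g ∈ (univ : Finset (Fin 2)), (1:ℝ)) = 2 := by
  simp

lemma sum_card_mul {A : Finset (Fin 2)} (c : ℝ) : (∑ _g ∈ A, c) = (A.card : ℝ) * c := by
  rw [Finset.sum_const, nsmul_eq_mul]

lemma fin2_full {A : Finset (Fin 2)} (h : 2 ≤ A.card) : A = univ :=
  Finset.eq_univ_of_card A (le_antisymm (by simpa using Finset.card_le_univ A) (by simpa using h))

lemma fin2_card_le (A : Finset (Fin 2)) : A.card ≤ 2 := by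
  simpa using Finset.card_le_univ A

lemma erase_univ_sum (c : ℝ) (g : Fin 2) :
    (∑ _x ∈ (univ : Finset (Fin 2)).erase g, c) = c := by
  rw [Finset.sum_const, Finset.card_erase_of_mem (Finset.mem_univ g)]
  simp

/-- Part (iii): the EFX lower bound instance. -/
lemma part3_main (ε : ℝ) (hε : 0 < ε) :
    ∃ (m : ℕ) (M : Finset (Fin m)) (u1 u2 : Fin m → ℝ),
      (∀ g ∈ M, 0 ≤ u1 g) ∧ (∀ g ∈ M, 0 ≤ u2 g) ∧
      ∃ B1 B2 : Finset (Fin m), B1 ⊆ M ∧ B2 ⊆ M ∧ Disjoint B1 B2 ∧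
        ∀ A1 A2 : Finset (Fin m), A1 ⊆ M → A2 ⊆ M → Disjoint A1 A2 →
          EFXpair u1 A1 A2 → EFXpair u2 A2 A1 →
          (∑ g ∈ A1, u1 g) + ∑ g ∈ A2, u2 g ≤
            (1 / 2 + ε) * ((∑ g ∈ B1, u1 g) + ∑ g ∈ B2, u2 g) := by
  refine ⟨2, univ, (fun _ => 1), (fun _ => ε), fun _ _ => zero_le_one, fun _ _ => hε.le,
    univ, ∅, subset_rfl, Finset.empty_subset _, Finset.disjoint_empty_right _, ?_⟩
  intro A1 A2 _ _ hdisj _ hEFX2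
  have hRHS : ((∑ g ∈ (univ : Finset (Fin 2)), (1:ℝ)) + ∑ g ∈ (∅ : Finset (Fin 2)), ε) = 2 := by
    rw [sum_one_fin2]; simp
  rw [hRHS, sum_card_mul (1:ℝ), sum_card_mul ε]
  rcases le_or_gt A1.card 1 with hle | hlt
  · have h1 : (A1.card : ℝ) ≤ 1 := by exact_mod_cast hle
    have h2 : (A2.card : ℝ) ≤ 2 := by exact_mod_cast fin2_card_le A2
    have h3 : (A2.card : ℝ) * ε ≤ 2 * ε := mul_le_mul_of_nonneg_right h2 hε.le
    nlinarith
  · exfalso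
    have hA1 : A1 = univ := fin2_full (by omega)
    have hA2 : A2 = ∅ := by
      rw [Finset.eq_empty_iff_forall_notMem]
      intro a ha
      exact (Finset.disjoint_left.mp hdisj (hA1 ▸ Finset.mem_univ a)) ha
    have := hEFX2 0 (hA1 ▸ Finset.mem_univ 0)
    rw [hA1, hA2] at this
    rw [erase_univ_sum ε 0] at this
    simp only [Finset.sum_empty] at this
    linarith

/-- Part (ii): the EFM lower bound instance (no divisible goods). -/
lemma part2_main (ε : ℝ) (hε : 0 < ε) :
    ∃ (m k : ℕ) (M : Finset (Fin m)) (D : Finset (Fin k))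
      (uI1 uI2 : Fin m → ℝ) (uD1 uD2 : Fin k → ℝ),
      (∀ g ∈ M, 0 ≤ uI1 g) ∧ (∀ g ∈ M, 0 ≤ uI2 g) ∧
      (∀ h ∈ D, 0 ≤ uD1 h) ∧ (∀ h ∈ D, 0 ≤ uD2 h) ∧
      ∃ B1 B2 : Finset (Fin m) × (Fin k → ℝ), Feasible2 M D B1 B2 ∧
        ∀ A1 A2 : Finset (Fin m) × (Fin k → ℝ), Feasible2 M D A1 A2 →
          EFMpair uI1 uD1 D A1 A2 → EFMpair uI2 uD2 D A2 A1 →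
          mval uI1 uD1 D A1 + mval uI2 uD2 D A2 ≤
            (1 / 2 + ε) * (mval uI1 uD1 D B1 + mval uI2 uD2 D B2) := by
  refine ⟨2, 0, univ, ∅, (fun _ => 1), (fun _ => ε), (fun _ => 0), (fun _ => 0),
    fun _ _ => zero_le_one, fun _ _ => hε.le, by simp, by simp,
    (univ, fun _ => 0), (∅, fun _ => 0),
    ⟨subset_rfl, Finset.empty_subset _, Finset.disjoint_empty_right _, by simp, by simp, by simp⟩, ?_⟩
  intro A1 A2 hF _ hEFM2
  obtain ⟨hA1M, hA2M, hdisj, _, _, _⟩ := hF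
  have hmv : ∀ (u : Fin 2 → ℝ) (uD : Fin 0 → ℝ) (B : Finset (Fin 2) × (Fin 0 → ℝ)),
      mval u uD (∅ : Finset (Fin 0)) B = ∑ g ∈ B.1, u g := by
    intro u uD B; simp [mval]
  rw [hmv, hmv, hmv, hmv, sum_one_fin2, sum_card_mul (1:ℝ), sum_card_mul ε]
  simp only [Finset.sum_empty, add_zero]
  rcases le_or_gt A1.1.card 1 with hle | hlt
  · have h1 : (A1.1.card : ℝ) ≤ 1 := by exact_mod_cast hle
    have h2 : (A2.1.card : ℝ) ≤ 2 := by exact_mod_cast fin2_card_le A2.1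
    have h3 : (A2.1.card : ℝ) * ε ≤ 2 * ε := mul_le_mul_of_nonneg_right h2 hε.le
    nlinarith
  · exfalso
    have hA1 : A1.1 = univ := fin2_full (by omega)
    have hA2 : A2.1 = ∅ := by
      rw [Finset.eq_empty_iff_forall_notMem]
      intro a ha
      exact (Finset.disjoint_left.mp hdisj (hA1 ▸ Finset.mem_univ a)) ha
    have honly : OnlyIndiv (∅ : Finset (Fin 0)) A1 := by
      intro h hh; exact absurd hh (Finset.notMem_empty h)
    rcases hEFM2.1 honly with hEF | ⟨g, hg, hEF⟩
    · rw [hmv, hmv, hA1, hA2, sum_card_mul ε] at hEF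
      simp only [Finset.sum_empty] at hEF
      have : ((univ : Finset (Fin 2)).card : ℝ) = 2 := by simp
      rw [this] at hEF
      linarith
    · rw [hmv, hmv, hA2] at hEF
      simp only [Finset.sum_empty] at hEF
      rw [hA1, erase_univ_sum ε g] at hEF
      linarith

end LowerBounds

/-- For two agents with unscaled additive utilities over mixed goods, the
price of EFM / EFXM / EFX equals `2`: (i) every instance admits an EFXM (hence EFM)
allocation with welfare at least half the optimum, and (ii)–(iii) there are instances in
which no EFM allocation (resp., with only indivisible goods, no EFX allocation) achieves
more than half (plus `ε`) of the optimum. -/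
theorem stmt_17 :
    (∀ (G H : Type) [DecidableEq G] (M : Finset G) (D : Finset H)
        (uI1 uI2 : G → ℝ) (uD1 uD2 : H → ℝ),
      (∀ g ∈ M, 0 ≤ uI1 g) → (∀ g ∈ M, 0 ≤ uI2 g) →
      (∀ h ∈ D, 0 ≤ uD1 h) → (∀ h ∈ D, 0 ≤ uD2 h) →
      ∃ A1 A2 : Finset G × (H → ℝ), Feasible2 M D A1 A2 ∧
        EFXMpair uI1 uD1 D A1 A2 ∧ EFXMpair uI2 uD2 D A2 A1 ∧
        ∀ B1 B2 : Finset G × (H → ℝ), Feasible2 M D B1 B2 →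
          mval uI1 uD1 D B1 + mval uI2 uD2 D B2 ≤
            2 * (mval uI1 uD1 D A1 + mval uI2 uD2 D A2)) ∧
    (∀ ε : ℝ, 0 < ε →
      ∃ (m k : ℕ) (M : Finset (Fin m)) (D : Finset (Fin k))
        (uI1 uI2 : Fin m → ℝ) (uD1 uD2 : Fin k → ℝ),
        (∀ g ∈ M, 0 ≤ uI1 g) ∧ (∀ g ∈ M, 0 ≤ uI2 g) ∧
        (∀ h ∈ D, 0 ≤ uD1 h) ∧ (∀ h ∈ D, 0 ≤ uD2 h) ∧
        ∃ B1 B2 : Finset (Fin m) × (Fin k → ℝ), Feasible2 M D B1 B2 ∧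
          ∀ A1 A2 : Finset (Fin m) × (Fin k → ℝ), Feasible2 M D A1 A2 →
            EFMpair uI1 uD1 D A1 A2 → EFMpair uI2 uD2 D A2 A1 →
            mval uI1 uD1 D A1 + mval uI2 uD2 D A2 ≤
              (1 / 2 + ε) * (mval uI1 uD1 D B1 + mval uI2 uD2 D B2)) ∧
    (∀ ε : ℝ, 0 < ε →
      ∃ (m : ℕ) (M : Finset (Fin m)) (u1 u2 : Fin m → ℝ),
        (∀ g ∈ M, 0 ≤ u1 g) ∧ (∀ g ∈ M, 0 ≤ u2 g) ∧
        ∃ B1 B2 : Finset (Fin m), B1 ⊆ M ∧ B2 ⊆ M ∧ Disjoint B1 B2 ∧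
          ∀ A1 A2 : Finset (Fin m), A1 ⊆ M → A2 ⊆ M → Disjoint A1 A2 →
            EFXpair u1 A1 A2 → EFXpair u2 A2 A1 →
            ∑ g ∈ A1, u1 g + ∑ g ∈ A2, u2 g ≤
              (1 / 2 + ε) * (∑ g ∈ B1, u1 g + ∑ g ∈ B2, u2 g)) := by
  refine ⟨?_, part2_main, part3_main⟩
  intro G H _ M D uI1 uI2 uD1 uD2 hu1 hu2 hd1 hd2
  exact part1_main M D uI1 uI2 uD1 uD2 hu1 hu2 hd1 hd2
end

section
/- In a mixed-goods instance with one indivisible good g1 valued 1 by both agents and two divisible goods d1, d2 with u1(d1)=1/2, u1(d2)=0, u2(d1)=0, u2(d2)=1/2, no complete allocation is simultaneously EFM and Pareto-optimal. -/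
open Finset

/-- Complete allocation of mixed goods to two agents: the indivisible goods are
partitioned and every divisible good is fully allocated. -/
def Complete2 {G H : Type*} [DecidableEq G] (M : Finset G) (D : Finset H)
    (A1 A2 : Finset G × (H → ℝ)) : Prop :=
  A1.1 ∪ A2.1 = M ∧ Disjoint A1.1 A2.1 ∧
  (∀ h ∈ D, 0 ≤ A1.2 h) ∧ (∀ h ∈ D, 0 ≤ A2.2 h) ∧ (∀ h ∈ D, A1.2 h + A2.2 h = 1)

/-! Pareto-optimality forces each divisible good to go entirely to the only agent who values it,
since otherwise handing over the rest is a Pareto improvement. Then both bundles contain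
divisible goods, so EFM demands full envy-freeness in both directions. With the divisible parts
worth `1/2` to their owner and `0` to the other agent, this makes the two agents' numbers of
indivisible goods differ by less than one, i.e. coincide, which is impossible for one good. -/

def ParetoOptimal2 {G H : Type*} [DecidableEq G] (M : Finset G) (D : Finset H)
    (uI1 uI2 : G → ℝ) (uD1 uD2 : H → ℝ) (A1 A2 : Finset G × (H → ℝ)) : Prop :=
  ∀ B1 B2 : Finset G × (H → ℝ), Complete2 M D B1 B2 →
    ¬ (mval uI1 uD1 D A1 ≤ mval uI1 uD1 D B1 ∧
       mval uI2 uD2 D A2 ≤ mval uI2 uD2 D B2 ∧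
       (mval uI1 uD1 D A1 < mval uI1 uD1 D B1 ∨
        mval uI2 uD2 D A2 < mval uI2 uD2 D B2))

theorem mval_update {G H : Type*} [DecidableEq H] {D : Finset H} (uI : G → ℝ) (uD : H → ℝ)
    (S : Finset G) (f : H → ℝ) {h : H} (hh : h ∈ D) (x : ℝ) :
    mval uI uD D (S, Function.update f h x) = mval uI uD D (S, f) + (x - f h) * uD h := by
  have herase : ∑ j ∈ D.erase h, Function.update f h x j * uD j = ∑ j ∈ D.erase h, f j * uD j :=
    sum_congr rfl fun j hj => by rw [Function.update_of_ne (ne_of_mem_erase hj)]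
  simp only [mval, ← add_sum_erase D _ hh, herase, Function.update_self]
  ring

section TwoAgents

variable {G H : Type*} [DecidableEq G] {M : Finset G} {D : Finset H}
  {A1 A2 : Finset G × (H → ℝ)}

theorem Complete2.symm (hA : Complete2 M D A1 A2) : Complete2 M D A2 A1 := by
  obtain ⟨hU, hdisj, h1, h2, hsum⟩ := hA
  exact ⟨by rwa [union_comm], hdisj.symm, h2, h1, fun h hh => by linarith [hsum h hh]⟩

theorem ParetoOptimal2.symm {uI1 uI2 : G → ℝ} {uD1 uD2 : H → ℝ}
    (hPO : ParetoOptimal2 M D uI1 uI2 uD1 uD2 A1 A2) :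
    ParetoOptimal2 M D uI2 uI1 uD2 uD1 A2 A1 := by
  rintro B2 B1 hB ⟨h2, h1, hlt⟩
  exact hPO B1 B2 hB.symm ⟨h1, h2, hlt.symm⟩

theorem Complete2.card_add_card (hA : Complete2 M D A1 A2) : #A1.1 + #A2.1 = #M := by
  rw [← hA.1, card_union_of_disjoint hA.2.1]

theorem Complete2.le_one (hA : Complete2 M D A1 A2) {h : H} (hh : h ∈ D) : A1.2 h ≤ 1 := by
  linarith [hA.2.2.2.1 h hh, hA.2.2.2.2 h hh]

theorem Complete2.transfer [DecidableEq H] (hA : Complete2 M D A1 A2) (h : H) :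
    Complete2 M D (A1.1, Function.update A1.2 h 1) (A2.1, Function.update A2.2 h 0) := by
  obtain ⟨hU, hdisj, h1, h2, hsum⟩ := hA
  refine ⟨hU, hdisj, fun j hj => ?_, fun j hj => ?_, fun j hj => ?_⟩ <;>
    rcases eq_or_ne j h with rfl | hne <;> simp_all

theorem ParetoOptimal2.eq_one_of_pos_of_eq_zero [DecidableEq H] {uI1 uI2 : G → ℝ}
    {uD1 uD2 : H → ℝ} (hA : Complete2 M D A1 A2)
    (hPO : ParetoOptimal2 M D uI1 uI2 uD1 uD2 A1 A2) {h : H} (hh : h ∈ D)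
    (h1 : 0 < uD1 h) (h2 : uD2 h = 0) : A1.2 h = 1 := by
  by_contra hne
  have hgain : 0 < (1 - A1.2 h) * uD1 h :=
    mul_pos (sub_pos.2 (lt_of_le_of_ne (hA.le_one hh) hne)) h1
  refine hPO _ _ (hA.transfer h) ⟨?_, ?_, Or.inl ?_⟩ <;>
    simp only [mval_update _ _ _ _ hh, h2, mul_zero, add_zero] <;> linarith

end TwoAgents

/-- In the mixed-goods instance with one indivisible good `g1` valued `1`
by both agents and divisible goods `d1, d2` with `u1 = (1/2, 0)` and `u2 = (0, 1/2)`,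
no complete allocation is simultaneously EFM and Pareto-optimal. -/
theorem stmt_18 :
    let M : Finset (Fin 1) := Finset.univ
    let D : Finset (Fin 2) := Finset.univ
    let uI1 : Fin 1 → ℝ := fun _ => 1
    let uI2 : Fin 1 → ℝ := fun _ => 1
    let uD1 : Fin 2 → ℝ := ![1 / 2, 0]
    let uD2 : Fin 2 → ℝ := ![0, 1 / 2]
    ∀ A1 A2 : Finset (Fin 1) × (Fin 2 → ℝ), Complete2 M D A1 A2 →
      ¬ (EFMpair uI1 uD1 D A1 A2 ∧ EFMpair uI2 uD2 D A2 A1 ∧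
        ∀ B1 B2 : Finset (Fin 1) × (Fin 2 → ℝ), Complete2 M D B1 B2 →
          ¬ (mval uI1 uD1 D A1 ≤ mval uI1 uD1 D B1 ∧
             mval uI2 uD2 D A2 ≤ mval uI2 uD2 D B2 ∧
             (mval uI1 uD1 D A1 < mval uI1 uD1 D B1 ∨
              mval uI2 uD2 D A2 < mval uI2 uD2 D B2))) := by
  intro M D uI1 uI2 uD1 uD2 A1 A2 hA ⟨hE1, hE2, hPO⟩
  change ParetoOptimal2 M D uI1 uI2 uD1 uD2 A1 A2 at hPO
  have hd1 : A1.2 0 = 1 :=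
    hPO.eq_one_of_pos_of_eq_zero hA (mem_univ _) (by simp [uD1]) (by simp [uD2])
  have hd2 : A2.2 1 = 1 :=
    hPO.symm.eq_one_of_pos_of_eq_zero hA.symm (mem_univ _) (by simp [uD2]) (by simp [uD1])
  have hd1' : A2.2 0 = 0 := by linarith [hA.2.2.2.2 0 (mem_univ _)]
  have hd2' : A1.2 1 = 0 := by linarith [hA.2.2.2.2 1 (mem_univ _)]
  have henvy1 : mval uI1 uD1 D A2 ≤ mval uI1 uD1 D A1 := hE1.2 fun h => by simpa [hd2] using h 1 (mem_univ _)
  have henvy2 : mval uI2 uD2 D A1 ≤ mval uI2 uD2 D A2 := hE2.2 fun h => by simpa [hd1] using h 0 (mem_univ _)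
  have hcard : #A1.1 + #A2.1 = 1 := hA.card_add_card
  simp only [mval, uI1, uI2, uD1, uD2, D, Fin.sum_univ_two, sum_const, nsmul_eq_mul, mul_one,
    hd1, hd2, hd1', hd2'] at henvy1 henvy2
  have h21 : (#A2.1 : ℝ) < #A1.1 + 1 := by norm_num at henvy1; linarith
  have h12 : (#A1.1 : ℝ) < #A2.1 + 1 := by norm_num at henvy2; linarith
  norm_cast at h21 h12
  omega
end
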